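/- arXiv:math/0504136 — 7 statements merged into one kernel-verified Lean document; each statement's English description precedes it below -/
import Mathlib

section
/- The transport operator T_h is a contraction for all Wasserstein distances: for h ≥ 0, p ≥ 1, and v, ṽ ∈ 𝒰, W_p([T_h v]_x, [T_h ṽ]_x) ≤ W_p(v_x, ṽ_x) (with possibly infinite values). -/
open MeasureTheory Filter Set
open scoped ENNReal

/-- Wasserstein distance of order `p` between measures on `ℝ`, defined via
couplings, with possibly infinite value. -/
noncomputable def Wp (p : ℝ) (μ ν : Measure ℝ) : ℝ≥0∞ :=
  (⨅ π ∈ {π : Measure (ℝ × ℝ) | π.map Prod.fst = μ ∧ π.map Prod.snd = ν},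
    ∫⁻ q, ENNReal.ofReal (|q.1 - q.2| ^ p) ∂π) ^ (1 / p)

/-- The generalized inverse `v⁻¹ (w) = inf {x | v x > w}` of a function. -/
noncomputable def genInv (v : ℝ → ℝ) (w : ℝ) : ℝ := sInf {x : ℝ | w < v x}

open Function Topology

noncomputable def wSt (p : ℝ) (hp : 1 ≤ p) : StieltjesFunction ℝ where
  toFun := fun u => if u < 0 then 0 else p * u ^ (p - 1)
  mono' := by
    intro a b hab
    dsimp only
    split_ifs with ha hb hb
    · rfl
    · have hp0 : (0:ℝ) < p := by linarith
      have := Real.rpow_nonneg (not_lt.mp hb) (p-1)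
      nlinarith
    · exact absurd (hab.trans_lt hb) ha
    · have ha' : 0 ≤ a := not_lt.mp ha
      have : a ^ (p-1) ≤ b ^ (p-1) := Real.rpow_le_rpow ha' hab (by linarith)
      nlinarith [Real.rpow_nonneg ha' (p-1)]
  right_continuous' := by
    intro x
    rcases lt_or_ge x 0 with hx | hx
    · have hev : ∀ᶠ y in 𝓝[≥] x, (if y < 0 then (0:ℝ) else p * y ^ (p-1)) = 0 := by
        filter_upwards [eventually_nhdsWithin_of_eventually_nhds
          (Filter.Tendsto.eventually_lt_const hx (f := fun y : ℝ => y) tendsto_id)] with y hy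
        simp [hy]
      refine ContinuousWithinAt.congr_of_eventuallyEq continuousWithinAt_const hev (by simp [hx])
    · have hc : Continuous (fun y : ℝ => p * y ^ (p-1)) :=
        continuous_const.mul (Real.continuous_rpow_const (by linarith))
      refine hc.continuousWithinAt.congr (fun y hy => ?_) (by simp [not_lt.mpr hx])
      have : ¬ y < 0 := not_lt.mpr (hx.trans hy)
      simp [this]

lemma wSt_tendsto_atBot (p : ℝ) (hp : 1 ≤ p) : Tendsto (wSt p hp) atBot (𝓝 0) := by
  apply Tendsto.congr' _ tendsto_const_nhds
  filter_upwards [eventually_le_atBot (-1 : ℝ)] with x hx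
  simp only [wSt]
  rw [if_pos (by linarith)]

lemma wSt_measure_Iic (p : ℝ) (hp : 1 ≤ p) (t : ℝ) :
    (wSt p hp).measure (Iic t) = ENNReal.ofReal (if t < 0 then 0 else p * t ^ (p-1)) := by
  rw [StieltjesFunction.measure_Iic _ (wSt_tendsto_atBot p hp)]
  simp [wSt]

lemma lint_rho (p : ℝ) (hp : 1 ≤ p) (d : ℝ) (hd : 0 ≤ d) :
    ∫⁻ r, ENNReal.ofReal (d - r) ∂(wSt p hp).measure = ENNReal.ofReal (d ^ p) := by
  have hp0 : (0 : ℝ) < p := by linarith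
  have h1 : ∀ r : ℝ, ENNReal.ofReal (d - r)
      = ∫⁻ t, (if r ≤ t ∧ t < d then 1 else 0) := by
    intro r
    have : (fun t => if r ≤ t ∧ t < d then (1:ℝ≥0∞) else 0)
        = (Ico r d).indicator 1 := by
      ext t; simp [Set.indicator_apply, Set.mem_Ico]
    rw [this, lintegral_indicator_one measurableSet_Ico, Real.volume_Ico]
  simp_rw [h1]
  rw [lintegral_lintegral_swap]
  · have h2 : ∀ t : ℝ, (∫⁻ r, (if r ≤ t ∧ t < d then (1:ℝ≥0∞) else 0) ∂(wSt p hp).measure)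
        = (Iio d).indicator (fun t => ENNReal.ofReal (if t < 0 then 0 else p * t ^ (p-1))) t := by
      intro t
      by_cases ht : t < d
      · have : (fun r => if r ≤ t ∧ t < d then (1:ℝ≥0∞) else 0)
            = (Iic t).indicator 1 := by
          ext r; simp [Set.indicator_apply, Set.mem_Iic, ht]
        rw [this, lintegral_indicator_one measurableSet_Iic, wSt_measure_Iic,
          Set.indicator_of_mem (Set.mem_Iio.mpr ht)]
      · simp [ht, Set.indicator_of_notMem, Set.mem_Iio]
    simp_rw [h2]
    rw [lintegral_indicator measurableSet_Iio]
    have hsplit : Iio d = Iio 0 ∪ Ico 0 d := by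
      ext x; simp only [Set.mem_Iio, Set.mem_union, Set.mem_Ico]
      constructor
      · intro hx; rcases lt_or_ge x 0 with h | h
        · exact Or.inl h
        · exact Or.inr ⟨h, hx⟩
      · rintro (h | ⟨-, h⟩); exacts [h.trans_le hd, h]
    rw [hsplit, lintegral_union measurableSet_Ico (by
      simp only [Set.disjoint_left, Set.mem_Iio, Set.mem_Ico]
      exact fun a ha ⟨h0, _⟩ => absurd h0 (not_le.mpr ha))]
    have hz : ∫⁻ t in Iio 0, ENNReal.ofReal (if t < 0 then 0 else p * t ^ (p-1)) = 0 := by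
      rw [setLIntegral_congr_fun (g := fun _ => (0:ℝ≥0∞)) measurableSet_Iio
        (fun t (ht : t < 0) => by simp [ht])]
      simp
    rw [hz, zero_add]
    have hcongr : ∫⁻ t in Ico 0 d, ENNReal.ofReal (if t < 0 then 0 else p * t ^ (p-1))
        = ∫⁻ t in Ico 0 d, ENNReal.ofReal (p * t ^ (p-1)) := by
      refine setLIntegral_congr_fun measurableSet_Ico
        (fun t ht => ?_)
      rw [if_neg (not_lt.mpr ht.1)]
    rw [hcongr]
    have hint : IntegrableOn (fun t => p * t ^ (p-1)) (Ico 0 d) := by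
      refine IntegrableOn.mono_set ?_ Set.Ico_subset_Icc_self
      exact (continuous_const.mul (Real.continuous_rpow_const (by linarith))).integrableOn_Icc
    rw [← ofReal_integral_eq_lintegral_ofReal hint
      ((ae_restrict_iff' measurableSet_Ico).2 (Filter.Eventually.of_forall fun t ht => by
        have h1 : (0:ℝ) ≤ t ^ (p-1) := Real.rpow_nonneg ht.1 _
        positivity))]
    congr 1
    rw [setIntegral_congr_set Ico_ae_eq_Ioc, ← intervalIntegral.integral_of_le hd,
      intervalIntegral.integral_const_mul, integral_rpow (Or.inl (by linarith))]
    have hpp : p - 1 + 1 = p := by ring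
    rw [hpp, Real.zero_rpow (ne_of_gt hp0)]
    field_simp
    rw [sub_zero]
  · have hS : MeasurableSet {x : ℝ × ℝ | x.1 ≤ x.2 ∧ x.2 < d} :=
      (measurableSet_le measurable_fst measurable_snd).inter
        (measurableSet_lt measurable_snd measurable_const)
    exact (Measurable.ite hS measurable_const measurable_const).aemeasurable

lemma cost_eq (p : ℝ) (hp : 1 ≤ p) (π : Measure (ℝ × ℝ)) [IsFiniteMeasure π] :
    ∫⁻ q, ENNReal.ofReal (|q.1 - q.2| ^ p) ∂π
      = ∫⁻ r, (∫⁻ t, π {q : ℝ × ℝ | q.1 ⊓ q.2 + r ≤ t ∧ t ≤ q.1 ⊔ q.2})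
          ∂(wSt p hp).measure := by
  have step1 : ∫⁻ q, ENNReal.ofReal (|q.1 - q.2| ^ p) ∂π
      = ∫⁻ q, (∫⁻ r, ENNReal.ofReal (|q.1 - q.2| - r) ∂(wSt p hp).measure) ∂π :=
    lintegral_congr fun q => (lint_rho p hp _ (abs_nonneg _)).symm
  rw [step1, lintegral_lintegral_swap (by
    apply Measurable.aemeasurable
    apply ENNReal.measurable_ofReal.comp
    exact ((continuous_fst.fst.sub continuous_fst.snd).abs.sub continuous_snd).measurable)]
  refine lintegral_congr fun r => ?_
  have step3 : ∀ q : ℝ × ℝ, ENNReal.ofReal (|q.1 - q.2| - r)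
      = ∫⁻ t, (if q.1 ⊓ q.2 + r ≤ t ∧ t ≤ q.1 ⊔ q.2 then 1 else 0) := by
    intro q
    have : (fun t => if q.1 ⊓ q.2 + r ≤ t ∧ t ≤ q.1 ⊔ q.2 then (1:ℝ≥0∞) else 0)
        = (Icc (q.1 ⊓ q.2 + r) (q.1 ⊔ q.2)).indicator 1 := by
      ext t; simp [Set.indicator_apply, Set.mem_Icc]
    rw [this, lintegral_indicator_one measurableSet_Icc, Real.volume_Icc]
    congr 1
    have hmm := max_sub_min_eq_abs q.1 q.2
    have habs := abs_sub_comm q.1 q.2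
    linarith
  simp_rw [step3]
  rw [lintegral_lintegral_swap (by
    apply Measurable.aemeasurable
    have hS : MeasurableSet {x : (ℝ × ℝ) × ℝ | x.1.1 ⊓ x.1.2 + r ≤ x.2 ∧ x.2 ≤ x.1.1 ⊔ x.1.2} :=
      (measurableSet_le ((continuous_fst.fst.min continuous_fst.snd).add
        continuous_const).measurable measurable_snd).inter
        (measurableSet_le measurable_snd
          (continuous_fst.fst.max continuous_fst.snd).measurable)
    exact Measurable.ite hS measurable_const measurable_const)]
  refine lintegral_congr fun t => ?_
  have : (fun q : ℝ × ℝ => if q.1 ⊓ q.2 + r ≤ t ∧ t ≤ q.1 ⊔ q.2 then (1:ℝ≥0∞) else 0)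
      = ({q : ℝ × ℝ | q.1 ⊓ q.2 + r ≤ t ∧ t ≤ q.1 ⊔ q.2}).indicator 1 := by
    ext q; simp [Set.indicator_apply]
  rw [this, lintegral_indicator_one]
  exact (measurableSet_le ((continuous_fst.min continuous_snd).add
      continuous_const).measurable measurable_const).inter
    (measurableSet_le measurable_const (continuous_fst.max continuous_snd).measurable)

section Quantile
variable {v : StieltjesFunction ℝ}

lemma stv_nonneg (hv0 : Tendsto v atBot (𝓝 0)) (x : ℝ) : 0 ≤ v x :=
  le_of_tendsto hv0 ((eventually_le_atBot x).mono fun _ hy => v.mono hy)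

lemma stv_le_one (hv1 : Tendsto v atTop (𝓝 1)) (x : ℝ) : v x ≤ 1 :=
  ge_of_tendsto hv1 ((eventually_ge_atTop x).mono fun _ hy => v.mono hy)

lemma stv_leftLim_nonneg (hv0 : Tendsto v atBot (𝓝 0)) (t : ℝ) : 0 ≤ leftLim (v : ℝ → ℝ) t :=
  (stv_nonneg hv0 (t-1)).trans (Monotone.le_leftLim v.mono (by linarith))

lemma bddBelow_S (hv0 : Tendsto v atBot (𝓝 0)) {u : ℝ} (hu0 : 0 < u) :
    BddBelow {x : ℝ | u < v x} := by
  obtain ⟨x₀, hx₀⟩ := (hv0.eventually_lt_const hu0).exists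
  exact ⟨x₀, fun x hx => not_lt.mp fun hlt =>
    absurd ((v.mono hlt.le).trans_lt hx₀) (not_lt.mpr hx.le)⟩

lemma nonempty_S (hv1 : Tendsto v atTop (𝓝 1)) {u : ℝ} (hu1 : u < 1) :
    {x : ℝ | u < v x}.Nonempty :=
  (hv1.eventually_const_lt hu1).exists

lemma genInv_le (hv0 : Tendsto v atBot (𝓝 0)) {u s : ℝ} (hu0 : 0 < u) (hs : u < v s) :
    genInv (fun y => v y) u ≤ s :=
  csInf_le (bddBelow_S hv0 hu0) hs

lemma le_of_genInv_le (hv0 : Tendsto v atBot (𝓝 0)) (hv1 : Tendsto v atTop (𝓝 1))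
    {u s : ℝ} (hu0 : 0 < u) (hu1 : u < 1)
    (hle : genInv (fun y => v y) u ≤ s) : u ≤ v s := by
  refine ge_of_tendsto ((v.right_continuous s).tendsto.mono_left
    (nhdsWithin_mono s Ioi_subset_Ici_self)) ?_
  filter_upwards [eventually_mem_nhdsWithin] with x (hx : s < x)
  obtain ⟨y, hy, hyx⟩ := (csInf_lt_iff (bddBelow_S hv0 hu0) (nonempty_S hv1 hu1)).mp
    (lt_of_le_of_lt hle hx)
  exact (le_of_lt hy).trans (v.mono hyx.le)

lemma leftLim_le_of_le_genInv (hv0 : Tendsto v atBot (𝓝 0)) {u t : ℝ} (hu0 : 0 < u)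
    (ht : t ≤ genInv (fun y => v y) u) : leftLim (v : ℝ → ℝ) t ≤ u := by
  refine le_of_tendsto (v.mono.tendsto_leftLim t) ?_
  filter_upwards [eventually_mem_nhdsWithin] with x (hx : x < t)
  by_contra hc
  exact absurd (ht.trans (csInf_le (bddBelow_S hv0 hu0) (not_le.mp hc))) (not_le.mpr hx)

lemma genInv_monoOn (hv0 : Tendsto v atBot (𝓝 0)) (hv1 : Tendsto v atTop (𝓝 1)) :
    MonotoneOn (genInv (fun y => v y)) (Ioo (0:ℝ) 1) := by
  intro a ha b hb hab
  exact csInf_le_csInf (bddBelow_S hv0 ha.1) (nonempty_S hv1 hb.2)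
    (fun x hx => lt_of_le_of_lt hab hx)

/-- measurable version of the generalized inverse -/
noncomputable def qf (v : ℝ → ℝ) : ℝ → ℝ :=
  fun u => if u ∈ Ioo (0:ℝ) 1 then genInv v u else 0

lemma qf_eq_on {u : ℝ} (hu : u ∈ Ioo (0:ℝ) 1) :
    qf (fun y => v y) u = genInv (fun y => v y) u :=
  if_pos hu

lemma qf_measurable (hv0 : Tendsto v atBot (𝓝 0)) (hv1 : Tendsto v atTop (𝓝 1)) :
    Measurable (qf (fun y => v y)) := by
  apply measurable_of_Iic
  intro s
  have hM : MeasurableSet {u | u ∈ Ioo (0:ℝ) 1 ∧ genInv (fun y => v y) u ≤ s} := by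
    apply Set.OrdConnected.measurableSet
    constructor
    intro a ha b hb c hc
    have hcI : c ∈ Ioo (0:ℝ) 1 := ⟨ha.1.1.trans_le hc.1, lt_of_le_of_lt hc.2 hb.1.2⟩
    exact ⟨hcI, (genInv_monoOn hv0 hv1 hcI hb.1 hc.2).trans hb.2⟩
  by_cases hs : (0:ℝ) ≤ s
  · have : qf (fun y => v y) ⁻¹' Iic s
        = {u | u ∈ Ioo (0:ℝ) 1 ∧ genInv (fun y => v y) u ≤ s} ∪ (Ioo (0:ℝ) 1)ᶜ := by
      ext u
      by_cases hu : u ∈ Ioo (0:ℝ) 1 <;>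
        simp only [Set.mem_preimage, Set.mem_Iic, qf, if_pos, if_neg, hu, Set.mem_union,
          Set.mem_setOf_eq, Set.mem_compl_iff, if_true, if_false, not_true, not_false_iff] <;>
        tauto
    rw [this]; exact hM.union measurableSet_Ioo.compl
  · have : qf (fun y => v y) ⁻¹' Iic s
        = {u | u ∈ Ioo (0:ℝ) 1 ∧ genInv (fun y => v y) u ≤ s} := by
      ext u
      by_cases hu : u ∈ Ioo (0:ℝ) 1 <;>
        simp only [Set.mem_preimage, Set.mem_Iic, qf, hu, Set.mem_setOf_eq, if_true, if_false] <;>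
        tauto
    rw [this]; exact hM

end Quantile

lemma qf_map_measure {v : StieltjesFunction ℝ}
    (hv0 : Tendsto v atBot (𝓝 0)) (hv1 : Tendsto v atTop (𝓝 1)) :
    (volume.restrict (Ioo (0:ℝ) 1)).map (qf (fun y => v y)) = v.measure := by
  have hqm := qf_measurable hv0 hv1
  haveI : IsFiniteMeasure ((volume.restrict (Ioo (0:ℝ) 1)).map (qf (fun y => v y))) := by
    constructor
    rw [Measure.map_apply hqm MeasurableSet.univ, Set.preimage_univ,
      Measure.restrict_apply_univ, Real.volume_Ioo]
    simp
  refine MeasureTheory.Measure.ext_of_Iic _ _ (fun s => ?_)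
  rw [Measure.map_apply hqm measurableSet_Iic, Measure.restrict_apply (hqm measurableSet_Iic),
    v.measure_Iic hv0, sub_zero]
  have hvs0 : 0 ≤ v s := stv_nonneg hv0 s
  have hvs1 : v s ≤ 1 := stv_le_one hv1 s
  refine le_antisymm ?_ ?_
  · have hsub : qf (fun y => v y) ⁻¹' Iic s ∩ Ioo 0 1 ⊆ Ioc 0 (v s) := by
      intro u hu
      obtain ⟨(hus : qf (fun y => v y) u ≤ s), huI⟩ := hu
      rw [qf_eq_on huI] at hus
      exact ⟨huI.1, le_of_genInv_le hv0 hv1 huI.1 huI.2 hus⟩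
    calc volume (qf (fun y => v y) ⁻¹' Iic s ∩ Ioo 0 1) ≤ volume (Ioc 0 (v s)) :=
          measure_mono hsub
      _ = ENNReal.ofReal (v s) := by rw [Real.volume_Ioc, sub_zero]
  · have hsub : Ioo 0 (v s) ⊆ qf (fun y => v y) ⁻¹' Iic s ∩ Ioo 0 1 := by
      intro u hu
      have huI : u ∈ Ioo (0:ℝ) 1 := ⟨hu.1, lt_of_lt_of_le hu.2 hvs1⟩
      refine ⟨?_, huI⟩
      show qf (fun y => v y) u ≤ s
      rw [qf_eq_on huI]
      exact genInv_le hv0 hu.1 hu.2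
    calc ENNReal.ofReal (v s) = volume (Ioo 0 (v s)) := by rw [Real.volume_Ioo, sub_zero]
      _ ≤ volume (qf (fun y => v y) ⁻¹' Iic s ∩ Ioo 0 1) := measure_mono hsub

lemma stv_measure_Iio_le {v : StieltjesFunction ℝ} (hv0 : Tendsto v atBot (𝓝 0)) (t : ℝ) :
    v.measure (Iio t) ≤ ENNReal.ofReal (leftLim (v : ℝ → ℝ) t) := by
  have hsub : Iio t ⊆ Iic (t-1) ∪ Ioo (t-1) t := by
    intro x hx
    rcases le_or_gt x (t-1) with hh | hh
    · exact Or.inl hh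
    · exact Or.inr ⟨hh, hx⟩
  calc v.measure (Iio t) ≤ v.measure (Iic (t-1)) + v.measure (Ioo (t-1) t) :=
        (measure_mono hsub).trans (measure_union_le _ _)
    _ = ENNReal.ofReal (v (t-1) - 0) + ENNReal.ofReal (leftLim (v : ℝ → ℝ) t - v (t-1)) := by
        rw [v.measure_Iic hv0, v.measure_Ioo]
    _ = ENNReal.ofReal (leftLim (v : ℝ → ℝ) t) := by
        rw [← ENNReal.ofReal_add (by rw [sub_zero]; exact stv_nonneg hv0 _)
          (sub_nonneg.mpr (Monotone.le_leftLim v.mono (by linarith)))]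
        ring_nf

lemma hoeffding {v vt : StieltjesFunction ℝ}
    (hv0 : Tendsto v atBot (𝓝 0)) (hvt0 : Tendsto vt atBot (𝓝 0))
    (π : Measure (ℝ × ℝ)) (hπ1 : π.map Prod.fst = v.measure)
    (hπ2 : π.map Prod.snd = vt.measure) (s t : ℝ) :
    ENNReal.ofReal (max (v s) (vt s) - min (leftLim (v : ℝ → ℝ) t) (leftLim (vt : ℝ → ℝ) t))
      ≤ π {q : ℝ × ℝ | q.1 ⊓ q.2 ≤ s ∧ t ≤ q.1 ⊔ q.2} := by
  set B := {q : ℝ × ℝ | q.1 ⊓ q.2 ≤ s ∧ t ≤ q.1 ⊔ q.2}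
  set A₁ := {q : ℝ × ℝ | q.1 ⊓ q.2 ≤ s}
  set A₂ := {q : ℝ × ℝ | q.1 ⊔ q.2 < t}
  have key : π A₁ ≤ π B + π A₂ := by
    refine (measure_mono (fun q hq => ?_)).trans (measure_union_le B A₂)
    rcases lt_or_ge (q.1 ⊔ q.2) t with hh | hh
    · exact Or.inr hh
    · exact Or.inl ⟨hq, hh⟩
  have hfst : π {q : ℝ × ℝ | q.1 ≤ s} = ENNReal.ofReal (v s) := by
    have := Measure.map_apply (μ := π) measurable_fst (measurableSet_Iic (a := s))
    rw [hπ1, v.measure_Iic hv0, sub_zero] at this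
    exact this.symm
  have hsnd : π {q : ℝ × ℝ | q.2 ≤ s} = ENNReal.ofReal (vt s) := by
    have := Measure.map_apply (μ := π) measurable_snd (measurableSet_Iic (a := s))
    rw [hπ2, vt.measure_Iic hvt0, sub_zero] at this
    exact this.symm
  have hA1 : ENNReal.ofReal (max (v s) (vt s)) ≤ π A₁ := by
    rcases max_cases (v s) (vt s) with ⟨hm, _⟩ | ⟨hm, _⟩ <;> rw [hm]
    · rw [← hfst]
      exact measure_mono fun q (hq : q.1 ≤ s) => inf_le_left.trans hq
    · rw [← hsnd]
      exact measure_mono fun q (hq : q.2 ≤ s) => inf_le_right.trans hq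
  have hfst' : π {q : ℝ × ℝ | q.1 < t} ≤ ENNReal.ofReal (leftLim (v : ℝ → ℝ) t) := by
    have := Measure.map_apply (μ := π) measurable_fst (measurableSet_Iio (a := t))
    rw [hπ1] at this
    exact le_of_eq_of_le this.symm (stv_measure_Iio_le hv0 t) |>.trans_eq rfl
      |>.trans (le_refl _) |>.trans_eq rfl
  have hsnd' : π {q : ℝ × ℝ | q.2 < t} ≤ ENNReal.ofReal (leftLim (vt : ℝ → ℝ) t) := by
    have := Measure.map_apply (μ := π) measurable_snd (measurableSet_Iio (a := t))
    rw [hπ2] at this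
    exact le_of_eq_of_le this.symm (stv_measure_Iio_le hvt0 t)
  have hA2 : π A₂ ≤ ENNReal.ofReal
      (min (leftLim (v : ℝ → ℝ) t) (leftLim (vt : ℝ → ℝ) t)) := by
    rcases min_cases (leftLim (v : ℝ → ℝ) t) (leftLim (vt : ℝ → ℝ) t) with ⟨hm, _⟩ | ⟨hm, _⟩ <;>
      rw [hm]
    · exact (measure_mono fun (q : ℝ × ℝ) (hq : q.1 ⊔ q.2 < t) => lt_of_le_of_lt le_sup_left hq).trans hfst'
    · exact (measure_mono fun (q : ℝ × ℝ) (hq : q.1 ⊔ q.2 < t) => lt_of_le_of_lt le_sup_right hq).trans hsnd'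
  have hmin0 : 0 ≤ min (leftLim (v : ℝ → ℝ) t) (leftLim (vt : ℝ → ℝ) t) :=
    le_min (stv_leftLim_nonneg hv0 t) (stv_leftLim_nonneg hvt0 t)
  rw [ENNReal.ofReal_sub _ hmin0, tsub_le_iff_right]
  calc ENNReal.ofReal (max (v s) (vt s)) ≤ π A₁ := hA1
    _ ≤ π B + π A₂ := key
    _ ≤ π B + ENNReal.ofReal (min (leftLim (v : ℝ → ℝ) t) (leftLim (vt : ℝ → ℝ) t)) :=
        add_le_add le_rfl hA2

lemma quant_le {v vt : StieltjesFunction ℝ}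
    (hv0 : Tendsto v atBot (𝓝 0)) (hv1 : Tendsto v atTop (𝓝 1))
    (hvt0 : Tendsto vt atBot (𝓝 0)) (hvt1 : Tendsto vt atTop (𝓝 1)) (s t : ℝ) :
    ((volume.restrict (Ioo (0:ℝ) 1)).map
        (fun u => (qf (fun y => v y) u, qf (fun y => vt y) u)))
        {q : ℝ × ℝ | q.1 ⊓ q.2 ≤ s ∧ t ≤ q.1 ⊔ q.2}
      ≤ ENNReal.ofReal (max (v s) (vt s)
          - min (leftLim (v : ℝ → ℝ) t) (leftLim (vt : ℝ → ℝ) t)) := by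
  have hqm : Measurable (fun u => (qf (fun y => v y) u, qf (fun y => vt y) u)) :=
    (qf_measurable hv0 hv1).prodMk (qf_measurable hvt0 hvt1)
  have hB : MeasurableSet {q : ℝ × ℝ | q.1 ⊓ q.2 ≤ s ∧ t ≤ q.1 ⊔ q.2} :=
    (measurableSet_le (continuous_fst.min continuous_snd).measurable measurable_const).inter
      (measurableSet_le measurable_const (continuous_fst.max continuous_snd).measurable)
  rw [Measure.map_apply hqm hB, Measure.restrict_apply (hqm hB)]
  set m := min (leftLim (v : ℝ → ℝ) t) (leftLim (vt : ℝ → ℝ) t)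
  set M := max (v s) (vt s)
  have hsub : (fun u => (qf (fun y => v y) u, qf (fun y => vt y) u)) ⁻¹'
      {q : ℝ × ℝ | q.1 ⊓ q.2 ≤ s ∧ t ≤ q.1 ⊔ q.2} ∩ Ioo 0 1 ⊆ Icc m M := by
    rintro u ⟨⟨h1, h2⟩, huI⟩
    simp only [qf_eq_on huI] at h1 h2
    constructor
    · rcases le_sup_iff.mp h2 with hc | hc
      · exact min_le_of_left_le (leftLim_le_of_le_genInv hv0 huI.1 hc)
      · exact min_le_of_right_le (leftLim_le_of_le_genInv hvt0 huI.1 hc)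
    · rcases inf_le_iff.mp h1 with hc | hc
      · exact le_max_of_le_left (le_of_genInv_le hv0 hv1 huI.1 huI.2 hc)
      · exact le_max_of_le_right (le_of_genInv_le hvt0 hvt1 huI.1 huI.2 hc)
  exact (measure_mono hsub).trans (le_of_eq Real.volume_Icc)

/-- the transport operator `T_h` is a contraction for all
Wasserstein distances: `W_p([T_h v]_x, [T_h w]_x) ≤ W_p(v_x, w_x)` (with
possibly infinite values), where `[T_h v]_x` is the law of
`w ↦ v⁻¹(w) + h f'(w)` on `((0,1), Leb)`. -/
theorem stmt_11 (f' : ℝ → ℝ) (hf' : Measurable f') (M : ℝ)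
    (hM : ∀ w ∈ Set.Ioo (0:ℝ) 1, |f' w| ≤ M)
    (h p : ℝ) (hh : 0 ≤ h) (hp : 1 ≤ p)
    (v vt : StieltjesFunction ℝ)
    (hv0 : Tendsto v atBot (nhds 0)) (hv1 : Tendsto v atTop (nhds 1))
    (hvt0 : Tendsto vt atBot (nhds 0)) (hvt1 : Tendsto vt atTop (nhds 1)) :
    Wp p ((volume.restrict (Set.Ioo (0:ℝ) 1)).map
            fun w => genInv (fun y => v y) w + h * f' w)
         ((volume.restrict (Set.Ioo (0:ℝ) 1)).map
            fun w => genInv (fun y => vt y) w + h * f' w) ≤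
      Wp p v.measure vt.measure := by
  have hp0 : (0:ℝ) < p := lt_of_lt_of_le one_pos hp
  have hgv := qf_measurable hv0 hv1
  have hgt := qf_measurable hvt0 hvt1
  set g := qf (fun y => v y) with hg
  set gt := qf (fun y => vt y) with hgtdef
  set π₀ := (volume.restrict (Set.Ioo (0:ℝ) 1)).map
    (fun u => (g u + h * f' u, gt u + h * f' u)) with hπ₀
  set πq := (volume.restrict (Set.Ioo (0:ℝ) 1)).map (fun u => (g u, gt u)) with hπq
  have hmg : Measurable fun u => g u + h * f' u := hgv.add (measurable_const.mul hf')
  have hmgt : Measurable fun u => gt u + h * f' u := hgt.add (measurable_const.mul hf')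
  have hpair : Measurable fun u => (g u + h * f' u, gt u + h * f' u) := hmg.prodMk hmgt
  have hqpair : Measurable fun u => (g u, gt u) := hgv.prodMk hgt
  have haev : (fun u => g u + h * f' u)
      =ᵐ[volume.restrict (Set.Ioo (0:ℝ) 1)] (fun w => genInv (fun y => v y) w + h * f' w) := by
    filter_upwards [ae_restrict_mem measurableSet_Ioo] with u hu
    rw [hg, qf_eq_on hu]
  have haevt : (fun u => gt u + h * f' u)
      =ᵐ[volume.restrict (Set.Ioo (0:ℝ) 1)] (fun w => genInv (fun y => vt y) w + h * f' w) := by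
    filter_upwards [ae_restrict_mem measurableSet_Ioo] with u hu
    rw [hgtdef, qf_eq_on hu]
  have key1 : π₀.map Prod.fst = (volume.restrict (Set.Ioo (0:ℝ) 1)).map
      (fun w => genInv (fun y => v y) w + h * f' w) := by
    rw [hπ₀, Measure.map_map measurable_fst hpair]
    exact Measure.map_congr haev
  have key2 : π₀.map Prod.snd = (volume.restrict (Set.Ioo (0:ℝ) 1)).map
      (fun w => genInv (fun y => vt y) w + h * f' w) := by
    rw [hπ₀, Measure.map_map measurable_snd hpair]
    exact Measure.map_congr haevt
  haveI hfinR : IsFiniteMeasure (volume.restrict (Set.Ioo (0:ℝ) 1)) := by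
    constructor
    rw [Measure.restrict_apply_univ, Real.volume_Ioo]
    simp
  haveI : IsFiniteMeasure πq :=
    ⟨by rw [hπq, Measure.map_apply hqpair MeasurableSet.univ]; exact measure_lt_top _ _⟩
  have hFmeas : Measurable fun q : ℝ × ℝ => ENNReal.ofReal (|q.1 - q.2| ^ p) :=
    ENNReal.measurable_ofReal.comp ((Real.continuous_rpow_const hp0.le).measurable.comp
      (measurable_fst.sub measurable_snd).abs)
  have hcost0 : (∫⁻ q, ENNReal.ofReal (|q.1 - q.2| ^ p) ∂π₀)
      = ∫⁻ q, ENNReal.ofReal (|q.1 - q.2| ^ p) ∂πq := by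
    rw [hπ₀, hπq, lintegral_map hFmeas hpair, lintegral_map hFmeas hqpair]
    refine lintegral_congr fun u => ?_
    congr 3
    ring
  have hcmp : ∀ π ∈ {π : Measure (ℝ × ℝ) |
      π.map Prod.fst = v.measure ∧ π.map Prod.snd = vt.measure},
      (∫⁻ q, ENNReal.ofReal (|q.1 - q.2| ^ p) ∂πq)
        ≤ ∫⁻ q, ENNReal.ofReal (|q.1 - q.2| ^ p) ∂π := by
    intro π hπ
    haveI : IsFiniteMeasure π := by
      constructor
      have hmap := Measure.map_apply (μ := π) measurable_fst MeasurableSet.univ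
      rw [hπ.1, Set.preimage_univ] at hmap
      rw [← hmap, v.measure_univ hv0 hv1]
      simp
    rw [cost_eq p hp πq, cost_eq p hp π]
    refine lintegral_mono fun r => lintegral_mono fun t => ?_
    have hset : {q : ℝ × ℝ | q.1 ⊓ q.2 + r ≤ t ∧ t ≤ q.1 ⊔ q.2}
        = {q : ℝ × ℝ | q.1 ⊓ q.2 ≤ t - r ∧ t ≤ q.1 ⊔ q.2} := by
      ext q; simp [← le_sub_iff_add_le]
    rw [hset]
    exact (quant_le hv0 hv1 hvt0 hvt1 (t - r) t).trans
      (hoeffding hv0 hvt0 π hπ.1 hπ.2 (t - r) t)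
  unfold Wp
  refine ENNReal.rpow_le_rpow ?_ (by positivity)
  calc (⨅ π ∈ {π : Measure (ℝ × ℝ) |
          π.map Prod.fst = (volume.restrict (Set.Ioo (0:ℝ) 1)).map
            (fun w => genInv (fun y => v y) w + h * f' w)
          ∧ π.map Prod.snd = (volume.restrict (Set.Ioo (0:ℝ) 1)).map
            (fun w => genInv (fun y => vt y) w + h * f' w)},
        ∫⁻ q, ENNReal.ofReal (|q.1 - q.2| ^ p) ∂π)
      ≤ ∫⁻ q, ENNReal.ofReal (|q.1 - q.2| ^ p) ∂π₀ := iInf₂_le π₀ ⟨key1, key2⟩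
    _ = ∫⁻ q, ENNReal.ofReal (|q.1 - q.2| ^ p) ∂πq := hcost0
    _ ≤ ⨅ π ∈ {π : Measure (ℝ × ℝ) |
          π.map Prod.fst = v.measure ∧ π.map Prod.snd = vt.measure},
        ∫⁻ q, ENNReal.ofReal (|q.1 - q.2| ^ p) ∂π := le_iInf₂ hcmp
end

section
/- For any V ∈ 𝒰 and h ≥ 0, ‖T_h V − V‖_{L¹(ℝ)} ≤ h ‖f'‖_{L^∞((0,1))}, where T_h V is the CDF of w ↦ V⁻¹(w) + h f'(w). -/
open MeasureTheory Filter Set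
open scoped ENNReal

/-- The transport operator: `T_h v` is the CDF of the random variable
`w ↦ v⁻¹(w) + h f'(w)` on the probability space `((0,1), Leb)`. -/
noncomputable def Th (f' : ℝ → ℝ) (h : ℝ) (v : ℝ → ℝ) (x : ℝ) : ℝ :=
  (volume {w ∈ Set.Ioo (0:ℝ) 1 | genInv v w + h * f' w ≤ x}).toReal

private lemma genInv_bddBelow (V : StieltjesFunction ℝ) (h0 : Tendsto V atBot (nhds 0))
    {w : ℝ} (hw : 0 < w) : BddBelow {x : ℝ | w < V x} := by
  obtain ⟨z, hz⟩ := eventually_atBot.mp (h0.eventually_lt_const hw)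
  refine ⟨z, fun y hy => ?_⟩
  by_contra hyz
  exact absurd hy (not_lt.mpr (hz y (le_of_not_ge hyz)).le)

private lemma genInv_nonempty (V : StieltjesFunction ℝ) (h1 : Tendsto V atTop (nhds 1))
    {w : ℝ} (hw : w < 1) : {x : ℝ | w < V x}.Nonempty :=
  (h1.eventually_const_lt hw).exists

private lemma genInv_monotoneOn (V : StieltjesFunction ℝ) (h0 : Tendsto V atBot (nhds 0))
    (h1 : Tendsto V atTop (nhds 1)) :
    MonotoneOn (genInv (fun y => V y)) (Set.Ioo 0 1) := by
  intro a ha b hb hab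
  exact csInf_le_csInf (genInv_bddBelow V h0 ha.1) (genInv_nonempty V h1 hb.2)
    (fun x hx => lt_of_le_of_lt hab hx)

/-- The measure of the sublevel set of the generalized inverse on `(0,1)` equals `V x`. -/
private lemma measure_genInv_le (V : StieltjesFunction ℝ) (h0 : Tendsto V atBot (nhds 0))
    (h1 : Tendsto V atTop (nhds 1)) (x : ℝ) :
    volume {w ∈ Set.Ioo (0:ℝ) 1 | genInv (fun y => V y) w ≤ x} = ENNReal.ofReal (V x) := by
  have hV1 : ∀ y, V y ≤ 1 := fun y => V.mono.ge_of_tendsto h1 y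
  have hsub1 : Set.Ioo 0 (V x) ⊆ {w ∈ Set.Ioo (0:ℝ) 1 | genInv (fun y => V y) w ≤ x} := by
    intro w hw
    refine ⟨⟨hw.1, lt_of_lt_of_le hw.2 (hV1 x)⟩, ?_⟩
    exact csInf_le (genInv_bddBelow V h0 hw.1) hw.2
  have hsub2 : {w ∈ Set.Ioo (0:ℝ) 1 | genInv (fun y => V y) w ≤ x} ⊆ Set.Ioc 0 (V x) := by
    rintro w ⟨hwI, hle⟩
    refine ⟨hwI.1, ?_⟩
    by_contra hlt
    push_neg at hlt
    have hev : ∀ᶠ y in nhdsWithin x (Set.Ici x), V y < w :=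
      (V.right_continuous x).tendsto.eventually_lt_const hlt
    obtain ⟨u, hu, hsub⟩ := mem_nhdsGE_iff_exists_Ico_subset.mp hev
    have hle' : u ≤ genInv (fun y => V y) w := by
      refine le_csInf (genInv_nonempty V h1 hwI.2) (fun y hy => ?_)
      by_contra hyu
      push_neg at hyu
      rcases lt_or_ge y x with hyx | hxy
      · exact absurd (show w < V y from hy) (not_lt.mpr ((V.mono hyx.le).trans hlt.le))
      · exact absurd (show w < V y from hy) (not_lt.mpr (hsub ⟨hxy, hyu⟩).le)
    exact absurd (hle'.trans hle) (not_le.mpr hu)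
  refine le_antisymm ((measure_mono hsub2).trans_eq (by rw [Real.volume_Ioc, sub_zero])) ?_
  exact le_of_eq_of_le (by rw [Real.volume_Ioo, sub_zero]) (measure_mono hsub1)

/-- Auxiliary: bound on `|a.toReal - b.toReal|` in `ℝ≥0∞`. -/
private lemma ofReal_abs_toReal_sub_le {a b c : ℝ≥0∞} (ha : a ≠ ⊤) (hb : b ≠ ⊤)
    (h1 : a ≤ c + b) (h2 : b ≤ c + a) :
    ENNReal.ofReal |a.toReal - b.toReal| ≤ c := by
  rcases eq_or_ne c ⊤ with rfl | hc
  · exact le_top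
  have h1' : a.toReal ≤ c.toReal + b.toReal := by
    rw [← ENNReal.toReal_add hc hb]
    exact ENNReal.toReal_mono (by finiteness) h1
  have h2' : b.toReal ≤ c.toReal + a.toReal := by
    rw [← ENNReal.toReal_add hc ha]
    exact ENNReal.toReal_mono (by finiteness) h2
  have : |a.toReal - b.toReal| ≤ c.toReal := by
    rw [abs_sub_le_iff]
    constructor <;> linarith
  calc ENNReal.ofReal |a.toReal - b.toReal| ≤ ENNReal.ofReal c.toReal :=
        ENNReal.ofReal_le_ofReal this
    _ = c := ENNReal.ofReal_toReal hc

/-- for any `V ∈ 𝒰` and `h ≥ 0`,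
`‖T_h V − V‖_{L¹(ℝ)} ≤ h M`, where `M` bounds `f'` on `(0,1)`. -/
theorem stmt_12 (f' : ℝ → ℝ) (hf' : Measurable f') (M h : ℝ) (hh : 0 ≤ h)
    (hM : ∀ w ∈ Set.Ioo (0:ℝ) 1, |f' w| ≤ M)
    (V : StieltjesFunction ℝ)
    (h0 : Tendsto V atBot (nhds 0)) (h1 : Tendsto V atTop (nhds 1)) :
    ∫⁻ x, ENNReal.ofReal |Th f' h (fun y => V y) x - V x| ≤
      ENNReal.ofReal (h * M) := by
  classical
  set g : ℝ → ℝ := genInv (fun y => V y) with hgdef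
  obtain ⟨g₀, hg₀m, hg₀e⟩ :=
    aemeasurable_restrict_of_monotoneOn (μ := volume) measurableSet_Ioo
      (genInv_monotoneOn V h0 h1)
  set Z : Set ℝ := {w | g w ≠ g₀ w} ∩ Set.Ioo 0 1 with hZdef
  have hZ : volume Z = 0 := by
    have h' : (volume.restrict (Set.Ioo (0:ℝ) 1)) {w | ¬ g w = g₀ w} = 0 := ae_iff.mp hg₀e
    exact le_antisymm ((Measure.le_restrict_apply _ _).trans h'.le) zero_le
  set m : ℝ → ℝ := fun w => min (g₀ w) (g₀ w + h * f' w) with hmdef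
  set Mf : ℝ → ℝ := fun w => max (g₀ w) (g₀ w + h * f' w) with hMfdef
  have hmm : Measurable m := hg₀m.min (hg₀m.add (measurable_const.mul hf'))
  have hMm : Measurable Mf := hg₀m.max (hg₀m.add (measurable_const.mul hf'))
  set S : ℝ → Set ℝ := fun x => Set.Ioo (0:ℝ) 1 ∩ {w | m w ≤ x ∧ x < Mf w} with hSdef
  have hSmeas : ∀ x, MeasurableSet (S x) := fun x =>
    measurableSet_Ioo.inter ((measurableSet_le hmm measurable_const).inter
      (measurableSet_lt measurable_const hMm))
  have hIoo : volume (Set.Ioo (0:ℝ) 1) = 1 := by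
    rw [Real.volume_Ioo, sub_zero, ENNReal.ofReal_one]
  -- pointwise bound
  have key : ∀ x, ENNReal.ofReal |Th f' h (fun y => V y) x - V x| ≤ volume (S x) := by
    intro x
    set A : Set ℝ := {w ∈ Set.Ioo (0:ℝ) 1 | g w + h * f' w ≤ x} with hA
    set B : Set ℝ := {w ∈ Set.Ioo (0:ℝ) 1 | g w ≤ x} with hB
    have hAI : A ⊆ Set.Ioo 0 1 := fun w hw => hw.1
    have hBI : B ⊆ Set.Ioo 0 1 := fun w hw => hw.1
    have hAfin : volume A ≠ ⊤ := ((measure_mono hAI).trans_lt (by rw [hIoo]; exact ENNReal.one_lt_top)).ne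
    have hBfin : volume B ≠ ⊤ := ((measure_mono hBI).trans_lt (by rw [hIoo]; exact ENNReal.one_lt_top)).ne
    have hTh : Th f' h (fun y => V y) x = (volume A).toReal := rfl
    have hVB : volume B = ENNReal.ofReal (V x) := measure_genInv_le V h0 h1 x
    have hVxB : V x = (volume B).toReal := by
      rw [hVB, ENNReal.toReal_ofReal (V.mono.le_of_tendsto h0 x)]
    have hsubAB : A \ B ⊆ S x ∪ Z := by
      rintro w ⟨⟨hwI, hwa⟩, hwnb⟩
      have hxg : ¬ g w ≤ x := fun hc => hwnb ⟨hwI, hc⟩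
      push_neg at hxg
      by_cases hwz : g w = g₀ w
      · refine Or.inl ⟨hwI, ?_, ?_⟩
        · exact (min_le_right _ _).trans (by rw [← hwz]; exact hwa)
        · exact lt_of_lt_of_le (by rw [hwz] at hxg; exact hxg) (le_max_left _ _)
      · exact Or.inr ⟨hwz, hwI⟩
    have hsubBA : B \ A ⊆ S x ∪ Z := by
      rintro w ⟨⟨hwI, hwb⟩, hwna⟩
      have hxg : ¬ g w + h * f' w ≤ x := fun hc => hwna ⟨hwI, hc⟩
      push_neg at hxg
      by_cases hwz : g w = g₀ w
      · refine Or.inl ⟨hwI, ?_, ?_⟩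
        · exact (min_le_left _ _).trans (by rw [← hwz]; exact hwb)
        · exact lt_of_lt_of_le (by rw [hwz] at hxg; exact hxg) (le_max_right _ _)
      · exact Or.inr ⟨hwz, hwI⟩
    have hSZ : volume (S x ∪ Z) ≤ volume (S x) :=
      (measure_union_le _ _).trans (by rw [hZ, add_zero])
    have hd1 : volume A ≤ volume (S x) + volume B := by
      calc volume A ≤ volume ((A \ B) ∪ B) :=
            measure_mono (fun w hw => by
              by_cases hwB : w ∈ B
              · exact Or.inr hwB
              · exact Or.inl ⟨hw, hwB⟩)
        _ ≤ volume (A \ B) + volume B := measure_union_le _ _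
        _ ≤ volume (S x) + volume B :=
            add_le_add_left (((measure_mono hsubAB).trans hSZ)) _
    have hd2 : volume B ≤ volume (S x) + volume A := by
      calc volume B ≤ volume ((B \ A) ∪ A) :=
            measure_mono (fun w hw => by
              by_cases hwA : w ∈ A
              · exact Or.inr hwA
              · exact Or.inl ⟨hw, hwA⟩)
        _ ≤ volume (B \ A) + volume A := measure_union_le _ _
        _ ≤ volume (S x) + volume A :=
            add_le_add_left (((measure_mono hsubBA).trans hSZ)) _
    rw [hTh, hVxB]
    exact ofReal_abs_toReal_sub_le hAfin hBfin hd1 hd2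
  -- Tonelli
  set F : ℝ → ℝ → ℝ≥0∞ := fun x w =>
    if w ∈ Set.Ioo (0:ℝ) 1 ∧ m w ≤ x ∧ x < Mf w then 1 else 0 with hFdef
  have hSF : ∀ x, volume (S x) = ∫⁻ w, F x w := by
    intro x
    rw [← lintegral_indicator_one (hSmeas x)]
    refine lintegral_congr (fun w => ?_)
    by_cases hw : w ∈ S x
    · simp only [Set.indicator_of_mem hw, hFdef]
      rw [if_pos ⟨hw.1, hw.2⟩]
      rfl
    · simp only [Set.indicator_of_notMem hw, hFdef]
      rw [if_neg (fun hc => hw ⟨hc.1, hc.2⟩)]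
  have hFmeas : AEMeasurable (Function.uncurry F) ((volume : Measure ℝ).prod volume) := by
    have hP : MeasurableSet {p : ℝ × ℝ | p.2 ∈ Set.Ioo (0:ℝ) 1 ∧ m p.2 ≤ p.1 ∧ p.1 < Mf p.2} := by
      refine (measurable_snd measurableSet_Ioo).inter ?_
      exact (measurableSet_le (hmm.comp measurable_snd) measurable_fst).inter
        (measurableSet_lt measurable_fst (hMm.comp measurable_snd))
    have : Function.uncurry F =
        Set.indicator {p : ℝ × ℝ | p.2 ∈ Set.Ioo (0:ℝ) 1 ∧ m p.2 ≤ p.1 ∧ p.1 < Mf p.2}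
          (fun _ => (1 : ℝ≥0∞)) := by
      funext p
      simp [hFdef, Function.uncurry, Set.indicator_apply]
    rw [this]
    exact ((measurable_const.indicator hP).aemeasurable)
  have hinner : ∀ w, (∫⁻ x, F x w) =
      Set.indicator (Set.Ioo (0:ℝ) 1) (fun w => ENNReal.ofReal (h * |f' w|)) w := by
    intro w
    by_cases hw : w ∈ Set.Ioo (0:ℝ) 1
    · have h1' : (fun x => F x w) =
          fun x => Set.indicator (Set.Ico (m w) (Mf w)) (fun _ => (1 : ℝ≥0∞)) x := by
        funext x
        simp only [hFdef, Set.indicator_apply, Set.mem_Ico]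
        simp [hw.1, hw.2]
      rw [h1', lintegral_indicator_const measurableSet_Ico, one_mul,
        Set.indicator_of_mem hw, Real.volume_Ico]
      congr 1
      show max (g₀ w) (g₀ w + h * f' w) - min (g₀ w) (g₀ w + h * f' w) = h * |f' w|
      rw [max_sub_min_eq_abs, show g₀ w + h * f' w - g₀ w = h * f' w by ring,
        abs_mul, abs_of_nonneg hh]
    · have h1' : (fun x => F x w) = fun _ => (0 : ℝ≥0∞) := by
        funext x
        simp only [hFdef]
        rw [if_neg (fun hc => hw hc.1)]
      rw [h1', lintegral_zero, Set.indicator_of_notMem hw]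
  calc ∫⁻ x, ENNReal.ofReal |Th f' h (fun y => V y) x - V x|
      ≤ ∫⁻ x, volume (S x) := lintegral_mono key
    _ = ∫⁻ x, ∫⁻ w, F x w := by simp_rw [hSF]
    _ = ∫⁻ w, ∫⁻ x, F x w := lintegral_lintegral_swap hFmeas
    _ = ∫⁻ w, Set.indicator (Set.Ioo (0:ℝ) 1) (fun w => ENNReal.ofReal (h * |f' w|)) w := by
        simp_rw [hinner]
    _ ≤ ∫⁻ w, Set.indicator (Set.Ioo (0:ℝ) 1) (fun _ => ENNReal.ofReal (h * M)) w := by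
        refine lintegral_mono (fun w => ?_)
        by_cases hw : w ∈ Set.Ioo (0:ℝ) 1
        · rw [Set.indicator_of_mem hw, Set.indicator_of_mem hw]
          exact ENNReal.ofReal_le_ofReal (mul_le_mul_of_nonneg_left (hM w hw) hh)
        · rw [Set.indicator_of_notMem hw, Set.indicator_of_notMem hw]
    _ = ENNReal.ofReal (h * M) := by
        rw [lintegral_indicator_const measurableSet_Ioo, hIoo, mul_one]
end

section
/- Fix h > 0 and define S_h v(t,·) = (1−s) T_h^N v + s T_h^{N+1} v for t = (N+s)h, N ∈ ℕ, 0 ≤ s < 1. Then for any v ∈ 𝒰 and s, t ≥ 0, ‖S_h v(t,·) − S_h v(s,·)‖_{L¹(ℝ)} ≤ |t − s| ‖f'‖_{L^∞((0,1))}. -/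
open MeasureTheory Filter Set
open scoped ENNReal

/-- The time-discretized approximate solution: for `t = (N + s) h` with
`N = ⌊t/h⌋` and `0 ≤ s < 1`, `S_h v (t, ·) = (1−s) T_h^N v + s T_h^{N+1} v`. -/
noncomputable def Sh (f' : ℝ → ℝ) (h : ℝ) (v : ℝ → ℝ) (t : ℝ) (x : ℝ) : ℝ :=
  (1 - (t / h - ⌊t / h⌋₊)) * (Th f' h)^[⌊t / h⌋₊] v x +
    (t / h - ⌊t / h⌋₊) * (Th f' h)^[⌊t / h⌋₊ + 1] v x

/-- Properties of a CDF preserved by the transport operator. -/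
structure Nice (u : ℝ → ℝ) : Prop where
  mono : Monotone u
  nonneg : ∀ x, 0 ≤ u x
  le_one : ∀ x, u x ≤ 1
  lt_top : ∀ w ∈ Set.Ioo (0:ℝ) 1, ∃ x, w < u x
  gt_bot : ∀ w ∈ Set.Ioo (0:ℝ) 1, ∃ x, u x < w
  rc : ∀ x w, (∀ y, x < y → w < u y) → w ≤ u x

namespace Nice

variable {u : ℝ → ℝ} {w x : ℝ}

lemma bddBelow_set (hu : Nice u) (hw : w ∈ Set.Ioo (0:ℝ) 1) : BddBelow {x | w < u x} := by
  obtain ⟨y, hy⟩ := hu.gt_bot w hw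
  refine ⟨y, fun x hx => ?_⟩
  by_contra hc
  exact absurd (hu.mono (le_of_not_ge hc)) (not_le.2 (lt_trans hy hx))

lemma nonempty_set (hu : Nice u) (hw : w ∈ Set.Ioo (0:ℝ) 1) : {x | w < u x}.Nonempty :=
  hu.lt_top w hw

lemma genInv_le (hu : Nice u) (hw : w ∈ Set.Ioo (0:ℝ) 1) (hwx : w < u x) :
    genInv u w ≤ x := csInf_le (hu.bddBelow_set hw) hwx

lemma le_of_genInv_le (hu : Nice u) (hw : w ∈ Set.Ioo (0:ℝ) 1)
    (hx : genInv u w ≤ x) : w ≤ u x := by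
  refine hu.rc x w (fun y hy => ?_)
  obtain ⟨x', hx', hx'y⟩ := exists_lt_of_csInf_lt (hu.nonempty_set hw) (lt_of_le_of_lt hx hy)
  exact lt_of_lt_of_le hx' (hu.mono hx'y.le)

lemma genInv_monotoneOn (hu : Nice u) : MonotoneOn (genInv u) (Set.Ioo (0:ℝ) 1) := by
  intro w hw w' hw' hww'
  exact csInf_le_csInf (hu.bddBelow_set hw) (hu.nonempty_set hw')
    (fun x hx => lt_of_le_of_lt hww' hx)

lemma measure_genInv_le (hu : Nice u) (x : ℝ) :
    volume {w ∈ Set.Ioo (0:ℝ) 1 | genInv u w ≤ x} = ENNReal.ofReal (u x) := by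
  apply le_antisymm
  · have hsub : {w ∈ Set.Ioo (0:ℝ) 1 | genInv u w ≤ x} ⊆ Set.Ioc 0 (u x) := by
      rintro w ⟨hw, hwx⟩
      exact ⟨hw.1, hu.le_of_genInv_le hw hwx⟩
    calc volume {w ∈ Set.Ioo (0:ℝ) 1 | genInv u w ≤ x} ≤ volume (Set.Ioc 0 (u x)) :=
          measure_mono hsub
      _ = ENNReal.ofReal (u x) := by rw [Real.volume_Ioc, sub_zero]
  · have hsub : Set.Ioo 0 (u x) ⊆ {w ∈ Set.Ioo (0:ℝ) 1 | genInv u w ≤ x} := by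
      rintro w ⟨hw0, hwu⟩
      have hw : w ∈ Set.Ioo (0:ℝ) 1 := ⟨hw0, lt_of_lt_of_le hwu (hu.le_one x)⟩
      exact ⟨hw, hu.genInv_le hw hwu⟩
    calc ENNReal.ofReal (u x) = volume (Set.Ioo 0 (u x)) := by
          rw [Real.volume_Ioo, sub_zero]
      _ ≤ _ := measure_mono hsub

lemma measurable_indicator_genInv (hu : Nice u) :
    Measurable ((Set.Ioo (0:ℝ) 1).indicator (genInv u)) := by
  apply measurable_of_Iic
  intro c
  have : (Set.Ioo (0:ℝ) 1).indicator (genInv u) ⁻¹' Set.Iic c =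
      {w ∈ Set.Ioo (0:ℝ) 1 | genInv u w ≤ c} ∪
        ((Set.Ioo (0:ℝ) 1)ᶜ ∩ {w : ℝ | (0:ℝ) ≤ c}) := by
    ext w
    by_cases hw : w ∈ Set.Ioo (0:ℝ) 1
    · simp only [Set.mem_preimage, Set.indicator_of_mem hw, Set.mem_Iic, Set.mem_union,
        Set.mem_inter_iff, Set.mem_compl_iff, Set.mem_setOf_eq, Set.mem_sep_iff]
      refine ⟨fun hg => Or.inl ⟨hw, hg⟩, ?_⟩
      rintro (⟨_, hg⟩ | ⟨hc, _⟩)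
      · exact hg
      · exact absurd hw hc
    · simp only [Set.mem_preimage, Set.indicator_of_notMem hw, Set.mem_Iic, Set.mem_union,
        Set.mem_inter_iff, Set.mem_compl_iff, Set.mem_setOf_eq, Set.mem_sep_iff]
      refine ⟨fun hc => Or.inr ⟨hw, hc⟩, ?_⟩
      rintro (⟨hm, _⟩ | ⟨_, hc⟩)
      · exact absurd hm hw
      · exact hc
  rw [this]
  have h1 : MeasurableSet {w ∈ Set.Ioo (0:ℝ) 1 | genInv u w ≤ c} := by
    apply Set.OrdConnected.measurableSet
    constructor
    rintro w1 ⟨hw1, hg1⟩ w2 ⟨hw2, hg2⟩ w hw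
    have hwm : w ∈ Set.Ioo (0:ℝ) 1 :=
      ⟨lt_of_lt_of_le hw1.1 hw.1, lt_of_le_of_lt hw.2 hw2.2⟩
    exact ⟨hwm, le_trans (hu.genInv_monotoneOn hwm hw2 hw.2) hg2⟩
  refine h1.union (measurableSet_Ioo.compl.inter ?_)
  by_cases hc : (0:ℝ) ≤ c
  · simp [hc]
  · simp [hc]

end Nice

section Transport
variable {f' : ℝ → ℝ} {M h : ℝ} {u : ℝ → ℝ}

lemma Th_set_eq (h x : ℝ) :
    {w ∈ Set.Ioo (0:ℝ) 1 | genInv u w + h * f' w ≤ x} =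
      Set.Ioo (0:ℝ) 1 ∩
        (fun w => (Set.Ioo (0:ℝ) 1).indicator (genInv u) w + h * f' w) ⁻¹' Set.Iic x := by
  ext w
  constructor
  · rintro ⟨hw, hle⟩
    exact ⟨hw, by simpa [Set.indicator_of_mem hw] using hle⟩
  · rintro ⟨hw, hle⟩
    exact ⟨hw, by simpa [Set.indicator_of_mem hw] using hle⟩

lemma measurableSet_ThSet (hu : Nice u) (hf' : Measurable f') (h x : ℝ) :
    MeasurableSet {w ∈ Set.Ioo (0:ℝ) 1 | genInv u w + h * f' w ≤ x} := by
  rw [Th_set_eq]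
  exact measurableSet_Ioo.inter
    ((hu.measurable_indicator_genInv.add ((measurable_const).mul hf')) measurableSet_Iic)

lemma measure_ThSet_le_one (h x : ℝ) :
    volume {w ∈ Set.Ioo (0:ℝ) 1 | genInv u w + h * f' w ≤ x} ≤ 1 := by
  calc volume {w ∈ Set.Ioo (0:ℝ) 1 | genInv u w + h * f' w ≤ x}
      ≤ volume (Set.Ioo (0:ℝ) 1) := measure_mono (fun w hw => hw.1)
    _ = 1 := by rw [Real.volume_Ioo]; norm_num

lemma measure_ThSet_ne_top (h x : ℝ) :
    volume {w ∈ Set.Ioo (0:ℝ) 1 | genInv u w + h * f' w ≤ x} ≠ ∞ :=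
  ne_top_of_le_ne_top ENNReal.one_ne_top (measure_ThSet_le_one h x)

lemma ThSet_subset (h : ℝ) {x y : ℝ} (hxy : x ≤ y) :
    {w ∈ Set.Ioo (0:ℝ) 1 | genInv u w + h * f' w ≤ x} ⊆
      {w ∈ Set.Ioo (0:ℝ) 1 | genInv u w + h * f' w ≤ y} :=
  fun w hw => ⟨hw.1, le_trans hw.2 hxy⟩

lemma Th_mono (h : ℝ) : Monotone (Th f' h u) := by
  intro x y hxy
  exact ENNReal.toReal_mono (measure_ThSet_ne_top h y) (measure_mono (ThSet_subset h hxy))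

lemma Nice.th (hu : Nice u) (hf' : Measurable f') (hh : 0 < h)
    (hM : ∀ w ∈ Set.Ioo (0:ℝ) 1, |f' w| ≤ M) : Nice (Th f' h u) := by
  constructor
  · exact Th_mono h
  · intro x; exact ENNReal.toReal_nonneg
  · intro x
    exact ENNReal.toReal_le_of_le_ofReal zero_le_one
      (by simpa using measure_ThSet_le_one (f' := f') (u := u) h x)
  · -- lt_top
    intro w hw
    set w0 : ℝ := (w + 1) / 2 with hw0def
    have hww0 : w < w0 := by rw [hw0def]; linarith [hw.2]
    have hw01 : w0 < 1 := by rw [hw0def]; linarith [hw.2]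
    have hw0pos : 0 < w0 := by rw [hw0def]; linarith [hw.1]
    have hw0m : w0 ∈ Set.Ioo (0:ℝ) 1 := ⟨hw0pos, hw01⟩
    refine ⟨genInv u w0 + h * M, ?_⟩
    have hsub : Set.Ioc 0 w0 ⊆
        {w' ∈ Set.Ioo (0:ℝ) 1 | genInv u w' + h * f' w' ≤ genInv u w0 + h * M} := by
      rintro w' ⟨hw'0, hw'w0⟩
      have hw'm : w' ∈ Set.Ioo (0:ℝ) 1 := ⟨hw'0, lt_of_le_of_lt hw'w0 hw01⟩
      refine ⟨hw'm, add_le_add (hu.genInv_monotoneOn hw'm hw0m hw'w0) ?_⟩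
      have := hM w' hw'm
      have : f' w' ≤ M := le_trans (le_abs_self _) this
      exact mul_le_mul_of_nonneg_left this hh.le
    have hmeas : ENNReal.ofReal w0 ≤
        volume {w' ∈ Set.Ioo (0:ℝ) 1 | genInv u w' + h * f' w' ≤ genInv u w0 + h * M} := by
      calc ENNReal.ofReal w0 = volume (Set.Ioc (0:ℝ) w0) := by
            rw [Real.volume_Ioc, sub_zero]
        _ ≤ _ := measure_mono hsub
    have := (ENNReal.ofReal_le_iff_le_toReal (measure_ThSet_ne_top h _)).1 hmeas
    exact lt_of_lt_of_le hww0 this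
  · -- gt_bot
    intro w hw
    set w0 : ℝ := w / 2 with hw0def
    have hw0w : w0 < w := by rw [hw0def]; linarith [hw.1]
    have hw0pos : 0 < w0 := by rw [hw0def]; linarith [hw.1]
    have hw0m : w0 ∈ Set.Ioo (0:ℝ) 1 := ⟨hw0pos, lt_trans hw0w hw.2⟩
    refine ⟨genInv u w0 - h * M - 1, ?_⟩
    have hsub : {w' ∈ Set.Ioo (0:ℝ) 1 | genInv u w' + h * f' w' ≤ genInv u w0 - h * M - 1} ⊆
        Set.Ioo 0 w0 := by
      rintro w' ⟨hw'm, hle⟩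
      refine ⟨hw'm.1, ?_⟩
      by_contra hc
      have hw0w' : w0 ≤ w' := le_of_not_gt hc
      have h1 : genInv u w0 ≤ genInv u w' := hu.genInv_monotoneOn hw0m hw'm hw0w'
      have h2 : -M ≤ f' w' := neg_le_of_abs_le (hM w' hw'm)
      have h3 : -(h * M) ≤ h * f' w' := by
        have := mul_le_mul_of_nonneg_left h2 hh.le
        linarith
      linarith
    have hmeas : volume {w' ∈ Set.Ioo (0:ℝ) 1 |
        genInv u w' + h * f' w' ≤ genInv u w0 - h * M - 1} ≤ ENNReal.ofReal w0 := by
      calc volume _ ≤ volume (Set.Ioo (0:ℝ) w0) := measure_mono hsub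
        _ = ENNReal.ofReal w0 := by rw [Real.volume_Ioo, sub_zero]
    exact lt_of_le_of_lt (ENNReal.toReal_le_of_le_ofReal hw0pos.le hmeas) hw0w
  · -- rc
    intro x w hxy
    rcases le_or_gt w 0 with hw0 | hw0
    · exact le_trans hw0 ENNReal.toReal_nonneg
    set s : ℕ → Set ℝ := fun n =>
      {w' ∈ Set.Ioo (0:ℝ) 1 | genInv u w' + h * f' w' ≤ x + ((n:ℝ) + 1)⁻¹} with hsdef
    have hmeass : ∀ n, NullMeasurableSet (s n) volume := fun n =>
      (measurableSet_ThSet hu hf' h _).nullMeasurableSet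
    have hanti : Antitone s := by
      intro n m hnm
      apply ThSet_subset
      have : ((m:ℝ) + 1)⁻¹ ≤ ((n:ℝ) + 1)⁻¹ := by
        apply inv_anti₀ (by positivity)
        exact_mod_cast add_le_add_left (Nat.cast_le.2 hnm) 1
      linarith
    have hfin : ∃ n, volume (s n) ≠ ∞ := ⟨0, measure_ThSet_ne_top h _⟩
    have hiInter : (⋂ n, s n) = {w' ∈ Set.Ioo (0:ℝ) 1 | genInv u w' + h * f' w' ≤ x} := by
      ext w'
      simp only [Set.mem_iInter, hsdef, Set.mem_sep_iff]
      constructor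
      · intro hall
        refine ⟨(hall 0).1, ?_⟩
        apply le_of_forall_pos_le_add
        intro ε hε
        obtain ⟨n, hn⟩ := exists_nat_one_div_lt hε
        have := (hall n).2
        rw [one_div] at hn
        linarith
      · rintro ⟨hm, hle⟩ n
        exact ⟨hm, le_trans hle (le_add_of_nonneg_right (by positivity))⟩
    have htend := tendsto_measure_iInter_atTop hmeass hanti hfin
    rw [hiInter] at htend
    have hlb : ∀ n, ENNReal.ofReal w ≤ volume (s n) := by
      intro n
      have hwlt : w < Th f' h u (x + ((n:ℝ) + 1)⁻¹) := hxy _ (lt_add_of_pos_right _ (by positivity))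
      rw [Th] at hwlt
      exact le_trans (ENNReal.ofReal_le_ofReal hwlt.le)
        (ENNReal.ofReal_toReal_le)
    have : ENNReal.ofReal w ≤
        volume {w' ∈ Set.Ioo (0:ℝ) 1 | genInv u w' + h * f' w' ≤ x} :=
      ge_of_tendsto' htend hlb
    exact (ENNReal.ofReal_le_iff_le_toReal (measure_ThSet_ne_top h x)).1 this

end Transport

section KeyEstimate
variable {f' : ℝ → ℝ} {M h : ℝ} {u : ℝ → ℝ}

lemma key_estimate (hu : Nice u) (hf' : Measurable f') (hh : 0 < h)
    (hM : ∀ w ∈ Set.Ioo (0:ℝ) 1, |f' w| ≤ M) :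
    ∫⁻ x, ENNReal.ofReal |Th f' h u x - u x| ≤ ENNReal.ofReal (h * M) := by
  set Ω : Set ℝ := Set.Ioo (0:ℝ) 1 with hΩdef
  set G : ℝ → ℝ := Ω.indicator (genInv u) with hGdef
  have hGm : Measurable G := hu.measurable_indicator_genInv
  set ψ : ℝ → ℝ := fun w => G w + h * f' w with hψdef
  have hψm : Measurable ψ := hGm.add (measurable_const.mul hf')
  set A : ℝ → Set ℝ := fun x => {w ∈ Ω | genInv u w + h * f' w ≤ x} with hAdef
  set B : ℝ → Set ℝ := fun x => {w ∈ Ω | genInv u w ≤ x} with hBdef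
  have hAeq : ∀ x, A x = Ω ∩ ψ ⁻¹' Set.Iic x := fun x => Th_set_eq h x
  have hBeq : ∀ x, B x = Ω ∩ G ⁻¹' Set.Iic x := by
    intro x
    ext w
    constructor
    · rintro ⟨hw, hle⟩
      exact ⟨hw, by simpa [hGdef, Set.indicator_of_mem hw] using hle⟩
    · rintro ⟨hw, hle⟩
      refine ⟨hw, ?_⟩
      simpa [hGdef, Set.indicator_of_mem hw] using hle
  have hAm : ∀ x, MeasurableSet (A x) := fun x => measurableSet_ThSet hu hf' h x
  have hBm : ∀ x, MeasurableSet (B x) := by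
    intro x
    rw [hBeq]
    exact measurableSet_Ioo.inter (hGm measurableSet_Iic)
  have hBvol : ∀ x, volume (B x) = ENNReal.ofReal (u x) := fun x => hu.measure_genInv_le x
  have hBfin : ∀ x, volume (B x) ≠ ∞ := fun x => by rw [hBvol]; exact ENNReal.ofReal_ne_top
  have hAfin : ∀ x, volume (A x) ≠ ∞ := fun x => measure_ThSet_ne_top h x
  -- the "bad" set
  set C : ℝ → Set ℝ := fun x =>
    Ω ∩ {w | min (G w) (ψ w) ≤ x ∧ x < max (G w) (ψ w)} with hCdef
  -- pointwise bound
  have hpt : ∀ x, ENNReal.ofReal |Th f' h u x - u x| ≤ volume (C x) := by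
    intro x
    have hsub1 : A x \ B x ⊆ C x := by
      rintro w ⟨hwA, hwB⟩
      rw [hAeq] at hwA
      have hwΩ : w ∈ Ω := hwA.1
      have hψle : ψ w ≤ x := hwA.2
      have hGgt : x < G w := by
        by_contra hc
        exact hwB ((hBeq x) ▸ ⟨hwΩ, le_of_not_gt hc⟩)
      exact ⟨hwΩ, le_trans (min_le_right _ _) hψle, lt_of_lt_of_le hGgt (le_max_left _ _)⟩
    have hsub2 : B x \ A x ⊆ C x := by
      rintro w ⟨hwB, hwA⟩
      rw [hBeq] at hwB
      have hwΩ : w ∈ Ω := hwB.1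
      have hGle : G w ≤ x := hwB.2
      have hψgt : x < ψ w := by
        by_contra hc
        exact hwA ((hAeq x) ▸ ⟨hwΩ, le_of_not_gt hc⟩)
      exact ⟨hwΩ, le_trans (min_le_left _ _) hGle, lt_of_lt_of_le hψgt (le_max_right _ _)⟩
    have hdisj : Disjoint (A x \ B x) (B x \ A x) :=
      disjoint_sdiff_sdiff
    have hunion : volume (A x \ B x) + volume (B x \ A x) ≤ volume (C x) := by
      rw [← measure_union hdisj ((hBm x).diff (hAm x))]
      exact measure_mono (Set.union_subset hsub1 hsub2)
    refine le_trans ?_ hunion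
    set d1 := volume (A x \ B x) with hd1
    set d2 := volume (B x \ A x) with hd2
    have hd1fin : d1 ≠ ∞ := ne_top_of_le_ne_top (hAfin x) (measure_mono Set.diff_subset)
    have hd2fin : d2 ≠ ∞ := ne_top_of_le_ne_top (hBfin x) (measure_mono Set.diff_subset)
    have ha : volume (A x) ≤ volume (B x) + d1 := by
      refine le_trans (measure_mono (?_ : A x ⊆ B x ∪ (A x \ B x))) (measure_union_le _ _)
      intro w hw
      by_cases hwB : w ∈ B x
      · exact Or.inl hwB
      · exact Or.inr ⟨hw, hwB⟩
    have hb : volume (B x) ≤ volume (A x) + d2 := by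
      refine le_trans (measure_mono (?_ : B x ⊆ A x ∪ (B x \ A x))) (measure_union_le _ _)
      intro w hw
      by_cases hwA : w ∈ A x
      · exact Or.inl hwA
      · exact Or.inr ⟨hw, hwA⟩
    have hux : u x = (volume (B x)).toReal := by
      rw [hBvol, ENNReal.toReal_ofReal (hu.nonneg x)]
    have hTh : Th f' h u x = (volume (A x)).toReal := rfl
    rw [hTh, hux]
    have habs : |(volume (A x)).toReal - (volume (B x)).toReal| ≤ (d1 + d2).toReal := by
      rw [abs_sub_le_iff]
      constructor
      · have := ENNReal.toReal_mono (by simp [ENNReal.add_ne_top, hBfin x, hd1fin]) ha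
        rw [ENNReal.toReal_add (hBfin x) hd1fin] at this
        have hle : d1.toReal ≤ (d1 + d2).toReal := by
          apply ENNReal.toReal_mono (by simp [ENNReal.add_ne_top, hd1fin, hd2fin])
          exact le_self_add
        linarith
      · have := ENNReal.toReal_mono (by simp [ENNReal.add_ne_top, hAfin x, hd2fin]) hb
        rw [ENNReal.toReal_add (hAfin x) hd2fin] at this
        have hle : d2.toReal ≤ (d1 + d2).toReal := by
          apply ENNReal.toReal_mono (by simp [ENNReal.add_ne_top, hd1fin, hd2fin])
          exact le_add_self
        linarith
    calc ENNReal.ofReal |(volume (A x)).toReal - (volume (B x)).toReal|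
        ≤ ENNReal.ofReal ((d1 + d2).toReal) := ENNReal.ofReal_le_ofReal habs
      _ = d1 + d2 := ENNReal.ofReal_toReal (by simp [ENNReal.add_ne_top, hd1fin, hd2fin])
  -- integrate the bound
  have hstep : ∫⁻ x, ENNReal.ofReal |Th f' h u x - u x| ≤ ∫⁻ x, volume (C x) :=
    lintegral_mono hpt
  refine le_trans hstep ?_
  -- rewrite volume (C x) as an integral over the restricted measure
  set μr : Measure ℝ := volume.restrict Ω with hμr
  have hCvol : ∀ x, volume (C x) =
      μr {w | min (G w) (ψ w) ≤ x ∧ x < max (G w) (ψ w)} := by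
    intro x
    rw [hμr, Measure.restrict_apply']
    · rw [hCdef, Set.inter_comm]
    · exact measurableSet_Ioo
  have hEm : MeasurableSet {z : ℝ × ℝ |
      min (G z.2) (ψ z.2) ≤ z.1 ∧ z.1 < max (G z.2) (ψ z.2)} := by
    apply MeasurableSet.inter
    · exact measurableSet_le ((hGm.comp measurable_snd).min (hψm.comp measurable_snd))
        measurable_fst
    · exact measurableSet_lt measurable_fst
        ((hGm.comp measurable_snd).max (hψm.comp measurable_snd))
  have hswap : ∫⁻ x, volume (C x) =
      ∫⁻ w, volume (Set.Ico (min (G w) (ψ w)) (max (G w) (ψ w))) ∂μr := by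
    have h1 : ∀ x, volume (C x) = ∫⁻ w,
        Set.indicator {z : ℝ × ℝ |
          min (G z.2) (ψ z.2) ≤ z.1 ∧ z.1 < max (G z.2) (ψ z.2)} (fun _ => 1) (x, w) ∂μr := by
      intro x
      have hmx : MeasurableSet {w : ℝ | G w ⊓ ψ w ≤ x ∧ x < G w ⊔ ψ w} :=
        (measurableSet_le (hGm.min hψm) measurable_const).inter
          (measurableSet_lt measurable_const (hGm.max hψm))
      rw [hCvol x, ← lintegral_indicator_one hmx]
      congr 1
    have h2 : ∀ w, (∫⁻ x, Set.indicator {z : ℝ × ℝ |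
          min (G z.2) (ψ z.2) ≤ z.1 ∧ z.1 < max (G z.2) (ψ z.2)} (fun _ => 1) (x, w)) =
        volume (Set.Ico (min (G w) (ψ w)) (max (G w) (ψ w))) := by
      intro w
      rw [← lintegral_indicator_one measurableSet_Ico]
      congr 1
    simp_rw [h1]
    rw [lintegral_lintegral_swap]
    · simp_rw [h2]
    · exact (measurable_const.indicator hEm).aemeasurable
  rw [hswap]
  have hico : ∀ w, volume (Set.Ico (min (G w) (ψ w)) (max (G w) (ψ w))) =
      ENNReal.ofReal (h * |f' w|) := by
    intro w
    rw [Real.volume_Ico]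
    congr 1
    rw [max_sub_min_eq_abs]
    rw [hψdef]
    simp only []
    rw [show G w + h * f' w - G w = h * f' w by ring, abs_mul, abs_of_pos hh]
  simp_rw [hico]
  have hbound : ∀ᵐ w ∂μr, ENNReal.ofReal (h * |f' w|) ≤ ENNReal.ofReal (h * M) := by
    rw [hμr, ae_restrict_iff' measurableSet_Ioo]
    filter_upwards with w hw
    exact ENNReal.ofReal_le_ofReal (mul_le_mul_of_nonneg_left (hM w hw) hh.le)
  calc ∫⁻ w, ENNReal.ofReal (h * |f' w|) ∂μr
      ≤ ∫⁻ _, ENNReal.ofReal (h * M) ∂μr := lintegral_mono_ae hbound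
    _ = ENNReal.ofReal (h * M) * μr Set.univ := lintegral_const _
    _ = ENNReal.ofReal (h * M) := by
        rw [hμr, Measure.restrict_apply_univ, Real.volume_Ioo]
        norm_num

end KeyEstimate

lemma nice_base (v : StieltjesFunction ℝ)
    (h0 : Tendsto v atBot (nhds 0)) (h1 : Tendsto v atTop (nhds 1)) :
    Nice (fun y => v y) := by
  constructor
  · exact fun x y hxy => v.mono hxy
  · intro x
    refine le_of_tendsto h0 ?_
    filter_upwards [eventually_le_atBot x] with y hy
    exact v.mono hy
  · intro x
    refine ge_of_tendsto h1 ?_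
    filter_upwards [eventually_ge_atTop x] with y hy
    exact v.mono hy
  · intro w hw
    exact (h1.eventually (eventually_gt_nhds hw.2)).exists
  · intro w hw
    exact (h0.eventually (eventually_lt_nhds hw.1)).exists
  · intro x w hxy
    have htend : Tendsto (fun y => v y) (nhdsWithin x (Set.Ioi x)) (nhds (v x)) :=
      (v.right_continuous x).mono_left (nhdsWithin_mono x Set.Ioi_subset_Ici_self)
    refine ge_of_tendsto htend ?_
    filter_upwards [eventually_mem_nhdsWithin] with y hy
    exact (hxy y hy).le


/-- for `h > 0`, `v ∈ 𝒰` and `s, t ≥ 0`,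
`‖S_h v(t,·) − S_h v(s,·)‖_{L¹(ℝ)} ≤ |t − s| M`, where `M` bounds `f'` on
`(0,1)`. -/
theorem stmt_13 (f' : ℝ → ℝ) (hf' : Measurable f') (M h : ℝ) (hh : 0 < h)
    (hM : ∀ w ∈ Set.Ioo (0:ℝ) 1, |f' w| ≤ M)
    (v : StieltjesFunction ℝ)
    (h0 : Tendsto v atBot (nhds 0)) (h1 : Tendsto v atTop (nhds 1))
    (s t : ℝ) (hs : 0 ≤ s) (ht : 0 ≤ t) :
    ∫⁻ x, ENNReal.ofReal
        |Sh f' h (fun y => v y) t x - Sh f' h (fun y => v y) s x| ≤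
      ENNReal.ofReal (|t - s| * M) := by
  have hM0 : 0 ≤ M := le_trans (abs_nonneg _) (hM (1/2) (by norm_num))
  set a : ℕ → ℝ → ℝ := fun k => (Th f' h)^[k] (fun y => v y) with hadef
  have hNice : ∀ k, Nice (a k) := by
    intro k
    induction k with
    | zero => exact nice_base v h0 h1
    | succ n ih =>
        show Nice (a (n+1))
        have hstep : a (n+1) = Th f' h (a n) := Function.iterate_succ_apply' _ _ _
        rw [hstep]
        exact ih.th hf' hh hM
  have hmeas : ∀ k, Measurable (a k) := fun k => (hNice k).mono.measurable
  have hkey : ∀ k, ∫⁻ x, ENNReal.ofReal |a (k+1) x - a k x| ≤ ENNReal.ofReal (h * M) := by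
    intro k
    have hstep : a (k+1) = Th f' h (a k) := Function.iterate_succ_apply' _ _ _
    rw [hstep]
    exact key_estimate (hNice k) hf' hh hM
  -- the cell formula
  have hcell : ∀ (N : ℕ) (τ : ℝ), (N:ℝ) * h ≤ τ → τ ≤ ((N:ℝ) + 1) * h → ∀ x,
      Sh f' h (fun y => v y) τ x = a N x + (τ / h - N) * (a (N+1) x - a N x) := by
    intro N τ hτ1 hτ2 x
    have hτ0 : 0 ≤ τ / h := div_nonneg (le_trans (by positivity) hτ1) hh.le
    rcases lt_or_eq_of_le hτ2 with hτ2 | hτ2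
    · have hfl : ⌊τ / h⌋₊ = N := by
        rw [Nat.floor_eq_iff hτ0]
        constructor
        · rw [le_div_iff₀ hh]; linarith
        · rw [div_lt_iff₀ hh]; push_cast; linarith
      rw [Sh, hfl]
      show (1 - (τ / h - N)) * a N x + (τ / h - N) * a (N + 1) x = _
      ring
    · have hτh : τ / h = (N:ℝ) + 1 := by
        rw [hτ2]; field_simp
      have hfl : ⌊τ / h⌋₊ = N + 1 := by
        rw [hτh, show ((N:ℝ) + 1) = ((N+1 : ℕ) : ℝ) by push_cast; ring, Nat.floor_natCast]
      rw [Sh, hfl, hτh]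
      show (1 - ((N:ℝ) + 1 - (N+1:ℕ))) * a (N+1) x + ((N:ℝ) + 1 - (N+1:ℕ)) * a (N+1+1) x = _
      push_cast
      ring
  have hShmeas : ∀ τ, Measurable (fun x => Sh f' h (fun y => v y) τ x) := by
    intro τ
    exact ((hmeas _).const_mul _).add ((hmeas _).const_mul _)
  -- cell estimate
  have hcellest : ∀ (N : ℕ) (s' t' : ℝ), (N:ℝ) * h ≤ s' → s' ≤ t' → t' ≤ ((N:ℝ) + 1) * h →
      ∫⁻ x, ENNReal.ofReal |Sh f' h (fun y => v y) t' x - Sh f' h (fun y => v y) s' x| ≤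
        ENNReal.ofReal ((t' - s') * M) := by
    intro N s' t' h1' h2' h3'
    have hdiff : ∀ x, Sh f' h (fun y => v y) t' x - Sh f' h (fun y => v y) s' x =
        ((t' - s') / h) * (a (N+1) x - a N x) := by
      intro x
      rw [hcell N t' (le_trans h1' h2') h3' x, hcell N s' h1' (le_trans h2' h3') x]
      field_simp
      ring
    have hc0 : (0:ℝ) ≤ (t' - s') / h := div_nonneg (by linarith) hh.le
    calc ∫⁻ x, ENNReal.ofReal |Sh f' h (fun y => v y) t' x - Sh f' h (fun y => v y) s' x|
        = ∫⁻ x, ENNReal.ofReal ((t' - s') / h) * ENNReal.ofReal |a (N+1) x - a N x| := by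
          congr 1
          ext x
          rw [hdiff x, abs_mul, abs_of_nonneg hc0, ENNReal.ofReal_mul hc0]
      _ = ENNReal.ofReal ((t' - s') / h) * ∫⁻ x, ENNReal.ofReal |a (N+1) x - a N x| :=
          lintegral_const_mul' _ _ ENNReal.ofReal_ne_top
      _ ≤ ENNReal.ofReal ((t' - s') / h) * ENNReal.ofReal (h * M) :=
          mul_le_mul_right (hkey N) _
      _ = ENNReal.ofReal ((t' - s') / h * (h * M)) := (ENNReal.ofReal_mul hc0).symm
      _ = ENNReal.ofReal ((t' - s') * M) := by
          congr 1
          field_simp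
  -- induction over cells
  have haux : ∀ (n : ℕ) (s' t' : ℝ), 0 ≤ s' → s' ≤ t' → ⌊t' / h⌋₊ ≤ ⌊s' / h⌋₊ + n →
      ∫⁻ x, ENNReal.ofReal |Sh f' h (fun y => v y) t' x - Sh f' h (fun y => v y) s' x| ≤
        ENNReal.ofReal ((t' - s') * M) := by
    intro n
    induction n with
    | zero =>
        intro s' t' hs' hst hfl
        set N := ⌊s' / h⌋₊ with hN
        have hfle : ⌊t' / h⌋₊ = N := le_antisymm (by simpa using hfl)
          (Nat.floor_le_floor (by gcongr))
        have hb1 : (N:ℝ) * h ≤ s' := by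
          have := Nat.floor_le (div_nonneg hs' hh.le)
          rw [← hN] at this
          calc (N:ℝ) * h ≤ s' / h * h := by nlinarith
            _ = s' := by field_simp
        have hb2 : t' ≤ ((N:ℝ) + 1) * h := by
          have := Nat.lt_floor_add_one (t' / h)
          rw [hfle] at this
          have := (div_lt_iff₀ hh).1 this
          linarith
        exact hcellest N s' t' hb1 hst hb2
    | succ n ih =>
        intro s' t' hs' hst hfl
        set N := ⌊s' / h⌋₊ with hN
        rcases le_or_gt ⌊t' / h⌋₊ N with hle | hlt
        · have hfle : ⌊t' / h⌋₊ = N := le_antisymm hle (Nat.floor_le_floor (by gcongr))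
          have hb1 : (N:ℝ) * h ≤ s' := by
            have := Nat.floor_le (div_nonneg hs' hh.le)
            rw [← hN] at this
            calc (N:ℝ) * h ≤ s' / h * h := by nlinarith
              _ = s' := by field_simp
          have hb2 : t' ≤ ((N:ℝ) + 1) * h := by
            have := Nat.lt_floor_add_one (t' / h)
            rw [hfle] at this
            have := (div_lt_iff₀ hh).1 this
            linarith
          exact hcellest N s' t' hb1 hst hb2
        · set m : ℝ := ((N:ℝ) + 1) * h with hm
          have hsm : s' ≤ m := by
            have := Nat.lt_floor_add_one (s' / h)
            rw [← hN] at this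
            have := (div_lt_iff₀ hh).1 this
            rw [hm]; linarith
          have hmt : m ≤ t' := by
            have h1' : ((N:ℝ) + 1) ≤ (⌊t' / h⌋₊ : ℝ) := by exact_mod_cast hlt
            have h2' : (⌊t' / h⌋₊ : ℝ) ≤ t' / h := Nat.floor_le (div_nonneg (by linarith) hh.le)
            rw [hm]
            calc ((N:ℝ) + 1) * h ≤ t' / h * h := by nlinarith
              _ = t' := by field_simp
          have hb1 : (N:ℝ) * h ≤ s' := by
            have := Nat.floor_le (div_nonneg hs' hh.le)
            rw [← hN] at this
            calc (N:ℝ) * h ≤ s' / h * h := by nlinarith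
              _ = s' := by field_simp
          have hest1 : ∫⁻ x, ENNReal.ofReal |Sh f' h (fun y => v y) m x - Sh f' h (fun y => v y) s' x| ≤
              ENNReal.ofReal ((m - s') * M) := hcellest N s' m hb1 hsm le_rfl
          have hflm : ⌊m / h⌋₊ = N + 1 := by
            have hmh : m / h = (N:ℝ) + 1 := by rw [hm]; field_simp
            rw [hmh, show ((N:ℝ) + 1) = ((N+1 : ℕ) : ℝ) by push_cast; ring, Nat.floor_natCast]
          have hest2 : ∫⁻ x, ENNReal.ofReal |Sh f' h (fun y => v y) t' x - Sh f' h (fun y => v y) m x| ≤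
              ENNReal.ofReal ((t' - m) * M) := by
            apply ih m t' (le_trans hs' hsm) hmt
            rw [hflm]
            omega
          calc ∫⁻ x, ENNReal.ofReal |Sh f' h (fun y => v y) t' x - Sh f' h (fun y => v y) s' x|
              ≤ ∫⁻ x, (ENNReal.ofReal |Sh f' h (fun y => v y) t' x - Sh f' h (fun y => v y) m x| + ENNReal.ofReal |Sh f' h (fun y => v y) m x - Sh f' h (fun y => v y) s' x|) := by
                apply lintegral_mono
                intro x
                refine le_trans (ENNReal.ofReal_le_ofReal ?_) ENNReal.ofReal_add_le
                exact abs_sub_le _ _ _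
            _ = (∫⁻ x, ENNReal.ofReal |Sh f' h (fun y => v y) t' x - Sh f' h (fun y => v y) m x|) + ∫⁻ x, ENNReal.ofReal |Sh f' h (fun y => v y) m x - Sh f' h (fun y => v y) s' x| := by
                apply lintegral_add_left
                exact (((hShmeas t').sub (hShmeas m)).abs).ennreal_ofReal
            _ ≤ ENNReal.ofReal ((t' - m) * M) + ENNReal.ofReal ((m - s') * M) :=
                add_le_add hest2 hest1
            _ = ENNReal.ofReal ((t' - s') * M) := by
                rw [← ENNReal.ofReal_add (by nlinarith) (by nlinarith)]
                congr 1
                ring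
  -- conclude
  rcases le_total s t with hst | hts
  · rw [show |t - s| = t - s from abs_of_nonneg (by linarith)]
    exact haux ⌊t / h⌋₊ s t hs hst (Nat.le_add_left _ _)
  · rw [show |t - s| = s - t by rw [abs_of_nonpos (by linarith : t - s ≤ 0)]; ring]
    have hmain := haux ⌊s / h⌋₊ t s ht hts (Nat.le_add_left _ _)
    calc ∫⁻ x, ENNReal.ofReal |Sh f' h (fun y => v y) t x - Sh f' h (fun y => v y) s x|
        = ∫⁻ x, ENNReal.ofReal |Sh f' h (fun y => v y) s x - Sh f' h (fun y => v y) t x| := by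
          congr 1
          ext x
          rw [abs_sub_comm]
      _ ≤ ENNReal.ofReal ((s - t) * M) := hmain
end

section
/- Fix h > 0 and p ≥ 1. For v, ṽ ∈ 𝒰 and any t ≥ 0, the time-discretized solutions satisfy W_p([S_h v]_x(t,·), [S_h ṽ]_x(t,·)) ≤ W_p(v_x, ṽ_x) (with possibly infinite values). -/
open MeasureTheory Filter Set
open scoped ENNReal

open Topology

set_option linter.unusedSectionVars false

namespace Stmt14Aux

open ProbabilityTheory

variable (μ ν : Measure ℝ) [IsProbabilityMeasure μ] [IsProbabilityMeasure ν]

/-- the quantile function of a probability measure -/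
noncomputable def qf : ℝ → ℝ := genInv (cdf μ)

lemma bddBelow_q {w : ℝ} (hw : 0 < w) : BddBelow {x : ℝ | w < cdf μ x} := by
  obtain ⟨x₀, hx₀⟩ := (eventually_atBot.1 ((tendsto_cdf_atBot (μ := μ)).eventually_lt_const hw))
  exact ⟨x₀, fun x hx => by
    by_contra hc
    exact absurd (lt_trans hx (hx₀ x (le_of_lt (not_le.1 hc)))) (lt_irrefl w)⟩

lemma nonempty_q {w : ℝ} (hw : w < 1) : {x : ℝ | w < cdf μ x}.Nonempty := by
  obtain ⟨x₀, hx₀⟩ := (eventually_atTop.1 ((tendsto_cdf_atTop (μ := μ)).eventually_const_lt hw))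
  exact ⟨x₀, hx₀ x₀ le_rfl⟩

lemma qf_le_of_lt_cdf {w s : ℝ} (hw : 0 < w) (h : w < cdf μ s) : qf μ w ≤ s :=
  csInf_le (bddBelow_q μ hw) h

lemma le_cdf_of_qf_le {w s : ℝ} (hw : w ∈ Ioo (0:ℝ) 1) (h : qf μ w ≤ s) : w ≤ cdf μ s := by
  by_contra hc
  push_neg at hc
  have h1 : ∀ᶠ y in 𝓝[>] s, cdf μ y < w :=
    (((cdf μ).right_continuous s).eventually_lt_const hc).filter_mono
      (nhdsWithin_mono s Ioi_subset_Ici_self)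
  obtain ⟨y, hyw, hy⟩ := (h1.and eventually_mem_nhdsWithin).exists
  have hyle : y ≤ qf μ w := by
    refine le_csInf (nonempty_q μ hw.2) fun x hx => ?_
    by_contra hxc
    exact absurd (lt_of_lt_of_le hx ((cdf μ).mono (le_of_lt (not_le.1 hxc)))) (not_lt.2 hyw.le)
  exact absurd (lt_of_le_of_lt (hyle.trans h) hy) (lt_irrefl y)

lemma monoOn_qf : MonotoneOn (qf μ) (Ioo (0:ℝ) 1) := fun w hw w' hw' hww' =>
  csInf_le_csInf (bddBelow_q μ hw.1) (nonempty_q μ hw'.2)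
    (fun x hx => lt_of_le_of_lt hww' hx)

lemma qf_of_neg {w : ℝ} (hw : w < 0) : qf μ w = 0 := by
  have : {x : ℝ | w < cdf μ x} = univ := eq_univ_of_forall fun x => lt_of_lt_of_le hw (cdf_nonneg μ x)
  rw [qf, genInv, this, Real.sInf_of_not_bddBelow (by simpa using not_bddBelow_univ)]

lemma qf_of_one_le {w : ℝ} (hw : 1 ≤ w) : qf μ w = 0 := by
  have : {x : ℝ | w < cdf μ x} = ∅ :=
    eq_empty_of_forall_notMem fun x hx => absurd (lt_of_le_of_lt hw hx) (not_lt.2 (cdf_le_one μ x))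
  rw [qf, genInv, this, Real.sInf_empty]

lemma measurable_qf : Measurable (qf μ) := by
  refine measurable_of_Iio fun c => ?_
  have hdecomp : qf μ ⁻¹' Iio c =
      ((qf μ ⁻¹' Iio c) ∩ Iio 0) ∪ (((qf μ ⁻¹' Iio c) ∩ {0}) ∪
      (((qf μ ⁻¹' Iio c) ∩ Ioo 0 1) ∪ ((qf μ ⁻¹' Iio c) ∩ Ici 1))) := by
    rw [← inter_union_distrib_left, ← inter_union_distrib_left, ← inter_union_distrib_left]
    rw [← inter_univ (qf μ ⁻¹' Iio c)]
    congr 1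
    · rw [inter_univ]
    ext x
    simp only [mem_univ, mem_union, mem_Iio, mem_singleton_iff, mem_Ioo, mem_Ici, true_iff]
    rcases lt_trichotomy x 0 with h | h | h
    · exact Or.inl h
    · exact Or.inr (Or.inl h)
    · rcases lt_or_ge x 1 with h1 | h1
      · exact Or.inr (Or.inr (Or.inl ⟨h, h1⟩))
      · exact Or.inr (Or.inr (Or.inr h1))
  rw [hdecomp]
  refine MeasurableSet.union ?_ (MeasurableSet.union ?_ (MeasurableSet.union ?_ ?_))
  · have : (qf μ ⁻¹' Iio c) ∩ Iio 0 = if 0 < c then Iio 0 else ∅ := by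
      split_ifs with hc
      · exact inter_eq_right.2 fun x hx => by simp [qf_of_neg μ hx, hc]
      · exact eq_empty_of_forall_notMem fun x ⟨hx1, hx2⟩ => hc (by
          simpa [qf_of_neg μ hx2] using hx1)
    rw [this]; split_ifs
    · exact measurableSet_Iio
    · exact MeasurableSet.empty
  · exact ((Set.Subsingleton.inter_singleton).measurableSet)
  · refine Set.OrdConnected.measurableSet ⟨fun x hx y hy z hz => ?_⟩
    have hzI : z ∈ Ioo (0:ℝ) 1 := ⟨lt_of_lt_of_le hx.2.1 hz.1, lt_of_le_of_lt hz.2 hy.2.2⟩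
    refine ⟨?_, hzI⟩
    simp only [mem_preimage, mem_Iio] at *
    exact lt_of_le_of_lt (monoOn_qf μ hzI hy.2 hz.2) hy.1
  · have : (qf μ ⁻¹' Iio c) ∩ Ici 1 = if 0 < c then Ici 1 else ∅ := by
      split_ifs with hc
      · exact inter_eq_right.2 fun x hx => by simp [qf_of_one_le μ hx, hc]
      · exact eq_empty_of_forall_notMem fun x ⟨hx1, hx2⟩ => hc (by
          simpa [qf_of_one_le μ hx2] using hx1)
    rw [this]; split_ifs
    · exact measurableSet_Ici
    · exact MeasurableSet.empty


lemma vol_qf_le (s : ℝ) : volume (Ioo (0:ℝ) 1 ∩ {w | qf μ w ≤ s}) = μ (Iic s) := by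
  have h1 : Ioo (0:ℝ) (min (cdf μ s) 1) ⊆ Ioo (0:ℝ) 1 ∩ {w | qf μ w ≤ s} := by
    intro w hw
    have hw1 : w < cdf μ s := lt_of_lt_of_le hw.2 (min_le_left _ _)
    have hw2 : w < 1 := lt_of_lt_of_le hw.2 (min_le_right _ _)
    exact ⟨⟨hw.1, hw2⟩, qf_le_of_lt_cdf μ hw.1 hw1⟩
  have h2 : Ioo (0:ℝ) 1 ∩ {w | qf μ w ≤ s} ⊆ Ioc (0:ℝ) (cdf μ s) := fun w hw =>
    ⟨hw.1.1, le_cdf_of_qf_le μ hw.1 hw.2⟩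
  have hle : volume (Ioo (0:ℝ) 1 ∩ {w | qf μ w ≤ s}) ≤ ENNReal.ofReal (cdf μ s) := by
    refine le_trans (measure_mono h2) ?_
    rw [Real.volume_Ioc, sub_zero]
  have hge : ENNReal.ofReal (cdf μ s) ≤ volume (Ioo (0:ℝ) 1 ∩ {w | qf μ w ≤ s}) := by
    refine le_trans ?_ (measure_mono h1)
    rw [Real.volume_Ioo, sub_zero, min_eq_left (cdf_le_one μ s)]
  rw [le_antisymm hle hge, ofReal_cdf]

lemma vol_qf_lt (t : ℝ) : volume (Ioo (0:ℝ) 1 ∩ {w | qf μ w < t}) = μ (Iio t) := by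
  have hset : Ioo (0:ℝ) 1 ∩ {w | qf μ w < t} =
      ⋃ n : ℕ, (Ioo (0:ℝ) 1 ∩ {w | qf μ w ≤ t - 1 / (n + 1)}) := by
    ext w
    simp only [mem_inter_iff, mem_setOf_eq, mem_iUnion]
    constructor
    · rintro ⟨hw, hwt⟩
      obtain ⟨n, hn⟩ := exists_nat_one_div_lt (sub_pos.2 hwt)
      exact ⟨n, hw, by push_cast at hn ⊢; linarith⟩
    · rintro ⟨n, hw, hn⟩
      have : (0:ℝ) < 1 / (n + 1) := by positivity
      exact ⟨hw, by linarith⟩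
  have hIio : Iio t = ⋃ n : ℕ, Iic (t - 1 / (n + 1)) := by
    ext x
    simp only [mem_Iio, mem_iUnion, mem_Iic]
    constructor
    · intro hx
      obtain ⟨n, hn⟩ := exists_nat_one_div_lt (sub_pos.2 hx)
      exact ⟨n, by push_cast at hn ⊢; linarith⟩
    · rintro ⟨n, hn⟩
      have : (0:ℝ) < 1 / (n + 1) := by positivity
      linarith
  have hmono : ∀ (a b : ℕ), a ≤ b → (t - 1 / (a + 1) : ℝ) ≤ t - 1 / (b + 1) := by
    intro a b hab
    have : (1 : ℝ) / (b + 1) ≤ 1 / (a + 1) := by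
      apply one_div_le_one_div_of_le (by positivity)
      have : (a:ℝ) ≤ b := Nat.cast_le.2 hab
      linarith
    linarith
  rw [hset, hIio]
  rw [Directed.measure_iUnion, Directed.measure_iUnion]
  · exact iSup_congr fun n => vol_qf_le μ _
  · intro a b
    rcases le_total a b with hab | hab
    · exact ⟨b, Iic_subset_Iic.2 (hmono a b hab), subset_rfl⟩
    · exact ⟨a, subset_rfl, Iic_subset_Iic.2 (hmono b a hab)⟩
  · intro a b
    rcases le_total a b with hab | hab
    · exact ⟨b, inter_subset_inter_right _ fun w hw => le_trans hw (hmono a b hab),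
        subset_rfl⟩
    · exact ⟨a, subset_rfl,
        inter_subset_inter_right _ fun w hw => le_trans hw (hmono b a hab)⟩

lemma vol_between (t s : ℝ) :
    volume (Ioo (0:ℝ) 1 ∩ {w | qf ν w < t ∧ s < qf μ w}) = ν (Iio t) - μ (Iic s) := by
  classical
  set A := Ioo (0:ℝ) 1 ∩ {w | qf ν w < t} with hA
  set B := Ioo (0:ℝ) 1 ∩ {w | qf μ w ≤ s} with hB
  have htarget : Ioo (0:ℝ) 1 ∩ {w | qf ν w < t ∧ s < qf μ w} = A \ B := by
    ext w
    simp only [hA, hB, mem_inter_iff, mem_setOf_eq, mem_diff, not_and, not_le]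
    constructor
    · rintro ⟨hw, h1, h2⟩; exact ⟨⟨hw, h1⟩, fun _ => h2⟩
    · rintro ⟨⟨hw, h1⟩, h2⟩; exact ⟨hw, h1, h2 hw⟩
  have hmeasB : MeasurableSet B :=
    measurableSet_Ioo.inter ((measurable_qf μ) measurableSet_Iic)
  have hBfin : volume B ≠ ∞ :=
    (lt_of_le_of_lt (measure_mono inter_subset_left) (by simp)).ne
  have hnested : B ⊆ A ∨ A ⊆ B := by
    by_cases hAB : A ⊆ B
    · exact Or.inr hAB
    · obtain ⟨w, hwA, hwB⟩ := not_subset.1 hAB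
      refine Or.inl fun w' hw' => ?_
      rcases le_or_gt w' w with hle | hlt
      · exact ⟨hw'.1, lt_of_le_of_lt (monoOn_qf ν hw'.1 hwA.1 hle) hwA.2⟩
      · exact absurd ⟨hwA.1, le_trans (monoOn_qf μ hwA.1 hw'.1 hlt.le) hw'.2⟩ hwB
  rw [htarget]
  rcases hnested with hBA | hAB
  · rw [measure_diff hBA hmeasB.nullMeasurableSet hBfin, vol_qf_lt, vol_qf_le]
  · rw [diff_eq_empty.2 hAB, measure_empty]
    symm
    rw [tsub_eq_zero_iff_le, ← vol_qf_lt ν t, ← vol_qf_le μ s]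
    exact measure_mono hAB


lemma pi_between (π : Measure (ℝ × ℝ)) (hfst : π.map Prod.fst = μ) (hsnd : π.map Prod.snd = ν)
    (t s : ℝ) : ν (Iio t) - μ (Iic s) ≤ π {q : ℝ × ℝ | q.2 < t ∧ s < q.1} := by
  have h1 : π {q : ℝ × ℝ | q.2 < t} = ν (Iio t) := by
    rw [← hsnd, Measure.map_apply measurable_snd measurableSet_Iio]; rfl
  have h2 : π {q : ℝ × ℝ | q.1 ≤ s} = μ (Iic s) := by
    rw [← hfst, Measure.map_apply measurable_fst measurableSet_Iic]; rfl
  have hsub : {q : ℝ × ℝ | q.2 < t} ⊆ {q : ℝ × ℝ | q.2 < t ∧ s < q.1} ∪ {q : ℝ × ℝ | q.1 ≤ s} := by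
    intro q hq
    by_cases h : s < q.1
    · exact Or.inl ⟨hq, h⟩
    · exact Or.inr (not_lt.1 h)
  rw [tsub_le_iff_right, ← h1, ← h2]
  exact le_trans (measure_mono hsub) (measure_union_le _ _)

lemma decomp {a b t s : ℝ} (hts : t ≤ s) :
    (min a b < t ∧ t ≤ s ∧ s < max a b) ↔ ((b < t ∧ s < a) ∨ (a < t ∧ s < b)) := by
  constructor
  · rintro ⟨h1, -, h3⟩
    rcases min_lt_iff.1 h1 with ha | hb
    · rcases lt_max_iff.1 h3 with ha' | hb'
      · exact absurd ((ha.trans_le hts).trans ha') (lt_irrefl a)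
      · exact Or.inr ⟨ha, hb'⟩
    · rcases lt_max_iff.1 h3 with ha' | hb'
      · exact Or.inl ⟨hb, ha'⟩
      · exact absurd ((hb.trans_le hts).trans hb') (lt_irrefl b)
  · rintro (⟨h1, h2⟩ | ⟨h1, h2⟩)
    · exact ⟨min_lt_iff.2 (Or.inr h1), hts, lt_max_iff.2 (Or.inl h2)⟩
    · exact ⟨min_lt_iff.2 (Or.inl h1), hts, lt_max_iff.2 (Or.inr h2)⟩

lemma quantile_le_cost {p : ℝ} (κ : Measure (ℝ × ℝ)) [SFinite κ]
    (hκ : ∀ x y : ℝ, κ {ts : ℝ × ℝ | min x y < ts.1 ∧ ts.1 ≤ ts.2 ∧ ts.2 < max x y}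
      = ENNReal.ofReal (|x - y| ^ p))
    (π : Measure (ℝ × ℝ)) (hfst : π.map Prod.fst = μ) (hsnd : π.map Prod.snd = ν) :
    ∫⁻ w in Ioo (0:ℝ) 1, ENNReal.ofReal (|qf μ w - qf ν w| ^ p)
      ≤ ∫⁻ q : ℝ × ℝ, ENNReal.ofReal (|q.1 - q.2| ^ p) ∂π := by
  have hπ : IsProbabilityMeasure π := by
    constructor
    have huniv : π univ = (π.map Prod.fst) univ := by
      rw [Measure.map_apply measurable_fst MeasurableSet.univ, preimage_univ]
    rw [huniv, hfst, measure_univ]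
  have hqμ := measurable_qf μ
  have hqν := measurable_qf ν
  set E : Set (ℝ × (ℝ × ℝ)) := {z | min (qf μ z.1) (qf ν z.1) < z.2.1 ∧ z.2.1 ≤ z.2.2 ∧
    z.2.2 < max (qf μ z.1) (qf ν z.1)} with hE
  set E' : Set ((ℝ × ℝ) × (ℝ × ℝ)) := {z | min z.1.1 z.1.2 < z.2.1 ∧ z.2.1 ≤ z.2.2 ∧
    z.2.2 < max z.1.1 z.1.2} with hE'
  have hEm : MeasurableSet E := by
    rw [hE]
    simp only [setOf_and]
    refine MeasurableSet.inter ?_ (MeasurableSet.inter ?_ ?_)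
    · exact measurableSet_lt ((hqμ.comp measurable_fst).min (hqν.comp measurable_fst))
        (measurable_fst.comp measurable_snd)
    · exact measurableSet_le (measurable_fst.comp measurable_snd)
        (measurable_snd.comp measurable_snd)
    · exact measurableSet_lt (measurable_snd.comp measurable_snd)
        ((hqμ.comp measurable_fst).max (hqν.comp measurable_fst))
  have hE'm : MeasurableSet E' := by
    rw [hE']
    simp only [setOf_and]
    refine MeasurableSet.inter ?_ (MeasurableSet.inter ?_ ?_)
    · exact measurableSet_lt ((measurable_fst.comp measurable_fst).min
        (measurable_snd.comp measurable_fst)) (measurable_fst.comp measurable_snd)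
    · exact measurableSet_le (measurable_fst.comp measurable_snd)
        (measurable_snd.comp measurable_snd)
    · exact measurableSet_lt (measurable_snd.comp measurable_snd)
        ((measurable_fst.comp measurable_fst).max (measurable_snd.comp measurable_fst))
  have hRm : ∀ x y : ℝ, MeasurableSet {ts : ℝ × ℝ | min x y < ts.1 ∧ ts.1 ≤ ts.2 ∧
      ts.2 < max x y} := by
    intro x y
    simp only [setOf_and]
    exact (measurableSet_lt measurable_const measurable_fst).inter
      ((measurableSet_le measurable_fst measurable_snd).inter
        (measurableSet_lt measurable_snd measurable_const))
  have hslice : ∀ ts : ℝ × ℝ, MeasurableSet {w : ℝ | (w, ts) ∈ E} := fun ts =>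
    (measurable_id.prodMk measurable_const) hEm
  have hslice' : ∀ ts : ℝ × ℝ, MeasurableSet {q : ℝ × ℝ | (q, ts) ∈ E'} := fun ts =>
    (measurable_id.prodMk measurable_const) hE'm
  calc ∫⁻ w in Ioo (0:ℝ) 1, ENNReal.ofReal (|qf μ w - qf ν w| ^ p)
      = ∫⁻ w in Ioo (0:ℝ) 1, ∫⁻ ts : ℝ × ℝ, E.indicator 1 (w, ts) ∂κ := by
        refine lintegral_congr fun w => ?_
        rw [← hκ (qf μ w) (qf ν w), ← lintegral_indicator_one (hRm (qf μ w) (qf ν w))]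
        refine lintegral_congr fun ts => ?_
        simp only [Set.indicator_apply]
        rfl
    _ = ∫⁻ ts : ℝ × ℝ, (∫⁻ w in Ioo (0:ℝ) 1, E.indicator 1 (w, ts)) ∂κ := by
        have hu : AEMeasurable (Function.uncurry fun (w : ℝ) (ts : ℝ × ℝ) =>
            (E.indicator 1 (w, ts) : ℝ≥0∞)) ((volume.restrict (Ioo (0:ℝ) 1)).prod κ) := by
          have huf : (Function.uncurry fun (w : ℝ) (ts : ℝ × ℝ) => (E.indicator 1 (w, ts) : ℝ≥0∞))
              = E.indicator 1 := rfl
          rw [huf]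
          exact (measurable_one.indicator hEm).aemeasurable
        exact lintegral_lintegral_swap (μ := volume.restrict (Ioo (0:ℝ) 1)) (ν := κ)
          (f := fun w ts => E.indicator 1 (w, ts)) hu
    _ ≤ ∫⁻ ts : ℝ × ℝ, (∫⁻ q : ℝ × ℝ, E'.indicator 1 (q, ts) ∂π) ∂κ := by
        refine lintegral_mono fun ts => ?_
        have hL : ∫⁻ w in Ioo (0:ℝ) 1, E.indicator 1 (w, ts)
            = volume (Ioo (0:ℝ) 1 ∩ {w : ℝ | (w, ts) ∈ E}) := by
          have : (fun w => E.indicator 1 (w, ts))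
              = Set.indicator {w : ℝ | (w, ts) ∈ E} (1 : ℝ → ℝ≥0∞) := by
            funext w
            simp only [Set.indicator_apply]
            rfl
          rw [this, lintegral_indicator_one (hslice ts),
            Measure.restrict_apply (hslice ts), inter_comm]
        have hR : ∫⁻ q : ℝ × ℝ, E'.indicator 1 (q, ts) ∂π
            = π {q : ℝ × ℝ | (q, ts) ∈ E'} := by
          have : (fun q : ℝ × ℝ => E'.indicator 1 (q, ts))
              = Set.indicator {q : ℝ × ℝ | (q, ts) ∈ E'} (1 : (ℝ × ℝ) → ℝ≥0∞) := by
            funext q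
            simp only [Set.indicator_apply]
            rfl
          rw [this, lintegral_indicator_one (hslice' ts)]
        rw [hL, hR]
        by_cases hts : ts.1 ≤ ts.2
        · have hsli : Ioo (0:ℝ) 1 ∩ {w : ℝ | (w, ts) ∈ E}
              = (Ioo (0:ℝ) 1 ∩ {w | qf ν w < ts.1 ∧ ts.2 < qf μ w})
                ∪ (Ioo (0:ℝ) 1 ∩ {w | qf μ w < ts.1 ∧ ts.2 < qf ν w}) := by
            rw [← inter_union_distrib_left]
            refine congrArg (Ioo (0:ℝ) 1 ∩ ·) ?_
            ext w
            exact decomp hts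
          have hsli' : {q : ℝ × ℝ | (q, ts) ∈ E'}
              = {q : ℝ × ℝ | q.2 < ts.1 ∧ ts.2 < q.1}
                ∪ {q : ℝ × ℝ | q.1 < ts.1 ∧ ts.2 < q.2} := by
            ext q
            exact decomp hts
          have hdisj1 : Disjoint (Ioo (0:ℝ) 1 ∩ {w | qf ν w < ts.1 ∧ ts.2 < qf μ w})
              (Ioo (0:ℝ) 1 ∩ {w | qf μ w < ts.1 ∧ ts.2 < qf ν w}) := by
            rw [Set.disjoint_left]
            rintro w ⟨-, h1, h2⟩ ⟨-, h3, h4⟩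
            exact absurd ((h3.trans_le hts).trans h2) (lt_irrefl _)
          have hdisj2 : Disjoint {q : ℝ × ℝ | q.2 < ts.1 ∧ ts.2 < q.1}
              {q : ℝ × ℝ | q.1 < ts.1 ∧ ts.2 < q.2} := by
            rw [Set.disjoint_left]
            rintro q ⟨h1, h2⟩ ⟨h3, h4⟩
            exact absurd ((h3.trans_le hts).trans h2) (lt_irrefl _)
          have hm2 : MeasurableSet (Ioo (0:ℝ) 1 ∩ {w | qf μ w < ts.1 ∧ ts.2 < qf ν w}) := by
            simp only [setOf_and]
            exact measurableSet_Ioo.inter ((hqμ measurableSet_Iio).inter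
              (measurableSet_lt measurable_const hqν))
          have hm2' : MeasurableSet {q : ℝ × ℝ | q.1 < ts.1 ∧ ts.2 < q.2} := by
            simp only [setOf_and]
            exact (measurable_fst measurableSet_Iio).inter
              (measurableSet_lt measurable_const measurable_snd)
          rw [hsli, hsli', measure_union hdisj1 hm2, measure_union hdisj2 hm2']
          rw [vol_between μ ν ts.1 ts.2, vol_between ν μ ts.1 ts.2]
          refine add_le_add (pi_between μ ν π hfst hsnd ts.1 ts.2) ?_
          have hswapm : Measurable (Prod.swap : ℝ × ℝ → ℝ × ℝ) := measurable_swap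
          have hsw : π.map Prod.swap {q : ℝ × ℝ | q.2 < ts.1 ∧ ts.2 < q.1}
              = π {q : ℝ × ℝ | q.1 < ts.1 ∧ ts.2 < q.2} := by
            rw [Measure.map_apply hswapm]
            · rfl
            · simp only [setOf_and]
              exact (measurable_snd measurableSet_Iio).inter
                (measurableSet_lt measurable_const measurable_fst)
          rw [← hsw]
          refine pi_between ν μ (π.map Prod.swap) ?_ ?_ ts.1 ts.2
          · rw [Measure.map_map measurable_fst hswapm]
            exact hsnd
          · rw [Measure.map_map measurable_snd hswapm]
            exact hfst
        · have hempty : Ioo (0:ℝ) 1 ∩ {w : ℝ | (w, ts) ∈ E} = ∅ := by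
            exact eq_empty_of_forall_notMem fun w hw => hts hw.2.2.1
          rw [hempty, measure_empty]
          exact zero_le
    _ = ∫⁻ q : ℝ × ℝ, (∫⁻ ts : ℝ × ℝ, E'.indicator 1 (q, ts) ∂κ) ∂π := by
        have hu : AEMeasurable (Function.uncurry fun (q : ℝ × ℝ) (ts : ℝ × ℝ) =>
            (E'.indicator 1 (q, ts) : ℝ≥0∞)) (π.prod κ) := by
          have huf : (Function.uncurry fun (q : ℝ × ℝ) (ts : ℝ × ℝ) =>
              (E'.indicator 1 (q, ts) : ℝ≥0∞)) = E'.indicator 1 := rfl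
          rw [huf]
          exact (measurable_one.indicator hE'm).aemeasurable
        exact (lintegral_lintegral_swap (μ := π) (ν := κ)
          (f := fun q ts => E'.indicator 1 (q, ts)) hu).symm
    _ = ∫⁻ q : ℝ × ℝ, ENNReal.ofReal (|q.1 - q.2| ^ p) ∂π := by
        refine lintegral_congr fun q => ?_
        rw [← hκ q.1 q.2, ← lintegral_indicator_one (hRm q.1 q.2)]
        refine lintegral_congr fun ts => ?_
        simp only [Set.indicator_apply]
        rfl


lemma measR (x y : ℝ) : MeasurableSet {ts : ℝ × ℝ | min x y < ts.1 ∧ ts.1 ≤ ts.2 ∧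
    ts.2 < max x y} := by
  simp only [setOf_and]
  exact (measurableSet_lt measurable_const measurable_fst).inter
    ((measurableSet_le measurable_fst measurable_snd).inter
      (measurableSet_lt measurable_snd measurable_const))

lemma lint_Ioo_rpow_left {r c a b : ℝ} (hr : -1 < r) (hc : 0 ≤ c) (hab : a < b) :
    ∫⁻ s in Ioo a b, ENNReal.ofReal (c * (s - a) ^ r) =
      ENNReal.ofReal (c * ((b - a) ^ (r + 1) / (r + 1))) := by
  have hint : IntervalIntegrable (fun s => c * (s - a) ^ r) volume a b := by
    have h0 : IntervalIntegrable (fun x : ℝ => x ^ r) volume 0 (b - a) :=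
      intervalIntegral.intervalIntegrable_rpow' hr
    have h1 := (h0.comp_sub_right a).const_mul c
    simpa using h1
  have hIoo : IntegrableOn (fun s => c * (s - a) ^ r) (Ioo a b) volume :=
    ((intervalIntegrable_iff_integrableOn_Ioc_of_le hab.le).1 hint).mono_set Ioo_subset_Ioc_self
  have hnn : 0 ≤ᵐ[volume.restrict (Ioo a b)] fun s => c * (s - a) ^ r :=
    (ae_restrict_iff' measurableSet_Ioo).2 (ae_of_all _ fun s hs =>
      mul_nonneg hc (Real.rpow_nonneg (by linarith [hs.1]) r))
  rw [← ofReal_integral_eq_lintegral_ofReal hIoo hnn]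
  congr 1
  rw [← integral_Ioc_eq_integral_Ioo, ← intervalIntegral.integral_of_le hab.le,
    intervalIntegral.integral_const_mul]
  congr 1
  have h2 := intervalIntegral.integral_comp_sub_right (a := a) (b := b) (fun x => x ^ r) a
  rw [h2, sub_self]
  rw [integral_rpow (Or.inl hr), Real.zero_rpow (by linarith), sub_zero]

lemma lint_Ioo_rpow_right {r c a b : ℝ} (hr : -1 < r) (hc : 0 ≤ c) (hab : a < b) :
    ∫⁻ s in Ioo a b, ENNReal.ofReal (c * (b - s) ^ r) =
      ENNReal.ofReal (c * ((b - a) ^ (r + 1) / (r + 1))) := by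
  have hint : IntervalIntegrable (fun s => c * (b - s) ^ r) volume a b := by
    have h0 : IntervalIntegrable (fun x : ℝ => x ^ r) volume 0 (b - a) :=
      intervalIntegral.intervalIntegrable_rpow' hr
    have h1 := ((h0.comp_sub_left b).symm).const_mul c
    simpa using h1
  have hIoo : IntegrableOn (fun s => c * (b - s) ^ r) (Ioo a b) volume :=
    ((intervalIntegrable_iff_integrableOn_Ioc_of_le hab.le).1 hint).mono_set Ioo_subset_Ioc_self
  have hnn : 0 ≤ᵐ[volume.restrict (Ioo a b)] fun s => c * (b - s) ^ r :=
    (ae_restrict_iff' measurableSet_Ioo).2 (ae_of_all _ fun s hs =>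
      mul_nonneg hc (Real.rpow_nonneg (by linarith [hs.2]) r))
  rw [← ofReal_integral_eq_lintegral_ofReal hIoo hnn]
  congr 1
  rw [← integral_Ioc_eq_integral_Ioo, ← intervalIntegral.integral_of_le hab.le,
    intervalIntegral.integral_const_mul]
  congr 1
  have h2 := intervalIntegral.integral_comp_sub_left (a := a) (b := b) (fun x => x ^ r) b
  rw [h2, sub_self]
  rw [integral_rpow (Or.inl hr), Real.zero_rpow (by linarith), sub_zero]

lemma exists_kappa (p : ℝ) (hp : 1 ≤ p) : ∃ κ : Measure (ℝ × ℝ), SFinite κ ∧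
    ∀ x y : ℝ, κ {ts : ℝ × ℝ | min x y < ts.1 ∧ ts.1 ≤ ts.2 ∧ ts.2 < max x y}
      = ENNReal.ofReal (|x - y| ^ p) := by
  rcases eq_or_lt_of_le hp with hp1 | hp1
  · refine ⟨volume.map (fun t : ℝ => (t, t)), inferInstance, fun x y => ?_⟩
    rw [Measure.map_apply (show Measurable fun t : ℝ => (t, t) from measurable_id.prodMk measurable_id) (measR x y)]
    have hpre : (fun t : ℝ => (t, t)) ⁻¹'
        {ts : ℝ × ℝ | min x y < ts.1 ∧ ts.1 ≤ ts.2 ∧ ts.2 < max x y}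
        = Ioo (min x y) (max x y) := by
      ext t
      simp only [mem_preimage, mem_setOf_eq, mem_Ioo, le_refl, true_and, and_true]
    rw [hpre, Real.volume_Ioo, max_sub_min_eq_abs, ← hp1, Real.rpow_one, abs_sub_comm x y]
  · set c := p * (p - 1) with hcdef
    have hc : 0 ≤ c := mul_nonneg (by linarith) (by linarith)
    set δ : ℝ × ℝ → ℝ≥0∞ := fun ts =>
      if ts.1 < ts.2 then ENNReal.ofReal (c * (ts.2 - ts.1) ^ (p - 2)) else 0 with hδdef
    have hδm : Measurable δ :=
      Measurable.ite (measurableSet_lt measurable_fst measurable_snd)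
        ((measurable_const.mul ((measurable_snd.sub measurable_fst).pow
          measurable_const)).ennreal_ofReal)
        measurable_const
    refine ⟨volume.withDensity δ, inferInstance, fun x y => ?_⟩
    rcases eq_or_ne x y with rfl | hxy
    · have hempty : {ts : ℝ × ℝ | min x x < ts.1 ∧ ts.1 ≤ ts.2 ∧ ts.2 < max x x} = ∅ := by
        ext ts
        simp only [min_self, max_self, mem_setOf_eq, mem_empty_iff_false, iff_false, not_and]
        intro h1 h2
        by_contra h3
        exact absurd ((h1.trans_le h2).trans h3) (lt_irrefl x)
      rw [hempty, measure_empty, sub_self, abs_zero, Real.zero_rpow (by linarith),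
        ENNReal.ofReal_zero]
    · set m := min x y with hm
      set M := max x y with hM
      have hmM : m < M := min_lt_max.2 hxy
      have habs : |x - y| = M - m := by rw [hm, hM, max_sub_min_eq_abs, abs_sub_comm]
      set R : Set (ℝ × ℝ) := {ts : ℝ × ℝ | m < ts.1 ∧ ts.1 ≤ ts.2 ∧ ts.2 < M} with hR
      have hRmeas : MeasurableSet R := measR x y
      rw [withDensity_apply _ hRmeas]
      have hres : ∫⁻ ts in R, δ ts = ∫⁻ ts : ℝ × ℝ, R.indicator δ ts := (lintegral_indicator hRmeas δ).symm
      rw [hres, Measure.volume_eq_prod, lintegral_prod _ ((hδm.indicator hRmeas).aemeasurable)]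
      have hinner : ∀ t : ℝ, (∫⁻ s : ℝ, R.indicator δ (t, s)) =
          (Ioo m M).indicator (fun t => ENNReal.ofReal (p * (M - t) ^ (p - 1))) t := by
        intro t
        by_cases ht : t ∈ Ioo m M
        · have hfeq : (fun s => R.indicator δ (t, s)) =
              (Ioo t M).indicator (fun s => ENNReal.ofReal (c * (s - t) ^ (p - 2))) := by
            funext s
            rw [Set.indicator_apply, Set.indicator_apply]
            by_cases hmem : (t, s) ∈ R
            · rw [if_pos hmem]
              by_cases hs : s ∈ Ioo t M
              · rw [if_pos hs, hδdef]
                exact if_pos hs.1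
              · have hts_eq : t = s := by
                  rcases hmem with ⟨-, h1, h2⟩
                  simp only [mem_Ioo, not_and] at hs
                  rcases lt_or_eq_of_le h1 with h | h
                  · exact absurd h2 (hs h)
                  · exact h
                rw [if_neg hs, hδdef]
                exact if_neg (by rw [hts_eq]; exact lt_irrefl s)
            · rw [if_neg hmem]
              have hs : s ∉ Ioo t M := by
                intro hs
                exact hmem ⟨ht.1, hs.1.le, hs.2⟩
              rw [if_neg hs]
          rw [hfeq, lintegral_indicator measurableSet_Ioo,
            lint_Ioo_rpow_left (by linarith) hc ht.2, Set.indicator_of_mem ht]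
          have hne : p - 1 ≠ 0 := by linarith
          have harith : c * ((M - t) ^ (p - 2 + 1) / (p - 2 + 1)) = p * (M - t) ^ (p - 1) := by
            have hp2 : p - 2 + 1 = p - 1 := by ring
            rw [hp2, hcdef, ← mul_div_assoc]
            rw [show p * (p - 1) * (M - t) ^ (p - 1) = p * (M - t) ^ (p - 1) * (p - 1) from
              by ring]
            exact mul_div_cancel_right₀ _ hne
          rw [harith]
        · have hzero : (fun s : ℝ => R.indicator δ (t, s)) = fun _ => 0 := by
            funext s
            rw [Set.indicator_apply, if_neg]
            intro hmem
            exact ht ⟨hmem.1, lt_of_le_of_lt hmem.2.1 hmem.2.2⟩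
          rw [hzero, lintegral_const, zero_mul, Set.indicator_of_notMem ht]
      rw [lintegral_congr hinner, lintegral_indicator measurableSet_Ioo,
        lint_Ioo_rpow_right (by linarith) (by linarith) hmM]
      have hp1' : p - 1 + 1 = p := by ring
      rw [hp1', habs]
      congr 1
      rw [mul_comm, div_mul_cancel₀ _ (show p ≠ 0 by linarith)]


lemma isProb_P : IsProbabilityMeasure (volume.restrict (Ioo (0:ℝ) 1)) := by
  constructor
  rw [Measure.restrict_apply_univ, Real.volume_Ioo]
  norm_num

/-- one-step transported measure -/
noncomputable def TM (f' : ℝ → ℝ) (h : ℝ) (μ : Measure ℝ) [IsProbabilityMeasure μ] : Measure ℝ :=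
  Measure.map (fun w => qf μ w + h * f' w) (volume.restrict (Ioo (0:ℝ) 1))

variable {f' : ℝ → ℝ} (hf' : Measurable f') (h : ℝ)

lemma measurable_g (hf' : Measurable f') (h : ℝ) :
    Measurable (fun w => qf μ w + h * f' w) := (measurable_qf μ).add (hf'.const_mul h)

lemma isProb_TM (hf' : Measurable f') (h : ℝ) : IsProbabilityMeasure (TM f' h μ) := by
  haveI := isProb_P
  exact Measure.isProbabilityMeasure_map (measurable_g μ hf' h).aemeasurable

lemma Th_cdf (hf' : Measurable f') (h : ℝ) (G : ℝ → ℝ)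
    (hG : ∀ x, G x = (μ (Iic x)).toReal) (x : ℝ) :
    Th f' h G x = ((TM f' h μ) (Iic x)).toReal := by
  have hGq : genInv G = qf μ := by
    have hGc : G = ⇑(ProbabilityTheory.cdf μ) := funext fun x => by
      rw [hG x, cdf_eq_real, measureReal_def]
    rw [hGc]; rfl
  have hTM : (TM f' h μ) (Iic x)
      = volume {w ∈ Ioo (0:ℝ) 1 | genInv G w + h * f' w ≤ x} := by
    rw [TM, Measure.map_apply (measurable_g μ hf' h) measurableSet_Iic,
      Measure.restrict_apply ((measurable_g μ hf' h) measurableSet_Iic)]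
    congr 1
    ext w
    simp only [mem_inter_iff, mem_preimage, mem_Iic, mem_sep_iff, hGq]
    exact and_comm
  rw [Th, hTM]

end Stmt14Aux

open Stmt14Aux ProbabilityTheory

/-- the time-discretized evolution contracts the Wasserstein
distance of any order `p ≥ 1`:
`W_p([S_h v]_x(t,·), [S_h w]_x(t,·)) ≤ W_p(v_x, w_x)` for all `t ≥ 0`.
The Stieltjes measures of `S_h v (t,·)` and `S_h w (t,·)` are expressed via
arbitrary Stieltjes functions `σ, σ'` agreeing with them. -/
theorem stmt_14 (f' : ℝ → ℝ) (hf' : Measurable f') (M h p : ℝ) (hh : 0 < h)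
    (hp : 1 ≤ p) (hM : ∀ w ∈ Set.Ioo (0:ℝ) 1, |f' w| ≤ M)
    (v vt : StieltjesFunction ℝ)
    (hv0 : Tendsto v atBot (nhds 0)) (hv1 : Tendsto v atTop (nhds 1))
    (hvt0 : Tendsto vt atBot (nhds 0)) (hvt1 : Tendsto vt atTop (nhds 1))
    (t : ℝ) (ht : 0 ≤ t)
    (σ σ' : StieltjesFunction ℝ)
    (hσ : ∀ x, σ x = Sh f' h (fun y => v y) t x)
    (hσ' : ∀ x, σ' x = Sh f' h (fun y => vt y) t x) :
    Wp p σ.measure σ'.measure ≤ Wp p v.measure vt.measure := by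
  classical
  obtain ⟨κ, hκsf, hκ⟩ := exists_kappa p hp
  haveI := hκsf
  haveI hPv : IsProbabilityMeasure v.measure := by
    constructor
    rw [v.measure_univ hv0 hv1]
    norm_num
  haveI hPvt : IsProbabilityMeasure vt.measure := by
    constructor
    rw [vt.measure_univ hvt0 hvt1]
    norm_num
  have hvnn : ∀ x, 0 ≤ v x := fun x =>
    le_of_tendsto hv0 (eventually_atBot.2 ⟨x, fun y hy => v.mono hy⟩)
  have hvtnn : ∀ x, 0 ≤ vt x := fun x =>
    le_of_tendsto hvt0 (eventually_atBot.2 ⟨x, fun y hy => vt.mono hy⟩)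
  have hvcdf : ∀ x, (fun y => v y) x = (v.measure (Iic x)).toReal := fun x => by
    rw [v.measure_Iic hv0 x, sub_zero, ENNReal.toReal_ofReal (hvnn x)]
  have hvtcdf : ∀ x, (fun y => vt y) x = (vt.measure (Iic x)).toReal := fun x => by
    rw [vt.measure_Iic hvt0 x, sub_zero, ENNReal.toReal_ofReal (hvtnn x)]
  have hcostm : Measurable (fun q : ℝ × ℝ => ENNReal.ofReal (|q.1 - q.2| ^ p)) :=
    ((measurable_fst.sub measurable_snd).abs.pow measurable_const).ennreal_ofReal
  -- main induction: transported couplings along iterates of `Th`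
  have main : ∀ (π₀ : Measure (ℝ × ℝ)), π₀.map Prod.fst = v.measure →
      π₀.map Prod.snd = vt.measure →
      ∀ k : ℕ, ∃ (μN νN : Measure ℝ) (πN : Measure (ℝ × ℝ)),
        IsProbabilityMeasure μN ∧ IsProbabilityMeasure νN ∧
        (∀ x, (Th f' h)^[k] (fun y => v y) x = (μN (Iic x)).toReal) ∧
        (∀ x, (Th f' h)^[k] (fun y => vt y) x = (νN (Iic x)).toReal) ∧
        πN.map Prod.fst = μN ∧ πN.map Prod.snd = νN ∧
        (∫⁻ q, ENNReal.ofReal (|q.1 - q.2| ^ p) ∂πN)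
          ≤ ∫⁻ q, ENNReal.ofReal (|q.1 - q.2| ^ p) ∂π₀ := by
    intro π₀ h1 h2 k
    induction k with
    | zero => exact ⟨v.measure, vt.measure, π₀, hPv, hPvt, hvcdf, hvtcdf, h1, h2, le_rfl⟩
    | succ k ih =>
      obtain ⟨μN, νN, πN, hμp, hνp, hcdfμ, hcdfν, hfstN, hsndN, hcost⟩ := ih
      haveI := hμp
      haveI := hνp
      haveI := isProb_TM μN hf' h
      haveI := isProb_TM νN hf' h
      set gμ : ℝ → ℝ := fun w => qf μN w + h * f' w with hgμdef
      set gν : ℝ → ℝ := fun w => qf νN w + h * f' w with hgνdef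
      have hgμ : Measurable gμ := measurable_g μN hf' h
      have hgν : Measurable gν := measurable_g νN hf' h
      refine ⟨TM f' h μN, TM f' h νN,
        Measure.map (fun w => (gμ w, gν w)) (volume.restrict (Ioo (0:ℝ) 1)),
        inferInstance, inferInstance, ?_, ?_, ?_, ?_, ?_⟩
      · intro x
        rw [Function.iterate_succ_apply']
        exact Th_cdf μN hf' h _ hcdfμ x
      · intro x
        rw [Function.iterate_succ_apply']
        exact Th_cdf νN hf' h _ hcdfν x
      · rw [Measure.map_map measurable_fst (hgμ.prodMk hgν)]
        rfl
      · rw [Measure.map_map measurable_snd (hgμ.prodMk hgν)]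
        rfl
      · rw [lintegral_map hcostm (hgμ.prodMk hgν)]
        refine le_trans (le_of_eq ?_) (le_trans
          (quantile_le_cost μN νN κ hκ πN hfstN hsndN) hcost)
        refine lintegral_congr fun w => ?_
        congr 2
        rw [hgμdef, hgνdef]
        ring
  -- the mixture parameter
  set N := ⌊t / h⌋₊ with hN
  set s := t / h - (N : ℝ) with hs
  have hs0 : 0 ≤ s := sub_nonneg.2 (Nat.floor_le (div_nonneg ht hh.le))
  have hs1 : s < 1 := by
    rw [hs, sub_lt_iff_lt_add]
    have := Nat.lt_floor_add_one (t / h)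
    linarith
  -- conclude
  rw [Wp, Wp]
  refine ENNReal.rpow_le_rpow ?_ (div_nonneg zero_le_one (by linarith))
  refine le_iInf₂ fun π₀ hπ₀ => ?_
  obtain ⟨μN, νN, πN, hμp, hνp, hcdfμ, hcdfν, hfstN, hsndN, hcostN⟩ :=
    main π₀ hπ₀.1 hπ₀.2 N
  obtain ⟨μN1, νN1, πN1, hμp1, hνp1, hcdfμ1, hcdfν1, hfstN1, hsndN1, hcostN1⟩ :=
    main π₀ hπ₀.1 hπ₀.2 (N + 1)
  haveI := hμp; haveI := hνp; haveI := hμp1; haveI := hνp1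
  set a := ENNReal.ofReal (1 - s) with ha
  set b := ENNReal.ofReal s with hb
  have hab : a + b = 1 := by
    rw [ha, hb, ← ENNReal.ofReal_add (by linarith) hs0]
    norm_num
  -- identify the Stieltjes measure of a mixture CDF
  have hmix : ∀ (τ : StieltjesFunction ℝ) (ρ1 ρ2 : Measure ℝ),
      IsProbabilityMeasure ρ1 → IsProbabilityMeasure ρ2 →
      (∀ x, τ x = (1 - s) * (ρ1 (Iic x)).toReal + s * (ρ2 (Iic x)).toReal) →
      τ.measure = a • ρ1 + b • ρ2 := by
    intro τ ρ1 ρ2 hρ1 hρ2 hτ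
    haveI := hρ1
    haveI := hρ2
    have hF1bot : Tendsto (fun x => (ρ1 (Iic x)).toReal) atBot (𝓝 0) := by
      have h0 := tendsto_cdf_atBot (μ := ρ1)
      exact h0.congr fun x => (cdf_eq_real ρ1 x).trans (measureReal_def _ _)
    have hF2bot : Tendsto (fun x => (ρ2 (Iic x)).toReal) atBot (𝓝 0) := by
      have h0 := tendsto_cdf_atBot (μ := ρ2)
      exact h0.congr fun x => (cdf_eq_real ρ2 x).trans (measureReal_def _ _)
    have hF1top : Tendsto (fun x => (ρ1 (Iic x)).toReal) atTop (𝓝 1) := by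
      have h0 := tendsto_cdf_atTop (μ := ρ1)
      exact h0.congr fun x => (cdf_eq_real ρ1 x).trans (measureReal_def _ _)
    have hF2top : Tendsto (fun x => (ρ2 (Iic x)).toReal) atTop (𝓝 1) := by
      have h0 := tendsto_cdf_atTop (μ := ρ2)
      exact h0.congr fun x => (cdf_eq_real ρ2 x).trans (measureReal_def _ _)
    have hτeq : ⇑τ = fun x => (1 - s) * (ρ1 (Iic x)).toReal + s * (ρ2 (Iic x)).toReal :=
      funext hτ
    have hτbot : Tendsto τ atBot (𝓝 0) := by
      rw [hτeq]
      have := (hF1bot.const_mul (1 - s)).add (hF2bot.const_mul s)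
      simpa using this
    have hτtop : Tendsto τ atTop (𝓝 1) := by
      rw [hτeq]
      have := (hF1top.const_mul (1 - s)).add (hF2top.const_mul s)
      simpa using this
    haveI : IsFiniteMeasure τ.measure := by
      constructor
      rw [τ.measure_univ hτbot hτtop]
      simp
    refine Measure.ext_of_Iic τ.measure _ fun x => ?_
    rw [τ.measure_Iic hτbot x, sub_zero, hτ x]
    rw [Measure.add_apply, Measure.smul_apply, Measure.smul_apply, smul_eq_mul, smul_eq_mul]
    rw [ha, hb]
    rw [← ENNReal.ofReal_toReal (measure_ne_top ρ1 (Iic x)),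
      ← ENNReal.ofReal_toReal (measure_ne_top ρ2 (Iic x))]
    rw [← ENNReal.ofReal_mul (by linarith), ← ENNReal.ofReal_mul hs0,
      ← ENNReal.ofReal_add (mul_nonneg (by linarith) ENNReal.toReal_nonneg)
        (mul_nonneg hs0 ENNReal.toReal_nonneg)]
    rw [ENNReal.ofReal_toReal (measure_ne_top ρ1 (Iic x)),
      ENNReal.ofReal_toReal (measure_ne_top ρ2 (Iic x))]
  have hσm : σ.measure = a • μN + b • μN1 := by
    refine hmix σ μN μN1 hμp hμp1 fun x => ?_
    rw [hσ x, ← hcdfμ x, ← hcdfμ1 x]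
    rfl
  have hσ'm : σ'.measure = a • νN + b • νN1 := by
    refine hmix σ' νN νN1 hνp hνp1 fun x => ?_
    rw [hσ' x, ← hcdfν x, ← hcdfν1 x]
    rfl
  set τ : Measure (ℝ × ℝ) := a • πN + b • πN1 with hτdef
  have hτfst : τ.map Prod.fst = σ.measure := by
    rw [hτdef, Measure.map_add _ _ measurable_fst, Measure.map_smul, Measure.map_smul,
      hfstN, hfstN1, hσm]
  have hτsnd : τ.map Prod.snd = σ'.measure := by
    rw [hτdef, Measure.map_add _ _ measurable_snd, Measure.map_smul, Measure.map_smul,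
      hsndN, hsndN1, hσ'm]
  refine le_trans (iInf₂_le τ ⟨hτfst, hτsnd⟩) ?_
  rw [hτdef, lintegral_add_measure, lintegral_smul_measure, lintegral_smul_measure]
  calc a * (∫⁻ q, ENNReal.ofReal (|q.1 - q.2| ^ p) ∂πN)
        + b * (∫⁻ q, ENNReal.ofReal (|q.1 - q.2| ^ p) ∂πN1)
      ≤ a * (∫⁻ q, ENNReal.ofReal (|q.1 - q.2| ^ p) ∂π₀)
        + b * (∫⁻ q, ENNReal.ofReal (|q.1 - q.2| ^ p) ∂π₀) :=
        add_le_add (mul_le_mul_right hcostN a) (mul_le_mul_right hcostN1 b)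
    _ = ∫⁻ q, ENNReal.ofReal (|q.1 - q.2| ^ p) ∂π₀ := by
        rw [← add_mul, hab, one_mul]
end

section
/- One-step tail moment estimate: with M = ‖f'‖_{L^∞((0,1))}, for v ∈ 𝒰, h ≥ 0, p ≥ 1, and R > hM, ∫_{|x|≥R} |x|^p d[T_h v]_x(x) ≤ (1 + hM/(R − hM))^p ∫_{|x|≥R−hM} |x|^p dv_x(x). -/
open MeasureTheory Filter Set
open scoped ENNReal

set_option linter.unusedVariables false
section aux
variable (v : StieltjesFunction ℝ)
  (h0 : Tendsto v atBot (nhds 0)) (h1 : Tendsto v atTop (nhds 1))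

include h0 in
lemma v_nonneg (x : ℝ) : 0 ≤ v x :=
  le_of_tendsto h0 (eventually_atBot.2 ⟨x, fun y hy => v.mono hy⟩)

include h1 in
lemma v_le_one (x : ℝ) : v x ≤ 1 :=
  ge_of_tendsto h1 (eventually_atTop.2 ⟨x, fun y hy => v.mono hy⟩)

include h1 in
lemma sSet_nonempty {w : ℝ} (hw : w < 1) : {x : ℝ | w < v x}.Nonempty :=
  (h1.eventually (eventually_gt_nhds hw)).exists

include h0 in
lemma sSet_bddBelow {w : ℝ} (hw : 0 < w) : BddBelow {x : ℝ | w < v x} := by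
  obtain ⟨x0, hx0⟩ := eventually_atBot.1 (h0.eventually (eventually_lt_nhds hw))
  exact ⟨x0, fun x hx => le_of_not_gt fun hlt => absurd hx (not_lt.2 (hx0 x hlt.le).le)⟩

include h0 h1 in
lemma genInv_monotoneOn_s15 : MonotoneOn (genInv v) (Ioo (0:ℝ) 1) := fun w hw w' hw' hww' =>
  csInf_le_csInf (sSet_bddBelow v h0 hw.1) (sSet_nonempty v h1 hw'.2)
    fun x hx => lt_of_le_of_lt hww' hx

include h0 in
lemma genInv_le_of_lt {w a : ℝ} (hw : 0 < w) (hwa : w < v a) : genInv v w ≤ a :=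
  csInf_le (sSet_bddBelow v h0 hw) hwa

include h1 in
lemma le_of_genInv_le_s15 {w a : ℝ} (hw : w < 1) (hle : genInv v w ≤ a) : w ≤ v a := by
  by_contra hcon
  push_neg at hcon
  have hmem : {y : ℝ | v y < w} ∈ nhdsWithin a (Ici a) :=
    v.right_continuous a (Iio_mem_nhds hcon)
  obtain ⟨u, hu, hIco⟩ := (mem_nhdsGE_iff_exists_Ico_subset).1 hmem
  set b := (a + u) / 2 with hb
  have hab : a < b := by simp only [hb]; linarith [hu.out]
  have hbu : b < u := by simp only [hb]; linarith [hu.out]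
  have hvb : v b < w := hIco ⟨hab.le, hbu⟩
  have hble : b ≤ genInv v w := by
    refine le_csInf (sSet_nonempty v h1 hw) fun x hx => ?_
    by_contra hxb
    push_neg at hxb
    exact absurd (lt_of_lt_of_le hx.out (v.mono hxb.le)) (not_lt.2 hvb.le)
  linarith

include h0 h1 in
lemma map_genInv_eq :
    (volume.restrict (Ioo (0:ℝ) 1)).map (genInv v) = v.measure := by
  have hGmeas : AEMeasurable (genInv v) (volume.restrict (Ioo (0:ℝ) 1)) :=
    aemeasurable_restrict_of_monotoneOn measurableSet_Ioo (genInv_monotoneOn_s15 v h0 h1)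
  have hIic : ∀ a : ℝ, ((volume.restrict (Ioo (0:ℝ) 1)).map (genInv v)) (Iic a)
      = ENNReal.ofReal (v a) := by
    intro a
    rw [Measure.map_apply_of_aemeasurable hGmeas measurableSet_Iic,
      Measure.restrict_apply' measurableSet_Ioo]
    have hm1 : v a ≤ 1 := v_le_one v h1 a
    have hsub1 : Ioo (0:ℝ) (v a) ⊆ genInv v ⁻¹' Iic a ∩ Ioo 0 1 := fun w hw =>
      ⟨genInv_le_of_lt v h0 hw.1 hw.2, hw.1, lt_of_lt_of_le hw.2 hm1⟩
    have hsub2 : genInv v ⁻¹' Iic a ∩ Ioo 0 1 ⊆ Ioc (0:ℝ) (v a) := fun w hw =>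
      ⟨hw.2.1, le_of_genInv_le_s15 v h1 hw.2.2 hw.1⟩
    refine le_antisymm ?_ ?_
    · calc volume (genInv v ⁻¹' Iic a ∩ Ioo 0 1) ≤ volume (Ioc (0:ℝ) (v a)) :=
            measure_mono hsub2
        _ = ENNReal.ofReal (v a) := by rw [Real.volume_Ioc, sub_zero]
    · calc ENNReal.ofReal (v a) = volume (Ioo (0:ℝ) (v a)) := by
            rw [Real.volume_Ioo, sub_zero]
        _ ≤ volume (genInv v ⁻¹' Iic a ∩ Ioo 0 1) := measure_mono hsub1
  have : IsFiniteMeasure ((volume.restrict (Ioo (0:ℝ) 1)).map (genInv v)) := by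
    constructor
    rw [Measure.map_apply_of_aemeasurable hGmeas MeasurableSet.univ, preimage_univ,
      Measure.restrict_apply_univ, Real.volume_Ioo]
    simp
  refine Measure.ext_of_Iic _ _ fun a => ?_
  rw [hIic a, v.measure_Iic h0 a, sub_zero]

end aux

/-- one-step tail moment estimate: with `M` bounding `f'` on
`(0,1)`, for `v ∈ 𝒰`, `h ≥ 0`, `p ≥ 1`, and `R > hM`,
`∫_{|x|≥R} |x|^p d[T_h v]_x ≤ (1 + hM/(R−hM))^p ∫_{|x|≥R−hM} |x|^p dv_x`,
where `[T_h v]_x` is the law of `w ↦ v⁻¹(w) + h f'(w)` on `((0,1), Leb)`. -/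
theorem stmt_15 (f' : ℝ → ℝ) (hf' : Measurable f') (M h p R : ℝ)
    (hM : ∀ w ∈ Set.Ioo (0:ℝ) 1, |f' w| ≤ M)
    (hh : 0 ≤ h) (hp : 1 ≤ p) (hR : h * M < R)
    (v : StieltjesFunction ℝ)
    (h0 : Tendsto v atBot (nhds 0)) (h1 : Tendsto v atTop (nhds 1)) :
    ∫⁻ x in {x : ℝ | R ≤ |x|}, ENNReal.ofReal (|x| ^ p)
        ∂((volume.restrict (Set.Ioo (0:ℝ) 1)).map
          fun w => genInv (fun y => v y) w + h * f' w) ≤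
      ENNReal.ofReal ((1 + h * M / (R - h * M)) ^ p) *
        ∫⁻ x in {x : ℝ | R - h * M ≤ |x|},
          ENNReal.ofReal (|x| ^ p) ∂v.measure := by
  have hMnn : 0 ≤ M := le_trans (abs_nonneg _) (hM (1/2) ⟨by norm_num, by norm_num⟩)
  have hhM : 0 ≤ h * M := mul_nonneg hh hMnn
  have hRpos : 0 < R - h * M := sub_pos.2 hR
  set c : ℝ := h * M / (R - h * M) with hc
  have hcnn : 0 ≤ c := div_nonneg hhM hRpos.le
  set μ := volume.restrict (Set.Ioo (0:ℝ) 1) with hμ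
  set G : ℝ → ℝ := genInv (fun y => v y) with hG
  set g : ℝ → ℝ := fun w => G w + h * f' w with hgdef
  have hGmeas : AEMeasurable G μ :=
    aemeasurable_restrict_of_monotoneOn measurableSet_Ioo (genInv_monotoneOn_s15 v h0 h1)
  have hgmeas : AEMeasurable g μ := hGmeas.add (hf'.const_mul h).aemeasurable
  set F : ℝ → ℝ≥0∞ := fun x => ENNReal.ofReal (|x| ^ p) with hF
  have hFmeas : Measurable F := by
    apply Measurable.ennreal_ofReal
    exact (continuous_abs.rpow_const fun x => Or.inr (by linarith)).measurable
  have hs : MeasurableSet {x : ℝ | R ≤ |x|} :=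
    measurableSet_le measurable_const measurable_id.abs
  have hs' : MeasurableSet {x : ℝ | R - h * M ≤ |x|} :=
    measurableSet_le measurable_const measurable_id.abs
  set ψ : ℝ → ℝ≥0∞ := ({x : ℝ | R - h * M ≤ |x|}).indicator F with hψ
  have hψmeas : Measurable ψ := hFmeas.indicator hs'
  have key : ∀ w ∈ Set.Ioo (0:ℝ) 1,
      ({x : ℝ | R ≤ |x|}).indicator F (g w) ≤ ENNReal.ofReal ((1 + c) ^ p) * ψ (G w) := by
    intro w hw
    by_cases hgw : R ≤ |g w|
    · have habs : |g w| ≤ |G w| + h * M := by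
        calc |g w| ≤ |G w| + |h * f' w| := abs_add_le _ _
          _ ≤ |G w| + h * M := by
              have : |h * f' w| ≤ h * M := by
                rw [abs_mul, abs_of_nonneg hh]
                exact mul_le_mul_of_nonneg_left (hM w hw) hh
              linarith
      have hGlb : R - h * M ≤ |G w| := by linarith
      have hle : |g w| ≤ (1 + c) * |G w| := by
        have h2 : h * M ≤ c * |G w| := by
          have : h * M = c * (R - h * M) := by
            rw [hc, div_mul_cancel₀ _ hRpos.ne']
          rw [this]
          exact mul_le_mul_of_nonneg_left hGlb hcnn
        calc |g w| ≤ |G w| + h * M := habs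
          _ ≤ |G w| + c * |G w| := by linarith
          _ = (1 + c) * |G w| := by ring
      have e1 : ({x : ℝ | R ≤ |x|}).indicator F (g w) = F (g w) :=
        Set.indicator_of_mem (show g w ∈ {x : ℝ | R ≤ |x|} from hgw) F
      have e2 : ψ (G w) = F (G w) := Set.indicator_of_mem (show G w ∈ {x : ℝ | R - h * M ≤ |x|} from hGlb) F
      rw [e1, e2]
      have hrp : |g w| ^ p ≤ (1 + c) ^ p * |G w| ^ p := by
        rw [← Real.mul_rpow (by linarith) (abs_nonneg _)]
        exact Real.rpow_le_rpow (abs_nonneg _) hle (by linarith)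
      calc F (g w) ≤ ENNReal.ofReal ((1 + c) ^ p * |G w| ^ p) := ENNReal.ofReal_le_ofReal hrp
        _ = ENNReal.ofReal ((1 + c) ^ p) * F (G w) :=
            ENNReal.ofReal_mul (by positivity)
    · have e1 : ({x : ℝ | R ≤ |x|}).indicator F (g w) = 0 :=
        Set.indicator_of_notMem (show g w ∉ {x : ℝ | R ≤ |x|} from hgw) F
      rw [e1]
      exact zero_le
  calc ∫⁻ x in {x : ℝ | R ≤ |x|}, F x ∂(μ.map g)
      = ∫⁻ x, ({x : ℝ | R ≤ |x|}).indicator F x ∂(μ.map g) := (lintegral_indicator hs _).symm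
    _ = ∫⁻ w, ({x : ℝ | R ≤ |x|}).indicator F (g w) ∂μ :=
        lintegral_map' (hFmeas.indicator hs).aemeasurable hgmeas
    _ ≤ ∫⁻ w, ENNReal.ofReal ((1 + c) ^ p) * ψ (G w) ∂μ := by
        refine lintegral_mono_ae ?_
        filter_upwards [ae_restrict_mem measurableSet_Ioo] with w hw using key w hw
    _ = ENNReal.ofReal ((1 + c) ^ p) * ∫⁻ w, ψ (G w) ∂μ :=
        lintegral_const_mul' _ _ ENNReal.ofReal_ne_top
    _ = ENNReal.ofReal ((1 + c) ^ p) * ∫⁻ x, ψ x ∂(μ.map G) := by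
        rw [lintegral_map' hψmeas.aemeasurable hGmeas]
    _ = ENNReal.ofReal ((1 + c) ^ p) * ∫⁻ x in {x : ℝ | R - h * M ≤ |x|}, F x ∂v.measure := by
        rw [hμ, hG, map_genInv_eq v h0 h1, lintegral_indicator hs']
end

section
/- Iterated tail estimate: with M = ‖f'‖_{L^∞((0,1))}, for v ∈ 𝒰, h ≥ 0, N ∈ ℕ, p ≥ 1, and R > N h M, ∫_{|x|≥R} |x|^p d[T_h^N v]_x(x) ≤ exp( p N h M / (R − N h M) ) ∫_{|x|≥R−NhM} |x|^p dv_x(x). -/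
open MeasureTheory Filter Set
open scoped ENNReal

namespace Stmt16

/-- Lebesgue measure restricted to `(0,1)`. -/
noncomputable def leb01 : Measure ℝ := volume.restrict (Set.Ioo 0 1)

instance : IsProbabilityMeasure leb01 :=
  ⟨by simp [leb01, Real.volume_Ioo]⟩

/-- The CDF of a measure. -/
noncomputable def cdf (μ : Measure ℝ) (x : ℝ) : ℝ := (μ (Set.Iic x)).toReal

section CDF

variable (μ : Measure ℝ) [IsProbabilityMeasure μ]

lemma cdf_mono : Monotone (cdf μ) := fun a b hab =>
  ENNReal.toReal_mono (measure_ne_top _ _) (measure_mono (Set.Iic_subset_Iic.2 hab))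

lemma cdf_nonneg (x : ℝ) : 0 ≤ cdf μ x := ENNReal.toReal_nonneg

lemma cdf_le_one (x : ℝ) : cdf μ x ≤ 1 := by
  have h1 := ENNReal.toReal_mono ENNReal.one_ne_top (prob_le_one (μ := μ) (s := Set.Iic x))
  simpa [cdf] using h1

lemma tendsto_cdf_atTop : Tendsto (cdf μ) atTop (nhds 1) := by
  have h := tendsto_measure_Iic_atTop μ
  have h2 : Tendsto (fun x => (μ (Set.Iic x)).toReal) atTop (nhds (μ Set.univ).toReal) :=
    (ENNReal.tendsto_toReal (measure_ne_top μ _)).comp h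
  exact (by simpa [measure_univ] using h2 : Tendsto (fun x => (μ (Set.Iic x)).toReal) atTop (nhds 1))

lemma tendsto_cdf_atBot : Tendsto (cdf μ) atBot (nhds 0) := by
  have hm : Monotone (fun x : ℝ => Set.Iic x) := fun a b hab => Set.Iic_subset_Iic.2 hab
  have h := tendsto_measure_iInter_atBot (μ := μ) (s := fun x : ℝ => Set.Iic x)
    (fun x => measurableSet_Iic.nullMeasurableSet) hm ⟨0, measure_ne_top μ _⟩
  have hempty : (⋂ x : ℝ, Set.Iic x) = (∅ : Set ℝ) := by
    ext z
    simp only [Set.mem_iInter, Set.mem_Iic, Set.mem_empty_iff_false, iff_false, not_forall,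
      not_le]
    exact ⟨z - 1, by linarith⟩
  rw [hempty] at h
  simp only [measure_empty] at h
  have h2 : Tendsto (fun x => (μ (Set.Iic x)).toReal) atBot (nhds (0 : ℝ≥0∞).toReal) :=
    (ENNReal.tendsto_toReal (by simp)).comp h
  exact (by simpa using h2 : Tendsto (fun x => (μ (Set.Iic x)).toReal) atBot (nhds 0))

lemma exists_cdf_gt {w : ℝ} (hw : w < 1) : ∃ y, w < cdf μ y := by
  by_contra hcon
  push_neg at hcon
  exact absurd (le_of_tendsto' (tendsto_cdf_atTop μ) hcon) (not_le.2 hw)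

lemma exists_cdf_lt {w : ℝ} (hw : 0 < w) : ∃ y, cdf μ y < w := by
  by_contra hcon
  push_neg at hcon
  exact absurd (ge_of_tendsto' (tendsto_cdf_atBot μ) hcon) (not_le.2 hw)

/-- Right-continuity of the CDF, in inequality form. -/
lemma cdf_right_le {w x : ℝ} (hw : 0 ≤ w) (hx : ∀ y, x < y → w < cdf μ y) : w ≤ cdf μ x := by
  have hseq : Set.Iic x = ⋂ n : ℕ, Set.Iic (x + 1 / (n + 1)) := by
    ext z
    simp only [Set.mem_Iic, Set.mem_iInter]
    constructor
    · intro hz n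
      have hpos : (0:ℝ) < 1 / ((n:ℝ) + 1) := by positivity
      linarith
    · intro hz
      by_contra hzx
      push_neg at hzx
      obtain ⟨n, hn⟩ := exists_nat_one_div_lt (sub_pos.2 hzx)
      have := hz n
      linarith
  have hanti : Antitone (fun n : ℕ => Set.Iic (x + 1 / ((n:ℝ) + 1))) := by
    intro a b hab
    apply Set.Iic_subset_Iic.2
    have : (1:ℝ) / ((b:ℝ) + 1) ≤ 1 / ((a:ℝ) + 1) := by
      apply one_div_le_one_div_of_le (by positivity)
      linarith [(Nat.cast_le (α := ℝ)).2 hab]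
    linarith
  have hm : μ (Set.Iic x) = ⨅ n : ℕ, μ (Set.Iic (x + 1 / ((n:ℝ) + 1))) := by
    rw [hseq]
    exact hanti.measure_iInter (fun n => measurableSet_Iic.nullMeasurableSet)
      ⟨0, measure_ne_top μ _⟩
  have hle : ENNReal.ofReal w ≤ μ (Set.Iic x) := by
    rw [hm]
    refine le_iInf fun n => ?_
    have hlt : w < cdf μ (x + 1 / ((n:ℝ) + 1)) := by
      refine hx _ ?_
      have hpos : (0:ℝ) < 1 / ((n:ℝ) + 1) := by positivity
      linarith
    calc ENNReal.ofReal w ≤ ENNReal.ofReal (cdf μ (x + 1 / ((n:ℝ) + 1))) :=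
          ENNReal.ofReal_le_ofReal hlt.le
      _ = μ (Set.Iic (x + 1 / ((n:ℝ) + 1))) := ENNReal.ofReal_toReal (measure_ne_top μ _)
  calc w = (ENNReal.ofReal w).toReal := (ENNReal.toReal_ofReal hw).symm
    _ ≤ (μ (Set.Iic x)).toReal := ENNReal.toReal_mono (measure_ne_top μ _) hle

lemma genInv_le_iff {w x : ℝ} (hw : w ∈ Set.Ioo (0:ℝ) 1) :
    genInv (cdf μ) w ≤ x ↔ ∀ y, x < y → w < cdf μ y := by
  obtain ⟨y0, hy0⟩ := exists_cdf_gt μ hw.2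
  obtain ⟨y1, hy1⟩ := exists_cdf_lt μ hw.1
  have hne : {z : ℝ | w < cdf μ z}.Nonempty := ⟨y0, hy0⟩
  have hbdd : BddBelow {z : ℝ | w < cdf μ z} := by
    refine ⟨y1, fun z hz => ?_⟩
    by_contra hzy
    push_neg at hzy
    exact absurd (lt_of_lt_of_le hz (cdf_mono μ hzy.le)) (not_lt.2 hy1.le)
  constructor
  · intro hle y hxy
    obtain ⟨z, hz, hzy⟩ := (csInf_lt_iff hbdd hne).1 (lt_of_le_of_lt hle hxy)
    exact lt_of_lt_of_le hz (cdf_mono μ hzy.le)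
  · intro hy
    by_contra hc
    push_neg at hc
    obtain ⟨y, h1, h2⟩ := exists_between hc
    exact absurd (csInf_le hbdd (hy y h1)) (not_le.2 h2)

lemma Iio_subset_genInv_le (x : ℝ) :
    Set.Iio (cdf μ x) ∩ Set.Ioo 0 1 ⊆ {w : ℝ | genInv (cdf μ) w ≤ x} := by
  rintro w ⟨hw1, hw2⟩
  exact (genInv_le_iff μ hw2).2 fun y hy => lt_of_lt_of_le hw1 (cdf_mono μ hy.le)

lemma genInv_le_subset_Iic (x : ℝ) :
    {w : ℝ | genInv (cdf μ) w ≤ x} ∩ Set.Ioo 0 1 ⊆ Set.Iic (cdf μ x) := by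
  rintro w ⟨hw1, hw2⟩
  exact cdf_right_le μ hw2.1.le ((genInv_le_iff μ hw2).1 hw1)

lemma genInv_cdf_of_neg {w : ℝ} (hw : w < 0) : genInv (cdf μ) w = 0 := by
  have huniv : {x : ℝ | w < cdf μ x} = Set.univ :=
    Set.eq_univ_of_forall fun x => lt_of_lt_of_le hw (cdf_nonneg μ x)
  have hnb : ¬BddBelow (Set.univ : Set ℝ) := by
    rintro ⟨b, hb⟩
    have := hb (Set.mem_univ (b - 1))
    linarith
  rw [genInv, huniv, csInf_of_not_bddBelow hnb, Real.sInf_empty]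

lemma genInv_cdf_of_ge_one {w : ℝ} (hw : 1 ≤ w) : genInv (cdf μ) w = 0 := by
  have hempty : {x : ℝ | w < cdf μ x} = (∅ : Set ℝ) :=
    Set.eq_empty_of_forall_notMem fun x hx =>
      absurd (lt_of_le_of_lt hw hx) (not_lt.2 (cdf_le_one μ x))
  rw [genInv, hempty, Real.sInf_empty]

lemma measurable_genInv_cdf : Measurable (genInv (cdf μ)) := by
  apply measurable_of_Iic
  intro x
  set P := genInv (cdf μ) ⁻¹' Set.Iic x with hP
  set c := cdf μ x with hc
  have hdecomp : P = (P ∩ Set.Iio 0) ∪ (P ∩ {0}) ∪ (P ∩ Set.Ioo 0 1) ∪ (P ∩ Set.Ici 1) := by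
    ext w
    constructor
    · intro hw
      rcases lt_trichotomy w 0 with h | h | h
      · exact Or.inl (Or.inl (Or.inl ⟨hw, h⟩))
      · exact Or.inl (Or.inl (Or.inr ⟨hw, by simp [h]⟩))
      · rcases lt_or_ge w 1 with h1 | h1
        · exact Or.inl (Or.inr ⟨hw, h, h1⟩)
        · exact Or.inr ⟨hw, h1⟩
    · rintro (((⟨hw, -⟩ | ⟨hw, -⟩) | ⟨hw, -⟩) | ⟨hw, -⟩) <;> exact hw
  have h1 : MeasurableSet (P ∩ Set.Iio 0) := by
    by_cases hx : (0:ℝ) ≤ x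
    · have : P ∩ Set.Iio 0 = Set.Iio 0 := by
        refine Set.inter_eq_self_of_subset_right ?_
        intro w hw
        simp only [hP, Set.mem_preimage, Set.mem_Iic]
        rw [genInv_cdf_of_neg μ hw]
        exact hx
      rw [this]; exact measurableSet_Iio
    · have : P ∩ Set.Iio 0 = ∅ := by
        apply Set.eq_empty_of_forall_notMem
        rintro w ⟨hw1, hw2⟩
        simp only [hP, Set.mem_preimage, Set.mem_Iic] at hw1
        rw [genInv_cdf_of_neg μ hw2] at hw1
        exact hx hw1
      rw [this]; exact MeasurableSet.empty
  have h2 : MeasurableSet (P ∩ {0}) :=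
    (Set.Subsingleton.inter_singleton (s := P) (a := (0:ℝ))).measurableSet
  have h4 : MeasurableSet (P ∩ Set.Ici 1) := by
    by_cases hx : (0:ℝ) ≤ x
    · have : P ∩ Set.Ici 1 = Set.Ici 1 := by
        refine Set.inter_eq_self_of_subset_right ?_
        intro w hw
        simp only [hP, Set.mem_preimage, Set.mem_Iic]
        rw [genInv_cdf_of_ge_one μ hw]
        exact hx
      rw [this]; exact measurableSet_Ici
    · have : P ∩ Set.Ici 1 = ∅ := by
        apply Set.eq_empty_of_forall_notMem
        rintro w ⟨hw1, hw2⟩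
        simp only [hP, Set.mem_preimage, Set.mem_Iic] at hw1
        rw [genInv_cdf_of_ge_one μ hw2] at hw1
        exact hx hw1
      rw [this]; exact MeasurableSet.empty
  have h3 : MeasurableSet (P ∩ Set.Ioo 0 1) := by
    have heq : P ∩ Set.Ioo 0 1 =
        (Set.Iio c ∩ Set.Ioo 0 1) ∪ ((P ∩ Set.Ioo 0 1) ∩ Set.Ici c) := by
      ext w
      constructor
      · intro hw
        rcases lt_or_ge w c with h | h
        · exact Or.inl ⟨h, hw.2⟩
        · exact Or.inr ⟨hw, h⟩
      · rintro (⟨hw1, hw2⟩ | ⟨hw, -⟩)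
        · exact ⟨Iio_subset_genInv_le μ x ⟨hw1, hw2⟩, hw2⟩
        · exact hw
    have hsing : ((P ∩ Set.Ioo 0 1) ∩ Set.Ici c).Subsingleton := by
      intro a ha b hb
      have ha' : a ≤ c := genInv_le_subset_Iic μ x ⟨ha.1.1, ha.1.2⟩
      have hb' : b ≤ c := genInv_le_subset_Iic μ x ⟨hb.1.1, hb.1.2⟩
      have hae : a = c := le_antisymm ha' ha.2
      have hbe : b = c := le_antisymm hb' hb.2
      rw [hae, hbe]
    rw [heq]
    exact (measurableSet_Iio.inter measurableSet_Ioo).union hsing.measurableSet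
  rw [hdecomp]
  exact ((h1.union h2).union h3).union h4

lemma leb01_genInv_Iic (x : ℝ) : leb01 (genInv (cdf μ) ⁻¹' Set.Iic x) = μ (Set.Iic x) := by
  have hmeas := measurable_genInv_cdf μ
  rw [leb01, Measure.restrict_apply (hmeas measurableSet_Iic)]
  set c := cdf μ x with hc
  have h0c : 0 ≤ c := cdf_nonneg μ x
  have hc1 : c ≤ 1 := cdf_le_one μ x
  have hsub1 : Set.Ioo 0 c ⊆ genInv (cdf μ) ⁻¹' Set.Iic x ∩ Set.Ioo 0 1 := by
    intro w hw
    have hw01 : w ∈ Set.Ioo (0:ℝ) 1 := ⟨hw.1, lt_of_lt_of_le hw.2 hc1⟩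
    exact ⟨Iio_subset_genInv_le μ x ⟨hw.2, hw01⟩, hw01⟩
  have hsub2 : genInv (cdf μ) ⁻¹' Set.Iic x ∩ Set.Ioo 0 1 ⊆ Set.Ioc 0 c := by
    rintro w ⟨hw1, hw2⟩
    exact ⟨hw2.1, genInv_le_subset_Iic μ x ⟨hw1, hw2⟩⟩
  have hv1 : volume (Set.Ioo (0:ℝ) c) = ENNReal.ofReal c := by
    rw [Real.volume_Ioo]; simp
  have hv2 : volume (Set.Ioc (0:ℝ) c) = ENNReal.ofReal c := by
    rw [Real.volume_Ioc]; simp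
  have hle1 : ENNReal.ofReal c ≤ volume (genInv (cdf μ) ⁻¹' Set.Iic x ∩ Set.Ioo 0 1) :=
    hv1 ▸ measure_mono hsub1
  have hle2 : volume (genInv (cdf μ) ⁻¹' Set.Iic x ∩ Set.Ioo 0 1) ≤ ENNReal.ofReal c :=
    le_trans (measure_mono hsub2) hv2.le
  rw [le_antisymm hle2 hle1, hc, cdf, ENNReal.ofReal_toReal (measure_ne_top μ _)]

lemma map_genInv_cdf : Measure.map (genInv (cdf μ)) leb01 = μ := by
  refine MeasureTheory.Measure.ext_of_Iic (Measure.map (genInv (cdf μ)) leb01) μ fun a => ?_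
  rw [Measure.map_apply (measurable_genInv_cdf μ) measurableSet_Iic, leb01_genInv_Iic]

end CDF


/-- The iterated measures: push forward along the transport maps. -/
noncomputable def itMeas (f' : ℝ → ℝ) (h : ℝ) (μ0 : Measure ℝ) : ℕ → Measure ℝ
  | 0 => μ0
  | (n+1) => Measure.map (fun w => genInv (cdf (itMeas f' h μ0 n)) w + h * f' w) leb01

lemma measurable_step (f' : ℝ → ℝ) (hf' : Measurable f') (h : ℝ) (μ : Measure ℝ)
    [IsProbabilityMeasure μ] :
    Measurable (fun w => genInv (cdf μ) w + h * f' w) :=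
  (measurable_genInv_cdf μ).add (measurable_const.mul hf')

lemma itMeas_prob (f' : ℝ → ℝ) (hf' : Measurable f') (h : ℝ) (μ0 : Measure ℝ)
    [IsProbabilityMeasure μ0] (n : ℕ) : IsProbabilityMeasure (itMeas f' h μ0 n) := by
  induction n with
  | zero => exact ‹_›
  | succ n ih =>
    haveI := ih
    exact Measure.isProbabilityMeasure_map (measurable_step f' hf' h _).aemeasurable

lemma Th_cdf (f' : ℝ → ℝ) (hf' : Measurable f') (h : ℝ) (μ : Measure ℝ)
    [IsProbabilityMeasure μ] (x : ℝ) :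
    Th f' h (cdf μ) x
      = cdf (Measure.map (fun w => genInv (cdf μ) w + h * f' w) leb01) x := by
  have hg := measurable_step f' hf' h μ
  rw [Th, cdf, Measure.map_apply hg measurableSet_Iic, leb01,
    Measure.restrict_apply (hg measurableSet_Iic)]
  congr 2
  ext w
  simp only [Set.mem_setOf_eq, Set.mem_inter_iff, Set.mem_preimage, Set.mem_Iic]
  tauto

lemma step_tail (f' : ℝ → ℝ) (hf' : Measurable f') (M h p S : ℝ)
    (hM : ∀ w ∈ Set.Ioo (0:ℝ) 1, |f' w| ≤ M) (hh : 0 ≤ h) (hp : 0 ≤ p)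
    (hS : h * M < S)
    (μ : Measure ℝ) [IsProbabilityMeasure μ] :
    ∫⁻ x in {x : ℝ | S ≤ |x|}, ENNReal.ofReal (|x| ^ p)
        ∂(Measure.map (fun w => genInv (cdf μ) w + h * f' w) leb01) ≤
      ENNReal.ofReal ((S / (S - h * M)) ^ p) *
        ∫⁻ x in {x : ℝ | S - h * M ≤ |x|}, ENNReal.ofReal (|x| ^ p) ∂μ := by
  have hM0 : 0 ≤ h * M :=
    mul_nonneg hh ((abs_nonneg _).trans (hM (1/2) (by norm_num)))
  have hS0 : 0 < S - h * M := sub_pos.2 hS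
  have hSpos : 0 < S := lt_of_le_of_lt hM0 hS
  set c : ℝ := S / (S - h * M) with hcdef
  have hc0 : 0 ≤ c := div_nonneg hSpos.le hS0.le
  set q : ℝ → ℝ := genInv (cdf μ) with hqdef
  have hq : Measurable q := measurable_genInv_cdf μ
  have hg : Measurable (fun w => q w + h * f' w) := hq.add (measurable_const.mul hf')
  have hW : Measurable (fun x : ℝ => ENNReal.ofReal (|x| ^ p)) :=
    (((Real.continuous_rpow_const hp).comp continuous_abs).measurable).ennreal_ofReal
  have hA : MeasurableSet {x : ℝ | S ≤ |x|} := measurableSet_le measurable_const measurable_abs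
  have hA' : MeasurableSet {x : ℝ | S - h * M ≤ |x|} :=
    measurableSet_le measurable_const measurable_abs
  rw [setLIntegral_map hA hW hg]
  have hrhs : ∫⁻ x in {x : ℝ | S - h * M ≤ |x|}, ENNReal.ofReal (|x| ^ p) ∂μ
      = ∫⁻ w in q ⁻¹' {x : ℝ | S - h * M ≤ |x|}, ENNReal.ofReal (|q w| ^ p) ∂leb01 := by
    conv_lhs => rw [← map_genInv_cdf μ]
    rw [setLIntegral_map hA' hW hq]
  rw [hrhs, ← lintegral_const_mul' _ _ ENNReal.ofReal_ne_top,
    ← lintegral_indicator (hg hA), ← lintegral_indicator (hq hA')]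
  have hae : ∀ᵐ w ∂leb01, w ∈ Set.Ioo (0:ℝ) 1 := ae_restrict_mem measurableSet_Ioo
  refine lintegral_mono_ae (hae.mono fun w hw => ?_)
  by_cases hwA : S ≤ |q w + h * f' w|
  · have hfw : |f' w| ≤ M := hM w hw
    have hhf : |h * f' w| ≤ h * M := by
      rw [abs_mul, abs_of_nonneg hh]
      exact mul_le_mul_of_nonneg_left hfw hh
    have habs : |q w + h * f' w| ≤ |q w| + h * M :=
      le_trans (abs_add_le _ _) (by linarith)
    have hqw : S - h * M ≤ |q w| := by
      have h2 : |q w| = |(q w + h * f' w) - h * f' w| := by ring_nf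
      have h3 : |(q w + h * f' w) - h * f' w| ≥ |q w + h * f' w| - |h * f' w| :=
        abs_sub_abs_le_abs_sub _ _
      linarith [h2 ▸ h3]
    have hmemA : w ∈ (fun w => q w + h * f' w) ⁻¹' {x : ℝ | S ≤ |x|} := hwA
    have hmemA' : w ∈ q ⁻¹' {x : ℝ | S - h * M ≤ |x|} := hqw
    rw [Set.indicator_of_mem hmemA, Set.indicator_of_mem hmemA']
    have hbound : |q w + h * f' w| ≤ c * |q w| := by
      rw [hcdef, div_mul_eq_mul_div, le_div_iff₀ hS0]
      nlinarith [mul_le_mul_of_nonneg_right habs hS0.le,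
        mul_nonneg hM0 (sub_nonneg.2 hqw)]
    calc ENNReal.ofReal (|q w + h * f' w| ^ p)
        ≤ ENNReal.ofReal ((c * |q w|) ^ p) :=
          ENNReal.ofReal_le_ofReal (Real.rpow_le_rpow (abs_nonneg _) hbound hp)
      _ = ENNReal.ofReal (c ^ p * |q w| ^ p) := by rw [Real.mul_rpow hc0 (abs_nonneg _)]
      _ = ENNReal.ofReal (c ^ p) * ENNReal.ofReal (|q w| ^ p) :=
          ENNReal.ofReal_mul (Real.rpow_nonneg hc0 p)
  · have hmemA : w ∉ (fun w => q w + h * f' w) ⁻¹' {x : ℝ | S ≤ |x|} := hwA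
    rw [Set.indicator_of_notMem hmemA]
    exact zero_le

lemma iter_tail (f' : ℝ → ℝ) (hf' : Measurable f') (M h p : ℝ)
    (hM : ∀ w ∈ Set.Ioo (0:ℝ) 1, |f' w| ≤ M) (hh : 0 ≤ h) (hp : 0 ≤ p)
    (μ0 : Measure ℝ) [IsProbabilityMeasure μ0] :
    ∀ (n : ℕ) (S : ℝ), (n : ℝ) * (h * M) < S →
      ∫⁻ x in {x : ℝ | S ≤ |x|}, ENNReal.ofReal (|x| ^ p) ∂(itMeas f' h μ0 n) ≤
        ENNReal.ofReal ((S / (S - (n : ℝ) * (h * M))) ^ p) *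
          ∫⁻ x in {x : ℝ | S - (n : ℝ) * (h * M) ≤ |x|}, ENNReal.ofReal (|x| ^ p) ∂μ0 := by
  have hM0 : 0 ≤ h * M :=
    mul_nonneg hh ((abs_nonneg _).trans (hM (1/2) (by norm_num)))
  intro n
  induction n with
  | zero =>
    intro S hS
    have hS0 : 0 < S := by simpa using hS
    have h00 : itMeas f' h μ0 0 = μ0 := rfl
    rw [h00]
    simp only [Nat.cast_zero, zero_mul, sub_zero]
    rw [div_self (ne_of_gt hS0), Real.one_rpow, ENNReal.ofReal_one, one_mul]
  | succ n ih =>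
    intro S hS
    haveI := itMeas_prob f' hf' h μ0 n
    have hcast : ((n+1 : ℕ) : ℝ) = (n : ℝ) + 1 := by push_cast; ring
    have hn0 : (0:ℝ) ≤ (n : ℝ) := Nat.cast_nonneg n
    have hS' : h * M < S := by rw [hcast] at hS; nlinarith
    have hnS : (n : ℝ) * (h * M) < S - h * M := by rw [hcast] at hS; nlinarith
    have hSh : 0 < S - h * M := by nlinarith
    have hd : 0 < S - ((n+1 : ℕ) : ℝ) * (h * M) := sub_pos.2 hS
    have hstep := step_tail f' hf' M h p S hM hh hp hS' (itMeas f' h μ0 n)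
    have hih := ih (S - h * M) hnS
    have hset : S - h * M - (n : ℝ) * (h * M) = S - ((n+1 : ℕ) : ℝ) * (h * M) := by
      rw [hcast]; ring
    rw [hset] at hih
    have hne : itMeas f' h μ0 (n+1)
        = Measure.map (fun w => genInv (cdf (itMeas f' h μ0 n)) w + h * f' w) leb01 := rfl
    rw [hne]
    refine le_trans hstep ?_
    refine le_trans (mul_le_mul_right hih _) ?_
    have ha0 : 0 ≤ S / (S - h * M) := div_nonneg (by nlinarith) hSh.le
    have hb0 : 0 ≤ (S - h * M) / (S - ((n+1 : ℕ) : ℝ) * (h * M)) := div_nonneg hSh.le hd.le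
    rw [← mul_assoc, ← ENNReal.ofReal_mul (Real.rpow_nonneg ha0 p),
      ← Real.mul_rpow ha0 hb0]
    have hprod : S / (S - h * M) * ((S - h * M) / (S - ((n+1 : ℕ) : ℝ) * (h * M)))
        = S / (S - ((n+1 : ℕ) : ℝ) * (h * M)) := by
      rw [div_mul_div_comm, mul_comm S (S - h * M), mul_div_mul_left _ _ hSh.ne']
    rw [hprod]

end Stmt16

/-- iterated tail estimate: with `M` bounding `f'` on `(0,1)`,
for `v ∈ 𝒰`, `h ≥ 0`, `N ∈ ℕ`, `p ≥ 1` and `R > NhM`,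
`∫_{|x|≥R} |x|^p d[T_h^N v]_x
  ≤ exp(pNhM/(R−NhM)) ∫_{|x|≥R−NhM} |x|^p dv_x`,
where the Stieltjes measure of `T_h^N v` is expressed via an arbitrary
Stieltjes function `σ` agreeing with it. -/
theorem stmt_16 (f' : ℝ → ℝ) (hf' : Measurable f') (M h p R : ℝ) (N : ℕ)
    (hM : ∀ w ∈ Set.Ioo (0:ℝ) 1, |f' w| ≤ M)
    (hh : 0 ≤ h) (hp : 1 ≤ p) (hR : N * (h * M) < R)
    (v : StieltjesFunction ℝ)
    (h0 : Tendsto v atBot (nhds 0)) (h1 : Tendsto v atTop (nhds 1))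
    (σ : StieltjesFunction ℝ)
    (hσ : ∀ x, σ x = (Th f' h)^[N] (fun y => v y) x) :
    ∫⁻ x in {x : ℝ | R ≤ |x|}, ENNReal.ofReal (|x| ^ p) ∂σ.measure ≤
      ENNReal.ofReal (Real.exp (p * (N * (h * M)) / (R - N * (h * M)))) *
        ∫⁻ x in {x : ℝ | R - N * (h * M) ≤ |x|},
          ENNReal.ofReal (|x| ^ p) ∂v.measure := by
  classical
  have hM0 : 0 ≤ h * M :=
    mul_nonneg hh ((abs_nonneg _).trans (hM (1/2) (by norm_num)))
  haveI : IsProbabilityMeasure v.measure := v.isProbabilityMeasure h0 h1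
  have hvnonneg : ∀ x, 0 ≤ v x := by
    intro x
    refine le_of_tendsto h0 ?_
    filter_upwards [eventually_le_atBot x] with y hy
    exact v.mono hy
  have hbase : ∀ x, v x = Stmt16.cdf v.measure x := by
    intro x
    rw [Stmt16.cdf, v.measure_Iic h0, sub_zero, ENNReal.toReal_ofReal (hvnonneg x)]
  have hcdf : ∀ n : ℕ,
      (Th f' h)^[n] (fun y => v y) = Stmt16.cdf (Stmt16.itMeas f' h v.measure n) := by
    intro n
    induction n with
    | zero => funext x; exact hbase x
    | succ n ih =>
      haveI := Stmt16.itMeas_prob f' hf' h v.measure n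
      funext x
      rw [Function.iterate_succ_apply', ih]
      exact Stmt16.Th_cdf f' hf' h (Stmt16.itMeas f' h v.measure n) x
  haveI hN := Stmt16.itMeas_prob f' hf' h v.measure N
  have hσc : ∀ x, σ x = Stmt16.cdf (Stmt16.itMeas f' h v.measure N) x := by
    intro x; rw [hσ x, hcdf N]
  have hσfun : ⇑σ = Stmt16.cdf (Stmt16.itMeas f' h v.measure N) := funext hσc
  have hσbot : Tendsto σ atBot (nhds 0) := by
    rw [hσfun]; exact Stmt16.tendsto_cdf_atBot _
  have hσtop : Tendsto σ atTop (nhds 1) := by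
    rw [hσfun]; exact Stmt16.tendsto_cdf_atTop _
  haveI hfin : IsFiniteMeasure σ.measure := σ.isFiniteMeasure hσbot hσtop
  have hσeq : σ.measure = Stmt16.itMeas f' h v.measure N := by
    refine MeasureTheory.Measure.ext_of_Iic σ.measure _ fun a => ?_
    rw [σ.measure_Iic hσbot, hσc a, sub_zero, Stmt16.cdf,
      ENNReal.ofReal_toReal (measure_ne_top _ _)]
  rw [hσeq]
  refine le_trans
    (Stmt16.iter_tail f' hf' M h p hM hh (le_trans zero_le_one hp) v.measure N R hR) ?_
  refine mul_le_mul_left (ENNReal.ofReal_le_ofReal ?_) _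
  set cN : ℝ := (N : ℝ) * (h * M) with hcN
  have hcN0 : 0 ≤ cN := mul_nonneg (Nat.cast_nonneg _) hM0
  have hd : 0 < R - cN := sub_pos.2 hR
  have h1' : R / (R - cN) = cN / (R - cN) + 1 := by field_simp; ring
  have h2' : R / (R - cN) ≤ Real.exp (cN / (R - cN)) := by
    rw [h1']; exact Real.add_one_le_exp _
  calc (R / (R - cN)) ^ p ≤ (Real.exp (cN / (R - cN))) ^ p :=
        Real.rpow_le_rpow (div_nonneg (by linarith) hd.le) h2' (le_trans zero_le_one hp)
    _ = Real.exp (cN / (R - cN) * p) := (Real.exp_mul _ _).symm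
    _ = Real.exp (p * cN / (R - cN)) := congrArg Real.exp (by ring)
end

section
/- Let p ≥ 1, (μ_n) a sequence of Borel probability measures on ℝ each with finite p-th moment, and μ a Borel probability measure on ℝ. If μ_n converges weakly to μ and sup_n ∫_{|x|≥R} |x|^p dμ_n(x) → 0 as R → ∞, then μ has finite p-th moment and W_p(μ_n, μ) → 0. -/
open MeasureTheory Filter Set
open scoped ENNReal Topology

/-!
Realize `μₙ` and `μ` on `(0, 1)` with Lebesgue measure through their quantile functions.
Weak convergence gives convergence of the distribution functions at continuity points of the
limit, hence convergence of the quantile functions at every continuity point of the limit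
quantile, i.e. almost everywhere. The tail hypothesis makes the quantile functions uniformly
integrable in `Lᵖ`, so the limit is in `Lᵖ` and Vitali's theorem gives
`Lᵖ`-convergence. Since the quantile functions of `μₙ` and `μ` form a coupling, `W_p(μₙ, μ)` is
at most their `Lᵖ` distance.
-/

namespace ProbabilityTheory

/-- Outside `(0, 1)` the defining set is empty or all of `ℝ`, so the value there is the junk `0`. -/
noncomputable def quantile (ν : Measure ℝ) (u : ℝ) : ℝ := sInf {x | u ≤ cdf ν x}

section Quantile

variable (ν : Measure ℝ) {u x : ℝ}

lemma nonempty_setOf_le_cdf (hu : u < 1) : {x | u ≤ cdf ν x}.Nonempty :=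
  ((tendsto_cdf_atTop ν).eventually_const_le hu).exists

lemma bddBelow_setOf_le_cdf (hu : 0 < u) : BddBelow {x | u ≤ cdf ν x} := by
  obtain ⟨x₀, hx₀⟩ := ((tendsto_cdf_atBot ν).eventually_lt_const hu).exists
  exact ⟨x₀, fun y hy => le_of_lt <| (monotone_cdf ν).reflect_lt (hx₀.trans_le hy)⟩

lemma quantile_le_iff (hu₀ : 0 < u) (hu₁ : u < 1) : quantile ν u ≤ x ↔ u ≤ cdf ν x := by
  refine ⟨fun h => ?_, fun h => csInf_le (bddBelow_setOf_le_cdf ν hu₀) h⟩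
  have hright : ∀ y ∈ Ioi x, u ≤ cdf ν y := fun y hy => by
    obtain ⟨z, hz, hzy⟩ := exists_lt_of_csInf_lt (nonempty_setOf_le_cdf ν hu₁) (h.trans_lt hy)
    exact hz.trans (monotone_cdf ν hzy.le)
  exact ge_of_tendsto (((cdf ν).right_continuous x).mono Ioi_subset_Ici_self)
    (eventually_nhdsWithin_of_forall hright)

lemma lt_quantile_iff (hu₀ : 0 < u) (hu₁ : u < 1) : x < quantile ν u ↔ cdf ν x < u := by
  simpa only [not_le] using (quantile_le_iff ν hu₀ hu₁).not

lemma quantile_of_nonpos (hu : u ≤ 0) : quantile ν u = 0 := by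
  have huniv : {x | u ≤ cdf ν x} = univ := eq_univ_of_forall fun x => hu.trans (cdf_nonneg ν x)
  rw [quantile, huniv, Real.sInf_of_not_bddBelow not_bddBelow_univ]

lemma quantile_of_one_lt (hu : 1 < u) : quantile ν u = 0 := by
  have hempty : {x | u ≤ cdf ν x} = ∅ :=
    eq_empty_of_forall_notMem fun x hx => (hx.trans (cdf_le_one ν x)).not_gt hu
  rw [quantile, hempty, Real.sInf_empty]

lemma monotoneOn_quantile : MonotoneOn (quantile ν) (Ioo 0 1) := fun _ hu _ hv huv =>
  csInf_le_csInf (bddBelow_setOf_le_cdf ν hu.1) (nonempty_setOf_le_cdf ν hv.2)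
    fun _ hx => huv.trans hx

lemma countable_not_continuousAt_quantile : {u | ¬ContinuousAt (quantile ν) u}.Countable := by
  refine (((monotoneOn_quantile ν).countable_not_continuousWithinAt).union
    ((countable_singleton 0).insert 1)).mono fun u hu => ?_
  rcases lt_trichotomy u 0 with hneg | rfl | hpos
  · refine absurd ?_ hu
    exact continuousAt_const.congr <| (eventually_lt_nhds hneg).mono fun v hv =>
      (quantile_of_nonpos ν hv.le).symm
  · simp
  rcases lt_trichotomy u 1 with hlt | rfl | hgt
  · exact Or.inl ⟨⟨hpos, hlt⟩,
      mt (continuousWithinAt_iff_continuousAt (Ioo_mem_nhds hpos hlt)).1 hu⟩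
  · simp
  · refine absurd ?_ hu
    exact continuousAt_const.congr <| (eventually_gt_nhds hgt).mono fun v hv =>
      (quantile_of_one_lt ν hv).symm

lemma measurable_quantile : Measurable (quantile ν) :=
  measurable_of_countable_not_continuousAt (countable_not_continuousAt_quantile ν)

lemma map_quantile [IsProbabilityMeasure ν] :
    (volume.restrict (Ioo (0 : ℝ) 1)).map (quantile ν) = ν := by
  refine Measure.ext_of_Iic _ ν fun a => ?_
  have hpre : quantile ν ⁻¹' Iic a ∩ Ioo 0 1 = Iic (cdf ν a) ∩ Ioo 0 1 := by
    ext u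
    simp only [mem_inter_iff, mem_preimage, mem_Iic, and_congr_left_iff]
    exact fun hu => quantile_le_iff ν hu.1 hu.2
  rw [Measure.map_apply (measurable_quantile ν) measurableSet_Iic,
    Measure.restrict_apply (measurable_quantile ν measurableSet_Iic), hpre, inter_comm,
    measure_congr ((Ioo_ae_eq_Ioc (μ := volume)).inter (ae_eq_refl (Iic (cdf ν a)))),
    Ioc_inter_Iic, inf_eq_right.2 (cdf_le_one ν a), Real.volume_Ioc, sub_zero, ofReal_cdf]

lemma lintegral_comp_quantile [IsProbabilityMeasure ν] {g : ℝ → ℝ≥0∞} (hg : Measurable g) :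
    ∫⁻ u, g (quantile ν u) ∂(volume.restrict (Ioo (0 : ℝ) 1)) = ∫⁻ x, g x ∂ν := by
  rw [← lintegral_map hg (measurable_quantile ν), map_quantile]

lemma setLIntegral_comp_quantile [IsProbabilityMeasure ν] {g : ℝ → ℝ≥0∞} (hg : Measurable g)
    {s : Set ℝ} (hs : MeasurableSet s) :
    ∫⁻ u in quantile ν ⁻¹' s, g (quantile ν u) ∂(volume.restrict (Ioo (0 : ℝ) 1)) =
      ∫⁻ x in s, g x ∂ν := by
  rw [← setLIntegral_map hs hg (measurable_quantile ν), map_quantile]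

end Quantile

section WeakConvergence

variable {ι : Type*} {l : Filter ι} {μs : ι → Measure ℝ} {μ : Measure ℝ}

lemma measure_singleton_eq_zero_of_continuousAt_cdf [IsProbabilityMeasure μ] {x : ℝ}
    (hx : ContinuousAt (cdf μ) x) : μ {x} = 0 := by
  rw [← measure_cdf μ, StieltjesFunction.measure_singleton,
    ((monotone_cdf μ).continuousWithinAt_Iio_iff_leftLim_eq.1 hx.continuousWithinAt), sub_self,
    ENNReal.ofReal_zero]

lemma tendsto_cdf_of_tendsto_integral [∀ i, IsProbabilityMeasure (μs i)] [IsProbabilityMeasure μ]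
    (hweak : ∀ φ : BoundedContinuousFunction ℝ ℝ,
      Tendsto (fun i => ∫ x, φ x ∂(μs i)) l (𝓝 (∫ x, φ x ∂μ)))
    {x : ℝ} (hx : ContinuousAt (cdf μ) x) :
    Tendsto (fun i => cdf (μs i) x) l (𝓝 (cdf μ x)) := by
  let P : ProbabilityMeasure ℝ := ⟨μ, inferInstance⟩
  let Ps : ι → ProbabilityMeasure ℝ := fun i => ⟨μs i, inferInstance⟩
  have hfrontier : P (frontier (Iic x)) = 0 := by
    simp [P, measure_singleton_eq_zero_of_continuousAt_cdf hx]
  have hlim : Tendsto Ps l (𝓝 P) := ProbabilityMeasure.tendsto_iff_forall_integral_tendsto.2 hweak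
  have hIic := ProbabilityMeasure.tendsto_measure_of_null_frontier_of_tendsto hlim hfrontier
  convert (NNReal.continuous_coe.tendsto _).comp hIic using 2 with i
  · exact cdf_eq_real (μs i) x
  · exact cdf_eq_real μ x

lemma tendsto_quantile_of_tendsto_cdf
    (hcdf : ∀ x, ContinuousAt (cdf μ) x → Tendsto (fun i => cdf (μs i) x) l (𝓝 (cdf μ x)))
    {u : ℝ} (hu : u ∈ Ioo (0 : ℝ) 1) (hcont : ContinuousAt (quantile μ) u) :
    Tendsto (fun i => quantile (μs i) u) l (𝓝 (quantile μ u)) := by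
  have hdense : Dense {x | ContinuousAt (cdf μ) x} := by
    simpa only [compl_ofPred, not_not] using (cdf μ).mono.countable_not_continuousAt.dense_compl ℝ
  refine tendsto_order.2 ⟨fun b hb => ?_, fun b hb => ?_⟩
  · obtain ⟨x, hxc, hbx, hxq⟩ := hdense.exists_between hb
    filter_upwards [(hcdf x hxc).eventually_lt_const ((lt_quantile_iff μ hu.1 hu.2).1 hxq)]
      with i hi
    exact hbx.trans ((lt_quantile_iff (μs i) hu.1 hu.2).2 hi)
  · obtain ⟨v, hvb, huv, hv₁⟩ := (((hcont.mono_left nhdsWithin_le_nhds).eventually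
      (gt_mem_nhds hb)).and (Ioo_mem_nhdsGT hu.2)).exists
    obtain ⟨x, hxc, hvx, hxb⟩ := hdense.exists_between hvb
    have hux : u < cdf μ x :=
      huv.trans_le ((quantile_le_iff μ (hu.1.trans huv) hv₁).1 hvx.le)
    filter_upwards [(hcdf x hxc).eventually_const_lt hux] with i hi
    exact ((quantile_le_iff (μs i) hu.1 hu.2).2 hi.le).trans_lt hxb

lemma ae_tendsto_quantile
    (hcdf : ∀ x, ContinuousAt (cdf μ) x → Tendsto (fun i => cdf (μs i) x) l (𝓝 (cdf μ x))) :
    ∀ᵐ u ∂(volume.restrict (Ioo (0 : ℝ) 1)),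
      Tendsto (fun i => quantile (μs i) u) l (𝓝 (quantile μ u)) := by
  filter_upwards [ae_restrict_mem measurableSet_Ioo,
    (countable_not_continuousAt_quantile μ).ae_notMem _] with u hu hcont
  exact tendsto_quantile_of_tendsto_cdf hcdf hu (not_not.1 hcont)

end WeakConvergence

end ProbabilityTheory

section Moments

variable {α : Type*} [MeasurableSpace α] {P : Measure α} {p : ℝ}

lemma eLpNorm_ofReal_eq_lintegral_rpow_abs (hp : 0 < p) (f : α → ℝ) :
    eLpNorm f (ENNReal.ofReal p) P = (∫⁻ a, ENNReal.ofReal (|f a| ^ p) ∂P) ^ (1 / p) := by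
  rw [eLpNorm_eq_lintegral_rpow_enorm_toReal (by simpa using hp) ENNReal.ofReal_ne_top,
    ENNReal.toReal_ofReal hp.le, one_div]
  simp_rw [Real.enorm_eq_ofReal_abs, ENNReal.ofReal_rpow_of_nonneg (abs_nonneg _) hp.le]

lemma lintegral_rpow_abs_lt_top_of_memLp (hp : 0 < p) {f : α → ℝ}
    (hf : MemLp f (ENNReal.ofReal p) P) : ∫⁻ a, ENNReal.ofReal (|f a| ^ p) ∂P < ⊤ := by
  have := hf.eLpNorm_lt_top
  rw [eLpNorm_ofReal_eq_lintegral_rpow_abs hp] at this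
  exact (ENNReal.rpow_lt_top_iff_of_pos (by positivity)).1 this

lemma uniformIntegrable_of_tendsto_iSup_setLIntegral [IsFiniteMeasure P] {ι : Type*}
    {X : ι → α → ℝ} (hX : ∀ i, Measurable (X i)) (hp : 1 ≤ p)
    (htail : Tendsto (fun R : ℝ => ⨆ i, ∫⁻ a in {a | R ≤ |X i a|},
      ENNReal.ofReal (|X i a| ^ p) ∂P) atTop (𝓝 0)) :
    UniformIntegrable X (ENNReal.ofReal p) P := by
  have hp₀ : 0 < p := zero_lt_one.trans_le hp
  refine uniformIntegrable_of (ENNReal.one_le_ofReal.2 hp) ENNReal.ofReal_ne_top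
    (fun i => (hX i).aestronglyMeasurable) fun ε hε => ?_
  obtain ⟨R, hR, hR₀⟩ := ((htail.eventually_lt_const (ENNReal.rpow_pos
    (ENNReal.ofReal_pos.2 hε) ENNReal.ofReal_ne_top : 0 < ENNReal.ofReal ε ^ p)).and
    (eventually_ge_atTop 0)).exists
  refine ⟨R.toNNReal, fun i => ?_⟩
  have hset : {a | R.toNNReal ≤ ‖X i a‖₊} = {a | R ≤ |X i a|} := by
    ext a
    simp [← NNReal.coe_le_coe, Real.coe_toNNReal R hR₀]
  rw [hset, eLpNorm_indicator_eq_eLpNorm_restrict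
      (measurableSet_le measurable_const (hX i).abs),
    eLpNorm_ofReal_eq_lintegral_rpow_abs hp₀]
  calc (∫⁻ a in {a | R ≤ |X i a|}, ENNReal.ofReal (|X i a| ^ p) ∂P) ^ (1 / p)
      ≤ (ENNReal.ofReal ε ^ p) ^ (1 / p) := by
        gcongr
        exact (le_iSup (fun i => ∫⁻ a in {a | R ≤ |X i a|},
          ENNReal.ofReal (|X i a| ^ p) ∂P) i).trans hR.le
    _ = ENNReal.ofReal ε := by
        rw [← ENNReal.rpow_mul, mul_one_div_cancel hp₀.ne', ENNReal.rpow_one]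

end Moments

lemma Wp_map_le_eLpNorm_sub {Ω : Type*} [MeasurableSpace Ω] {p : ℝ} (hp : 0 < p) (P : Measure Ω)
    {X Y : Ω → ℝ} (hX : Measurable X) (hY : Measurable Y) :
    Wp p (P.map X) (P.map Y) ≤ eLpNorm (X - Y) (ENNReal.ofReal p) P := by
  have hXY : Measurable fun ω => (X ω, Y ω) := hX.prodMk hY
  have hcoupling : P.map (fun ω => (X ω, Y ω)) ∈ {π : Measure (ℝ × ℝ) |
      π.map Prod.fst = P.map X ∧ π.map Prod.snd = P.map Y} :=
    ⟨Measure.map_map measurable_fst hXY, Measure.map_map measurable_snd hXY⟩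
  have hcost : Measurable fun q : ℝ × ℝ => ENNReal.ofReal (|q.1 - q.2| ^ p) :=
    (measurable_fst.sub measurable_snd).abs.pow_const p |>.ennreal_ofReal
  rw [Wp, eLpNorm_ofReal_eq_lintegral_rpow_abs hp]
  gcongr
  exact (iInf₂_le _ hcoupling).trans_eq (lintegral_map hcost hXY)

open ProbabilityTheory

theorem stmt_18_general (p : ℝ) (hp : 1 ≤ p)
    (μs : ℕ → Measure ℝ) (μ : Measure ℝ)
    [∀ n, IsProbabilityMeasure (μs n)] [IsProbabilityMeasure μ]
    (hweak : ∀ φ : BoundedContinuousFunction ℝ ℝ,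
      Tendsto (fun n => ∫ x, φ x ∂(μs n)) atTop (𝓝 (∫ x, φ x ∂μ)))
    (htail : Tendsto
      (fun R : ℝ => ⨆ n, ∫⁻ x in {x : ℝ | R ≤ |x|},
        ENNReal.ofReal (|x| ^ p) ∂(μs n)) atTop (𝓝 0)) :
    (∫⁻ x, ENNReal.ofReal (|x| ^ p) ∂μ < ⊤) ∧
      Tendsto (fun n => Wp p (μs n) μ) atTop (𝓝 0) := by
  have hp₀ : 0 < p := zero_lt_one.trans_le hp
  set ω := volume.restrict (Ioo (0 : ℝ) 1)
  have hmoment : Measurable fun x : ℝ => ENNReal.ofReal (|x| ^ p) :=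
    (measurable_abs.pow_const p).ennreal_ofReal
  have hui : UniformIntegrable (fun n => quantile (μs n)) (ENNReal.ofReal p) ω := by
    refine uniformIntegrable_of_tendsto_iSup_setLIntegral (fun n => measurable_quantile _) hp ?_
    convert htail using 4 with R n
    exact setLIntegral_comp_quantile (μs n) hmoment
      (measurableSet_le measurable_const measurable_abs)
  have hae : ∀ᵐ u ∂ω, Tendsto (fun n => quantile (μs n) u) atTop (𝓝 (quantile μ u)) :=
    ae_tendsto_quantile fun x hx => tendsto_cdf_of_tendsto_integral hweak hx
  have hmem : MemLp (quantile μ) (ENNReal.ofReal p) ω :=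
    hui.memLp_of_tendstoInMeasure (tendstoInMeasure_of_tendsto_ae hui.1 hae)
  refine ⟨lintegral_comp_quantile μ hmoment ▸ lintegral_rpow_abs_lt_top_of_memLp hp₀ hmem, ?_⟩
  have hLp := tendsto_Lp_finite_of_tendsto_ae (ENNReal.one_le_ofReal.2 hp)
    ENNReal.ofReal_ne_top hui.1 hmem hui.2.1 hae
  refine tendsto_of_tendsto_of_tendsto_of_le_of_le tendsto_const_nhds hLp (fun _ => zero_le)
    fun n => ?_
  simpa only [ω, map_quantile] using
    Wp_map_le_eLpNorm_sub hp₀ ω (measurable_quantile (μs n)) (measurable_quantile μ)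

/-- if `μ_n` (with finite `p`-th moments) converge weakly to a
probability measure `μ`, and the `p`-th moments of the `μ_n` are uniformly
integrable at infinity, then `μ` has finite `p`-th moment and
`W_p(μ_n, μ) → 0`. -/
theorem stmt_18 (p : ℝ) (hp : 1 ≤ p)
    (μs : ℕ → Measure ℝ) (μ : Measure ℝ)
    [∀ n, IsProbabilityMeasure (μs n)] [IsProbabilityMeasure μ]
    (hmom : ∀ n, ∫⁻ x, ENNReal.ofReal (|x| ^ p) ∂(μs n) < ⊤)
    (hweak : ∀ φ : BoundedContinuousFunction ℝ ℝ,
      Tendsto (fun n => ∫ x, φ x ∂(μs n)) atTop (𝓝 (∫ x, φ x ∂μ)))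
    (htail : Tendsto
      (fun R : ℝ => ⨆ n, ∫⁻ x in {x : ℝ | R ≤ |x|},
        ENNReal.ofReal (|x| ^ p) ∂(μs n)) atTop (𝓝 0)) :
    (∫⁻ x, ENNReal.ofReal (|x| ^ p) ∂μ < ⊤) ∧
      Tendsto (fun n => Wp p (μs n) μ) atTop (𝓝 0) :=
  stmt_18_general p hp μs μ hweak htail
end
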